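/- arXiv:2211.16561 — 11 statements merged into one kernel-verified Lean document; each statement's English description precedes it below -/
import Mathlib

section
/- For any prime power q and integers n ≥ 2 and nonnegative integers m_1, ..., m_{n-1} satisfying the packing condition ∑_{i=1}^{n-1} m_i · q^{i-1} = q^{n-1}, there exists an affine vector space partition of AG(n-1, q) (the affine space F_q^{n-1}) into affine subspaces where exactly m_i of the subspaces have dimension i-1 for each 1 ≤ i ≤ n-1. -/
open scoped Pointwise

/-- An affine vector space partition of `F^m`: a set of proper, nonempty affine
subspaces such that every point lies in exactly one element. -/
def IsAVSP {F : Type*} [Field F] {m : ℕ}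
    (A : Set (AffineSubspace F (Fin m → F))) : Prop :=
  (∀ s ∈ A, s ≠ ⊤) ∧ (∀ s ∈ A, (s : Set (Fin m → F)).Nonempty) ∧
    ∀ x : Fin m → F, ∃! s, s ∈ A ∧ x ∈ s

/-- Tightness: no nonzero translation fixes every element. -/
def IsTight {F : Type*} [Field F] {m : ℕ}
    (A : Set (AffineSubspace F (Fin m → F))) : Prop :=
  ∀ x : Fin m → F, x ≠ 0 →
    ∃ s ∈ A, x +ᵥ (s : Set (Fin m → F)) ≠ (s : Set (Fin m → F))

/-- Reducibility: some subfamily of size `> 1` partitions the points of a proper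
affine subspace. -/
def IsReducible {F : Type*} [Field F] {m : ℕ}
    (A : Set (AffineSubspace F (Fin m → F))) : Prop :=
  ∃ U : AffineSubspace F (Fin m → F), U ≠ ⊤ ∧
    ∃ S ⊆ A, 1 < S.ncard ∧ (∀ s ∈ S, s ≤ U) ∧
      ∀ x ∈ U, ∃! s, s ∈ S ∧ x ∈ s

namespace AVSPAux

/-- Block boundaries for the interval construction. -/
def B (q N : ℕ) (m : ℕ → ℕ) (i : ℕ) : ℕ := ∑ j ∈ Finset.Icc (i + 1) N, m j * q ^ (j - 1)

lemma B_antitone (q N : ℕ) (m : ℕ → ℕ) {a b : ℕ} (hab : a ≤ b) : B q N m b ≤ B q N m a :=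
  Finset.sum_le_sum_of_subset (Finset.Icc_subset_Icc_left (by omega))

lemma B_step (q N : ℕ) (m : ℕ → ℕ) {i : ℕ} (h1 : 1 ≤ i) (hiN : i ≤ N) :
    B q N m (i - 1) = m i * q ^ (i - 1) + B q N m i := by
  have h : i - 1 + 1 = i := by omega
  unfold B
  rw [h, ← Finset.Ioc_insert_left hiN, Finset.sum_insert (by simp), Finset.Icc_add_one_left_eq_Ioc]

lemma B_dvd (q N : ℕ) (m : ℕ → ℕ) (i : ℕ) : q ^ (i - 1) ∣ B q N m i :=
  Finset.dvd_sum fun j hj => Dvd.dvd.mul_left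
    (pow_dvd_pow q (by simp only [Finset.mem_Icc] at hj; omega)) _

lemma geom (q : ℕ) (hq : 1 ≤ q) (d : ℕ) :
    ∑ j ∈ Finset.range d, (q - 1) * q ^ j = q ^ d - 1 := by
  induction d with
  | zero => simp
  | succ d ih =>
    rw [Finset.sum_range_succ, ih]
    have h1 : 1 ≤ q ^ d := Nat.one_le_pow _ _ hq
    have h2 : q ^ (d + 1) = q ^ d + (q - 1) * q ^ d := by
      calc q ^ (d + 1) = q * q ^ d := by ring
        _ = ((q - 1) + 1) * q ^ d := by congr 1; omega
        _ = q ^ d + (q - 1) * q ^ d := by ring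
    omega

/-- The interval tiling of `[0, q ^ N)`. -/
lemma interval (q N : ℕ) (hq2 : 2 ≤ q) (hN : 1 ≤ N) (m : ℕ → ℕ)
    (hpack : ∑ i ∈ Finset.Icc 1 N, m i * q ^ (i - 1) = q ^ N) (t : ℕ) (ht : t < q ^ N) :
    ∃! p : ℕ × ℕ, (1 ≤ p.1 ∧ p.1 ≤ N ∧ p.2 < m p.1) ∧
      B q N m p.1 + p.2 * q ^ (p.1 - 1) ≤ t ∧
      t < B q N m p.1 + (p.2 + 1) * q ^ (p.1 - 1) := by
  classical
  have hB0 : B q N m 0 = q ^ N := by unfold B; simpa using hpack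
  have hBN : B q N m N = 0 := by unfold B; rw [Finset.Icc_eq_empty (by omega)]; simp
  have hex : ∃ i, 1 ≤ i ∧ i ≤ N ∧ B q N m i ≤ t := ⟨N, hN, le_rfl, by omega⟩
  obtain ⟨hi1, hiN, hBi⟩ := Nat.find_spec hex
  set i := Nat.find hex with hidef
  have hupper : t < B q N m (i - 1) := by
    rcases eq_or_lt_of_le hi1 with h | h
    · have h0 : i - 1 = 0 := by omega
      rw [h0, hB0]; exact ht
    · have hlt : i - 1 < i := by omega
      have hmin := Nat.find_min hex (by rw [← hidef]; exact hlt)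
      push_neg at hmin
      exact hmin (by omega) (by omega)
  have hQpos : 0 < q ^ (i - 1) := pow_pos (by omega) _
  have hstep := B_step q N m hi1 hiN
  set k := (t - B q N m i) / q ^ (i - 1) with hk
  have hmQ : t - B q N m i < m i * q ^ (i - 1) := by omega
  have hkm : k < m i := by
    rw [hk, Nat.div_lt_iff_lt_mul hQpos]; omega
  have hlo : B q N m i + k * q ^ (i - 1) ≤ t := by
    have h := Nat.div_mul_le_self (t - B q N m i) (q ^ (i - 1))
    rw [← hk] at h; omega
  have hhi : t < B q N m i + (k + 1) * q ^ (i - 1) := by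
    have h1 := Nat.div_add_mod (t - B q N m i) (q ^ (i - 1))
    rw [← hk] at h1
    have h2 := Nat.mod_lt (t - B q N m i) hQpos
    have h3 : (k + 1) * q ^ (i - 1) = q ^ (i - 1) * k + q ^ (i - 1) := by ring
    omega
  refine ⟨⟨i, k⟩, ⟨⟨hi1, hiN, hkm⟩, hlo, hhi⟩, ?_⟩
  rintro ⟨i', k'⟩ ⟨⟨hi1', hiN', hkm'⟩, hlo', hhi'⟩
  dsimp only at hi1' hiN' hkm' hlo' hhi'
  have hstep' := B_step q N m hi1' hiN'
  have hBi' : B q N m i' ≤ t := le_trans (Nat.le_add_right _ _) hlo'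
  have hup' : t < B q N m (i' - 1) := by
    have h := Nat.mul_le_mul_right (q ^ (i' - 1)) (show k' + 1 ≤ m i' by omega)
    omega
  have hii : i' = i := by
    by_contra hne
    rcases lt_or_gt_of_ne hne with h | h
    · have hmono : B q N m (i - 1) ≤ B q N m i' := B_antitone q N m (by omega)
      omega
    · have hmono : B q N m (i' - 1) ≤ B q N m i := B_antitone q N m (by omega)
      omega
  subst hii
  have hkk : k' = k := by
    by_contra hne
    rcases lt_or_gt_of_ne hne with h | h
    · have h2 : (k' + 1) * q ^ (i - 1) ≤ k * q ^ (i - 1) :=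
        Nat.mul_le_mul_right _ (by omega)
      omega
    · have h2 : (k + 1) * q ^ (i - 1) ≤ k' * q ^ (i - 1) :=
        Nat.mul_le_mul_right _ (by omega)
      omega
  simp [hkk]

section Field

variable {q N : ℕ} {F : Type*} [Field F] [Fintype F]

/-- The coordinate subspace of vectors vanishing in coordinates `≥ d`. -/
noncomputable def VV (F : Type*) [Field F] (N d : ℕ) : Submodule F (Fin N → F) :=
  LinearMap.range (Function.ExtendByZero.linearMap F
    (Fin.castLE (min_le_right d N) : Fin (min d N) → Fin N))

lemma VV_finrank (F : Type*) [Field F] (N d : ℕ) :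
    Module.finrank F (VV F N d) = min d N := by
  rw [VV, LinearMap.finrank_range_of_inj, Module.finrank_fin_fun]
  exact Function.extend_injective (Fin.castLE_injective _) (0 : Fin N → F)

lemma VV_mem (F : Type*) [Field F] (N d : ℕ) (hd : d ≤ N) (y : Fin N → F) :
    y ∈ VV F N d ↔ ∀ j : Fin N, d ≤ (j : ℕ) → y j = 0 := by
  constructor
  · rintro ⟨g, rfl⟩ j hj
    show Function.extend (Fin.castLE (min_le_right d N)) g (0 : Fin N → F) j = (0 : F)
    rw [Function.extend_apply']
    · rfl
    · rintro ⟨a, rfl⟩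
      have h1 : (a : ℕ) < min d N := a.2
      have h2 : ((Fin.castLE (min_le_right d N) a : Fin N) : ℕ) = (a : ℕ) := rfl
      omega
  · intro hy
    refine ⟨fun a => y (Fin.castLE (min_le_right d N) a), funext fun j => ?_⟩
    show Function.extend (Fin.castLE (min_le_right d N))
      (fun a => y (Fin.castLE (min_le_right d N) a)) (0 : Fin N → F) j = y j
    by_cases hj : (j : ℕ) < min d N
    · have h : j = Fin.castLE (min_le_right d N) ⟨(j : ℕ), hj⟩ := by
        apply Fin.ext; rfl
      rw [h, (Fin.castLE_injective _).extend_apply]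
    · rw [Function.extend_apply']
      · exact (Pi.zero_apply j).trans (hy j (by omega)).symm
      · rintro ⟨a, rfl⟩
        exact hj a.2

/-- The global coordinate equivalence. -/
noncomputable def psiA (hq : Fintype.card F = q) (N : ℕ) : (Fin N → F) ≃ Fin (q ^ N) :=
  (Equiv.piCongrRight fun _ => Fintype.equivFinOfCardEq hq).trans finFunctionFinEquiv

lemma psiA_apply (hq : Fintype.card F = q) (x : Fin N → F) :
    ((psiA hq N x : Fin (q ^ N)) : ℕ)
      = ∑ j : Fin N, ((Fintype.equivFinOfCardEq hq) (x j) : ℕ) * q ^ (j : ℕ) := rfl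

lemma psiA_digit (hq : Fintype.card F = q) (x : Fin N → F) (j : Fin N) :
    ((Fintype.equivFinOfCardEq hq) (x j) : ℕ)
      = ((psiA hq N x : Fin (q ^ N)) : ℕ) / q ^ (j : ℕ) % q := by
  conv_lhs => rw [← (psiA hq N).symm_apply_apply x]
  show ((Fintype.equivFinOfCardEq hq)
    ((Fintype.equivFinOfCardEq hq).symm (finFunctionFinEquiv.symm (psiA hq N x) j)) : ℕ) = _
  rw [Equiv.apply_symm_apply]
  rfl

lemma high_div (q : ℕ) (hq2 : 2 ≤ q) {N : ℕ} (d : ℕ) (f : Fin N → ℕ) (hf : ∀ j, f j < q) :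
    (∑ j : Fin N, f j * q ^ (j : ℕ)) / q ^ d
      = (∑ j ∈ Finset.univ.filter (fun j : Fin N => ¬ ((j : ℕ) < d)), f j * q ^ (j : ℕ))
          / q ^ d := by
  classical
  have hQpos : 0 < q ^ d := pow_pos (by omega) d
  rw [← Finset.sum_filter_add_sum_filter_not Finset.univ (fun j : Fin N => ((j : ℕ) < d))
    (fun j => f j * q ^ (j : ℕ))]
  have hdvd : q ^ d ∣ ∑ j ∈ Finset.univ.filter (fun j : Fin N => ¬ ((j : ℕ) < d)),
      f j * q ^ (j : ℕ) :=
    Finset.dvd_sum fun j hj => Dvd.dvd.mul_left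
      (pow_dvd_pow q (by simp only [Finset.mem_filter] at hj; omega)) _
  have hlow : (∑ j ∈ Finset.univ.filter (fun j : Fin N => ((j : ℕ) < d)),
      f j * q ^ (j : ℕ)) < q ^ d := by
    calc (∑ j ∈ Finset.univ.filter (fun j : Fin N => ((j : ℕ) < d)), f j * q ^ (j : ℕ))
        ≤ ∑ j ∈ Finset.univ.filter (fun j : Fin N => ((j : ℕ) < d)),
            (q - 1) * q ^ (j : ℕ) :=
          Finset.sum_le_sum fun j _ => Nat.mul_le_mul_right _ (by have := hf j; omega)
      _ = ∑ j : Fin N, (if (j : ℕ) < d then (q - 1) * q ^ (j : ℕ) else 0) := by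
          rw [Finset.sum_filter]
      _ = ∑ j ∈ Finset.range N, (if j < d then (q - 1) * q ^ j else 0) :=
          Fin.sum_univ_eq_sum_range (fun j => if j < d then (q - 1) * q ^ j else 0) N
      _ = ∑ j ∈ (Finset.range N).filter (fun j => j < d), (q - 1) * q ^ j :=
          (Finset.sum_filter _ _).symm
      _ ≤ ∑ j ∈ Finset.range d, (q - 1) * q ^ j := by
          apply Finset.sum_le_sum_of_subset
          intro j hj
          simp only [Finset.mem_filter, Finset.mem_range] at hj ⊢
          omega
      _ = q ^ d - 1 := geom q (by omega) d
      _ < q ^ d := by omega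
  obtain ⟨c, hc⟩ := hdvd
  rw [hc, Nat.add_mul_div_left _ _ hQpos, Nat.div_eq_of_lt hlow, zero_add,
    Nat.mul_div_cancel_left _ hQpos]

lemma div_eq_iff_interval {a st d q : ℕ} (h : q ^ d ∣ st) (hQ : 0 < q ^ d) :
    a / q ^ d = st / q ^ d ↔ st ≤ a ∧ a < st + q ^ d := by
  obtain ⟨c, rfl⟩ := h
  rw [Nat.mul_div_cancel_left _ hQ]
  constructor
  · intro h
    have h1 : q ^ d * c + a % q ^ d = a := by rw [← h]; exact Nat.div_add_mod a (q ^ d)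
    have h2 := Nat.mod_lt a hQ
    generalize hX : q ^ d * c = X at *
    generalize hQ2 : q ^ d = Q at *
    omega
  · rintro ⟨h1, h2⟩
    apply Nat.div_eq_of_lt_le
    · rwa [mul_comm]
    · have h3 : (c + 1) * q ^ d = q ^ d * c + q ^ d := by ring
      omega

/-- The pieces of the partition. -/
noncomputable def pieceA (q N : ℕ) (F : Type*) [Field F] [Fintype F]
    (hq : Fintype.card F = q) (m : ℕ → ℕ) (i k : ℕ) : AffineSubspace F (Fin N → F) :=
  AffineSubspace.mk'
    ((psiA hq N).symm
      ⟨(B q N m i + k * q ^ (i - 1)) % q ^ N,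
        Nat.mod_lt _ (pow_pos (hq ▸ Fintype.card_pos) N)⟩)
    (VV F N (i - 1))

lemma mem_pieceA (hq : Fintype.card F = q) (m : ℕ → ℕ) {i k : ℕ}
    (hi1 : 1 ≤ i) (hiN : i ≤ N)
    (hlt : B q N m i + (k + 1) * q ^ (i - 1) ≤ q ^ N) (x : Fin N → F) :
    x ∈ pieceA q N F hq m i k ↔
      B q N m i + k * q ^ (i - 1) ≤ ((psiA hq N x : Fin (q ^ N)) : ℕ) ∧
        ((psiA hq N x : Fin (q ^ N)) : ℕ) < B q N m i + k * q ^ (i - 1) + q ^ (i - 1) := by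
  classical
  have hq2 : 2 ≤ q := hq ▸ Fintype.one_lt_card
  set d := i - 1 with hd
  set st := B q N m i + k * q ^ d with hst
  have hQpos : 0 < q ^ d := pow_pos (by omega) _
  have hstlt : st < q ^ N := by
    have h3 : (k + 1) * q ^ d = k * q ^ d + q ^ d := by ring
    omega
  have hdvd : q ^ d ∣ st := Dvd.dvd.add (B_dvd q N m i) (Dvd.dvd.mul_left dvd_rfl k)
  set p : Fin N → F := (psiA hq N).symm
      ⟨st % q ^ N, Nat.mod_lt _ (pow_pos (hq ▸ Fintype.card_pos) N)⟩ with hp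
  have hphip : ((psiA hq N p : Fin (q ^ N)) : ℕ) = st := by
    rw [hp, Equiv.apply_symm_apply]
    exact Nat.mod_eq_of_lt hstlt
  have hmem : x ∈ pieceA q N F hq m i k ↔ ∀ j : Fin N, d ≤ (j : ℕ) → x j = p j := by
    rw [pieceA, AffineSubspace.mem_mk', VV_mem F N d (by omega)]
    constructor
    · intro h j hj
      have := h j hj
      simpa [sub_eq_zero] using this
    · intro h j hj
      simpa [sub_eq_zero] using h j hj
  rw [hmem]
  set e := Fintype.equivFinOfCardEq hq with he
  have hdig : ∀ y : Fin N → F, ∀ j : Fin N,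
      ((e (y j)) : ℕ) = ((psiA hq N y : Fin (q ^ N)) : ℕ) / q ^ (j : ℕ) % q :=
    fun y j => psiA_digit hq y j
  have key : (∀ j : Fin N, d ≤ (j : ℕ) → x j = p j) ↔
      ((psiA hq N x : Fin (q ^ N)) : ℕ) / q ^ d = ((psiA hq N p : Fin (q ^ N)) : ℕ) / q ^ d := by
    constructor
    · intro h
      rw [psiA_apply hq x, psiA_apply hq p, ← he,
        high_div q hq2 d _ (fun j => (e (x j)).2), high_div q hq2 d _ (fun j => (e (p j)).2)]
      congr 1
      apply Finset.sum_congr rfl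
      intro j hj
      simp only [Finset.mem_filter] at hj
      rw [h j (by omega)]
    · intro h j hj
      have hx := hdig x j
      have hpj := hdig p j
      have hsplit : q ^ (j : ℕ) = q ^ d * q ^ ((j : ℕ) - d) := by
        rw [← pow_add]; congr 1; omega
      rw [hsplit, ← Nat.div_div_eq_div_mul, h, Nat.div_div_eq_div_mul, ← hsplit] at hx
      apply e.injective
      apply Fin.ext
      rw [hx, hpj]
  rw [key, hphip, div_eq_iff_interval hdvd hQpos]

end Field

theorem avsp_main (q N : ℕ) (F : Type*) [Field F] [Fintype F] (hq : Fintype.card F = q)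
    (hN : 1 ≤ N) (m : ℕ → ℕ)
    (hpack : ∑ i ∈ Finset.Icc 1 N, m i * q ^ (i - 1) = q ^ N) :
    ∃ A : Set (AffineSubspace F (Fin N → F)), IsAVSP A ∧
      ∀ i ∈ Finset.Icc 1 N,
        {s ∈ A | Module.finrank F s.direction = i - 1}.ncard = m i := by
  classical
  have hq2 : 2 ≤ q := hq ▸ Fintype.one_lt_card
  have hB0 : B q N m 0 = q ^ N := by unfold B; simpa using hpack
  have hBle : ∀ i k, 1 ≤ i → i ≤ N → k < m i →
      B q N m i + (k + 1) * q ^ (i - 1) ≤ q ^ N := by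
    intro i k h1 h2 hk
    have hstep := B_step q N m h1 h2
    have hm : (k + 1) * q ^ (i - 1) ≤ m i * q ^ (i - 1) :=
      Nat.mul_le_mul_right _ (by omega)
    have hmono : B q N m (i - 1) ≤ B q N m 0 := B_antitone q N m (by omega)
    omega
  set A : Set (AffineSubspace F (Fin N → F)) :=
    {s | ∃ i, 1 ≤ i ∧ i ≤ N ∧ ∃ k, k < m i ∧ s = pieceA q N F hq m i k} with hA
  have hrank : ∀ i k, i ≤ N →
      Module.finrank F (pieceA q N F hq m i k).direction = min (i - 1) N := by
    intro i k _
    rw [show (pieceA q N F hq m i k).direction = VV F N (i - 1) from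
      AffineSubspace.direction_mk' _ _, VV_finrank]
  refine ⟨A, ⟨?_, ?_, ?_⟩, ?_⟩
  · rintro s ⟨i, hi1, hiN, k, hk, rfl⟩ htop
    have h1 := hrank i k hiN
    rw [htop, AffineSubspace.direction_top, finrank_top, Module.finrank_fin_fun] at h1
    omega
  · rintro s ⟨i, hi1, hiN, k, hk, rfl⟩
    exact AffineSubspace.mk'_nonempty _ _
  · intro x
    set t := ((psiA hq N x : Fin (q ^ N)) : ℕ) with ht
    have htlt : t < q ^ N := (psiA hq N x).2
    obtain ⟨⟨i, k⟩, ⟨⟨hi1, hiN, hk⟩, hlo, hhi⟩, huniq⟩ :=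
      interval q N hq2 hN m hpack t htlt
    dsimp only at hi1 hiN hk hlo hhi
    refine ⟨pieceA q N F hq m i k, ⟨⟨i, hi1, hiN, k, hk, rfl⟩, ?_⟩, ?_⟩
    · rw [mem_pieceA hq m hi1 hiN (hBle i k hi1 hiN hk)]
      have h3 : (k + 1) * q ^ (i - 1) = k * q ^ (i - 1) + q ^ (i - 1) := by ring
      exact ⟨hlo, by omega⟩
    · rintro s ⟨⟨i', hi1', hiN', k', hk', rfl⟩, hxs⟩
      rw [mem_pieceA hq m hi1' hiN' (hBle i' k' hi1' hiN' hk')] at hxs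
      have h3 : (k' + 1) * q ^ (i' - 1) = k' * q ^ (i' - 1) + q ^ (i' - 1) := by ring
      have harg : t < B q N m i' + (k' + 1) * q ^ (i' - 1) := by omega
      have heq := huniq (i', k') ⟨⟨hi1', hiN', hk'⟩, hxs.1, harg⟩
      simp only [Prod.mk.injEq] at heq
      obtain ⟨rfl, rfl⟩ := heq
      rfl
  · intro i hi
    simp only [Finset.mem_Icc] at hi
    have key : {s ∈ A | Module.finrank F s.direction = i - 1}
        = (fun k => pieceA q N F hq m i k) '' (Set.Iio (m i)) := by
      ext s
      simp only [Set.mem_setOf_eq, Set.mem_image, Set.mem_Iio]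
      constructor
      · rintro ⟨⟨i', hi1', hiN', k', hk', rfl⟩, hr⟩
        have h1 := hrank i' k' hiN'
        have hii : i' = i := by omega
        subst hii
        exact ⟨k', hk', rfl⟩
      · rintro ⟨k, hk, rfl⟩
        refine ⟨⟨i, hi.1, hi.2, k, hk, rfl⟩, ?_⟩
        rw [hrank i k hi.2]
        omega
    rw [key, Set.ncard_image_of_injOn, show Set.Iio (m i) = ↑(Finset.range (m i)) by
      ext j; simp, Set.ncard_coe_finset, Finset.card_range]
    intro k hk k' hk' hkk
    simp only [Set.mem_Iio] at hk hk'
    by_contra hne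
    obtain ⟨p, hp⟩ := AffineSubspace.mk'_nonempty
      ((psiA hq N).symm
        ⟨(B q N m i + k * q ^ (i - 1)) % q ^ N,
          Nat.mod_lt _ (pow_pos (hq ▸ Fintype.card_pos) N)⟩) (VV F N (i - 1))
    have hp1 : p ∈ pieceA q N F hq m i k := hp
    have hkk2 : pieceA q N F hq m i k = pieceA q N F hq m i k' := hkk
    have hp2 : p ∈ pieceA q N F hq m i k' := hkk2 ▸ hp1
    rw [mem_pieceA hq m hi.1 hi.2 (hBle i k hi.1 hi.2 hk)] at hp1
    rw [mem_pieceA hq m hi.1 hi.2 (hBle i k' hi.1 hi.2 hk')] at hp2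
    rcases lt_or_gt_of_ne hne with h | h
    · have h2 : (k + 1) * q ^ (i - 1) ≤ k' * q ^ (i - 1) :=
        Nat.mul_le_mul_right _ (by omega)
      have h3 : (k + 1) * q ^ (i - 1) = k * q ^ (i - 1) + q ^ (i - 1) := by ring
      omega
    · have h2 : (k' + 1) * q ^ (i - 1) ≤ k * q ^ (i - 1) :=
        Nat.mul_le_mul_right _ (by omega)
      have h3 : (k' + 1) * q ^ (i - 1) = k' * q ^ (i - 1) + q ^ (i - 1) := by ring
      omega

end AVSPAux

theorem stmt0 (q n : ℕ) (F : Type*) [Field F] [Fintype F] (hq : Fintype.card F = q)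
    (hn : 2 ≤ n) (m : ℕ → ℕ)
    (hpack : ∑ i ∈ Finset.Icc 1 (n - 1), m i * q ^ (i - 1) = q ^ (n - 1)) :
    ∃ A : Set (AffineSubspace F (Fin (n - 1) → F)), IsAVSP A ∧
      ∀ i ∈ Finset.Icc 1 (n - 1),
        {s ∈ A | Module.finrank F s.direction = i - 1}.ncard = m i := by
  exact AVSPAux.avsp_main q (n - 1) F hq (by omega) m hpack
end

section
/- For every integer n ≥ 2 and prime power q, there exists a tight affine vector space partition of F_q^{n-1} of size (q-1)·(n-2) + q (equivalently, of size (q-1)·(n-1)+1 when counted in PG(n-1,q) conventions with ambient affine dimension n-1). -/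
open scoped Pointwise

section Aux
variable {F : Type*} [Field F]

def slab (m : ℕ) (i : Fin m) (a : F) : AffineSubspace F (Fin m → F) where
  carrier := {x | (∀ k, k < i → x k = 0) ∧ x i = a}
  smul_vsub_vadd_mem' c {p1 p2 p3} h1 h2 h3 := by
    refine ⟨fun k hk => ?_, ?_⟩
    · simp [vsub_eq_sub, vadd_eq_add, h1.1 k hk, h2.1 k hk, h3.1 k hk]
    · simp [vsub_eq_sub, vadd_eq_add, h1.2, h2.2, h3.2]

lemma mem_slab {m : ℕ} {i : Fin m} {a : F} {x : Fin m → F} :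
    x ∈ slab m i a ↔ (∀ k, k < i → x k = 0) ∧ x i = a := Iff.rfl

def pt (m : ℕ) (i : Fin m) (a : F) : Fin m → F := fun k => if k = i then a else 0

lemma pt_mem {m : ℕ} {i : Fin m} {a : F} : pt m i a ∈ slab m i a :=
  ⟨fun k hk => if_neg (ne_of_lt hk), if_pos rfl⟩

lemma slab_index_eq {m : ℕ} {x : Fin (m+1) → F} {i j : Fin (m+1)} {a b : F}
    (hia : a ≠ 0 ∨ i = Fin.last m) (hjb : b ≠ 0 ∨ j = Fin.last m)
    (hx1 : x ∈ slab (m+1) i a) (hx2 : x ∈ slab (m+1) j b) : i = j ∧ a = b := by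
  rcases lt_trichotomy i j with h | h | h
  · exfalso
    have hxi : x i = 0 := hx2.1 i h
    have ha : a = 0 := by rw [← hx1.2, hxi]
    have hi : i = Fin.last m := hia.resolve_left (by simp [ha])
    exact absurd (lt_of_lt_of_le h (Fin.le_last j)) (by simp [hi])
  · exact ⟨h, by rw [← hx1.2, h, hx2.2]⟩
  · exfalso
    have hxj : x j = 0 := hx1.1 j h
    have hb : b = 0 := by rw [← hx2.2, hxj]
    have hj : j = Fin.last m := hjb.resolve_left (by simp [hb])
    exact absurd (lt_of_lt_of_le h (Fin.le_last i)) (by simp [hj])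

end Aux

theorem key (F : Type*) [Field F] [Fintype F] (m : ℕ) :
    ∃ A : Set (AffineSubspace F (Fin (m+1) → F)), IsAVSP A ∧ IsTight A ∧
      A.ncard = (Fintype.card F - 1) * m + Fintype.card F := by
  classical
  set q := Fintype.card F with hq
  have hq1 : 1 ≤ q := Fintype.card_pos
  set idx : Set (Fin (m+1) × F) := {p | p.2 ≠ 0 ∨ p.1 = Fin.last m} with hidx
  refine ⟨(fun p : Fin (m+1) × F => slab (m+1) p.1 p.2) '' idx, ⟨?_, ?_, ?_⟩, ?_, ?_⟩
  · -- proper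
    rintro s ⟨⟨i, a⟩, hp, rfl⟩
    intro htop
    have htop' : slab (m+1) i a = ⊤ := htop
    have : pt (m+1) i (a+1) ∈ slab (m+1) i a := by rw [htop']; trivial
    have := this.2
    simp [pt] at this
  · -- nonempty
    rintro s ⟨⟨i, a⟩, hp, rfl⟩
    exact ⟨pt (m+1) i a, pt_mem⟩
  · -- partition
    intro x
    set T : Finset (Fin (m+1)) :=
      Finset.univ.filter (fun i => x i ≠ 0 ∨ i = Fin.last m) with hT
    have hne : T.Nonempty := ⟨Fin.last m, by simp [hT]⟩
    set i₀ := T.min' hne with hi₀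
    have hPi₀ : x i₀ ≠ 0 ∨ i₀ = Fin.last m := by
      have := T.min'_mem hne
      simpa [hT] using this
    have hzero : ∀ k, k < i₀ → x k = 0 := by
      intro k hk
      by_contra hxk
      have : k ∈ T := by simp [hT, hxk]
      exact absurd (T.min'_le k this) (not_le.mpr hk)
    refine ⟨slab (m+1) i₀ (x i₀), ⟨⟨(i₀, x i₀), hPi₀, rfl⟩, hzero, rfl⟩, ?_⟩
    rintro s ⟨⟨⟨j, b⟩, hjb, rfl⟩, hxs⟩
    obtain ⟨h1, h2⟩ := slab_index_eq (x := x) hjb hPi₀ hxs ⟨hzero, rfl⟩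
    show slab (m+1) j b = slab (m+1) i₀ (x i₀)
    rw [show j = i₀ from h1, show b = x i₀ from h2]
  · -- tight
    intro v hv
    set T : Finset (Fin (m+1)) := Finset.univ.filter (fun i => v i ≠ 0) with hT
    have hne : T.Nonempty := by
      obtain ⟨i, hi⟩ := Function.ne_iff.mp hv
      refine ⟨i, by simp [hT]; simpa using hi⟩
    set i₀ := T.min' hne with hi₀
    have hvi₀ : v i₀ ≠ 0 := by
      have := T.min'_mem hne
      simpa [hT] using this
    set a : F := if i₀ = Fin.last m then 0 else v i₀ with ha
    have hval : a ≠ 0 ∨ i₀ = Fin.last m := by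
      by_cases h : i₀ = Fin.last m
      · exact Or.inr h
      · exact Or.inl (by simp [ha, h, hvi₀])
    refine ⟨slab (m+1) i₀ a, ⟨(i₀, a), hval, rfl⟩, ?_⟩
    intro heq
    have hmem : v +ᵥ pt (m+1) i₀ a ∈ v +ᵥ (slab (m+1) i₀ a : Set (Fin (m+1) → F)) :=
      Set.vadd_mem_vadd_set pt_mem
    rw [heq] at hmem
    have := hmem.2
    simp [pt, vadd_eq_add, hvi₀] at this
  · -- cardinality
    have hinj : Set.InjOn (fun p : Fin (m+1) × F => slab (m+1) p.1 p.2) idx := by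
      rintro ⟨i, a⟩ hia ⟨j, b⟩ hjb h
      have h' : slab (m+1) i a = slab (m+1) j b := h
      have hmem : pt (m+1) i a ∈ slab (m+1) j b := by
        rw [← h']; exact pt_mem
      obtain ⟨h1, h2⟩ := slab_index_eq (x := pt (m+1) i a) hia hjb pt_mem hmem
      exact Prod.ext h1 h2
    rw [Set.ncard_image_of_injOn hinj]
    have : idx = ↑((Finset.univ ×ˢ ({0}ᶜ : Finset F)) ∪ ({Fin.last m} ×ˢ ({0} : Finset F))) := by
      ext ⟨i, a⟩
      simp [hidx]
      tauto
    rw [this, Set.ncard_coe_finset]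
    rw [Finset.card_union_of_disjoint (by
      simp [Finset.disjoint_left]
      tauto)]
    obtain ⟨r, hr⟩ : ∃ r, Fintype.card F = r + 1 := ⟨Fintype.card F - 1, by omega⟩
    simp [Finset.card_product, Finset.card_compl, hr]
    rw [hq, hr]
    simp
    ring

theorem stmt4 (q n : ℕ) (F : Type*) [Field F] [Fintype F] (hq : Fintype.card F = q)
    (hn : 2 ≤ n) :
    ∃ A : Set (AffineSubspace F (Fin (n - 1) → F)), IsAVSP A ∧ IsTight A ∧
      A.ncard = (q - 1) * (n - 2) + q := by
  subst hq
  obtain ⟨m, hm1, hm2⟩ : ∃ m, n - 1 = m + 1 ∧ n - 2 = m := ⟨n - 2, by omega, rfl⟩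
  rw [hm2, hm1]
  exact key F m
end

section
/- A tight affine vector space partition of F_2^m (m ≥ 1) has size at least m+1. -/
open scoped Pointwise

namespace TarsiAux

open Module Submodule

variable {F : Type*} [Field F] {V : Type*} [AddCommGroup V] [Module F V]
  [FiniteDimensional F V] {I : Type*}

lemma memle {p q : Submodule F V} (h : p ≤ q) {x : V} (hx : x ∈ p) : x ∈ q := h hx

/-- Between a proper subspace and an ambient one there is a relative hyperplane. -/
lemma ext_step : ∀ (d : ℕ) (X Y : Submodule F V), X ≤ Y →
    finrank F X + d + 1 = finrank F Y →
    ∃ Y₁ : Submodule F V, X ≤ Y₁ ∧ Y₁ ≤ Y ∧ finrank F Y₁ + 1 = finrank F Y := by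
  intro d
  induction d with
  | zero => exact fun X Y hXY h => ⟨X, le_rfl, hXY, h⟩
  | succ d ih =>
    intro X Y hXY h
    have hne : ¬ Y ≤ X := by
      intro hle
      have : X = Y := le_antisymm hXY hle
      rw [this] at h; omega
    obtain ⟨v, hvY, hvX⟩ :=
      SetLike.exists_of_lt (lt_of_le_of_ne hXY (by rintro rfl; exact hne le_rfl))
    have hv0 : v ≠ 0 := fun h0 => hvX (h0 ▸ X.zero_mem)
    have hinf : X ⊓ Submodule.span F {v} = ⊥ := by
      rw [eq_bot_iff]
      intro z hz
      rw [Submodule.mem_inf] at hz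
      obtain ⟨hzX, hzv⟩ := hz
      rw [Submodule.mem_span_singleton] at hzv
      obtain ⟨r, rfl⟩ := hzv
      rcases eq_or_ne r 0 with rfl | hr
      · simp
      · exact absurd (by simpa [smul_smul, inv_mul_cancel₀ hr] using X.smul_mem r⁻¹ hzX) hvX
    have hfr : finrank F ↥(X ⊔ Submodule.span F {v}) = finrank F X + 1 := by
      have := Submodule.finrank_sup_add_finrank_inf_eq X (Submodule.span F {v})
      rw [hinf, finrank_bot, finrank_span_singleton hv0] at this
      omega
    have hle : X ⊔ Submodule.span F {v} ≤ Y :=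
      sup_le hXY ((Submodule.span_singleton_le_iff_mem v Y).2 hvY)
    obtain ⟨Y₁, h1, h2, h3⟩ := ih (X ⊔ Submodule.span F {v}) Y hle (by omega)
    exact ⟨Y₁, le_trans le_sup_left h1, h2, h3⟩

/-- If every nonempty subfamily has small enough joint intersection with `Y`,
then some point of the coset `c + Y` avoids all given cosets `a i + W i`. -/
lemma avoid : ∀ (n : ℕ) (s : Finset I), s.card ≤ n →
    ∀ (Y : Submodule F V) (c : V) (a : I → V) (W : I → Submodule F V),
    (∀ T ⊆ s, T.Nonempty → finrank F ↥(Y ⊓ T.inf W) + T.card ≤ finrank F ↥Y) →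
    ∃ x, x - c ∈ Y ∧ ∀ i ∈ s, x - a i ∉ W i := by
  classical
  intro n
  induction n with
  | zero =>
    intro s hs Y c a W _
    rw [Nat.le_zero, Finset.card_eq_zero] at hs
    subst hs
    exact ⟨c, by simp, by simp⟩
  | succ n ihn =>
    intro s hcard Y c a W hcond
    rcases s.eq_empty_or_nonempty with rfl | ⟨i₀, hi₀⟩
    · exact ⟨c, by simp, by simp⟩
    by_cases hT : ∃ T ⊆ s, T.Nonempty ∧ T ≠ s ∧
        finrank F ↥Y ≤ finrank F ↥(Y ⊓ T.inf W) + T.card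
    · -- Case 2 : a "tight" proper subfamily `T₀` exists
      obtain ⟨T₀, hT₀s, hT₀ne, hT₀pr, hT₀eq⟩ := hT
      have hT₀lt : T₀.card < s.card := Finset.card_lt_card (lt_of_le_of_ne hT₀s hT₀pr)
      obtain ⟨x₀, hx₀Y, hx₀av⟩ := ihn T₀ (by omega) Y c a W
        (fun T hTs hTne => hcond T (hTs.trans hT₀s) hTne)
      set Y' := Y ⊓ T₀.inf W with hY'
      have hcard' : (s \ T₀).card ≤ n := by
        have h1 := Finset.card_sdiff_of_subset hT₀s
        have h2 := Finset.card_le_card hT₀s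
        have h3 := hT₀ne.card_pos
        omega
      have hrec2 : ∀ T ⊆ s \ T₀, T.Nonempty →
          finrank F ↥(Y' ⊓ T.inf W) + T.card ≤ finrank F ↥Y' := by
        intro T hTs hTne
        have hdisj : Disjoint T₀ T := Finset.disjoint_left.2
          (fun u hu hT => (Finset.mem_sdiff.1 (hTs hT)).2 hu)
        have hsub : T₀ ∪ T ⊆ s :=
          Finset.union_subset hT₀s (hTs.trans (Finset.sdiff_subset))
        have hkey := hcond (T₀ ∪ T) hsub (hT₀ne.mono Finset.subset_union_left)
        rw [Finset.inf_union, Finset.card_union_of_disjoint hdisj, ← inf_assoc, ← hY'] at hkey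
        omega
      obtain ⟨x, hxY', hxav⟩ := ihn (s \ T₀) hcard' Y' x₀ a W hrec2
      refine ⟨x, ?_, ?_⟩
      · have hx : x - c = (x - x₀) + (x₀ - c) := by abel
        rw [hx]
        exact Y.add_mem (memle inf_le_left hxY') hx₀Y
      · intro i his hximem
        by_cases hiT₀ : i ∈ T₀
        · apply hx₀av i hiT₀
          have hxx₀ : x - x₀ ∈ W i := memle (le_trans inf_le_right (Finset.inf_le hiT₀)) hxY'
          have hrw : x₀ - a i = (x - a i) - (x - x₀) := by abel
          rw [hrw]
          exact (W i).sub_mem hximem hxx₀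
        · exact hxav i (Finset.mem_sdiff.2 ⟨his, hiT₀⟩) hximem
    · -- Case 1 : all proper nonempty subfamilies are strictly small
      push_neg at hT
      have hstrict : ∀ T ⊆ s, T.Nonempty → T ≠ s →
          finrank F ↥(Y ⊓ T.inf W) + T.card + 1 ≤ finrank F ↥Y := by
        intro T h1 h2 h3
        have := hT T h1 h2 h3
        omega
      have hX : finrank F ↥(Y ⊓ W i₀) + 1 ≤ finrank F ↥Y := by
        have := hcond {i₀} (Finset.singleton_subset_iff.2 hi₀) ⟨i₀, Finset.mem_singleton_self i₀⟩
        rwa [Finset.inf_singleton, Finset.card_singleton] at this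
      have hXle : Y ⊓ W i₀ ≤ Y := inf_le_left
      obtain ⟨d, hd⟩ : ∃ d, finrank F ↥(Y ⊓ W i₀) + d + 1 = finrank F ↥Y :=
        ⟨finrank F ↥Y - finrank F ↥(Y ⊓ W i₀) - 1, by omega⟩
      obtain ⟨Y₁, hXY₁, hY₁Y, hY₁fr⟩ := ext_step d (Y ⊓ W i₀) Y hXle hd
      have hnle : ¬ Y ≤ Y₁ := by
        intro hle
        have := Submodule.finrank_mono hle
        omega
      obtain ⟨v, hvY, hvY₁⟩ :=
        SetLike.exists_of_lt (lt_of_le_of_ne hY₁Y (by rintro rfl; exact hnle le_rfl))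
      set P : Prop := ∃ p, p - c ∈ Y ∧ p - a i₀ ∈ W i₀ with hPdef
      set c₁ : V := if h : P then h.choose + v else c with hc₁
      have hc₁c : c₁ - c ∈ Y := by
        by_cases h : P
        · rw [hc₁, dif_pos h]
          have hp := h.choose_spec.1
          have hx : h.choose + v - c = (h.choose - c) + v := by abel
          rw [hx]
          exact Y.add_mem hp hvY
        · rw [hc₁, dif_neg h]; simp
      have hcard' : (s.erase i₀).card ≤ n := by
        have := Finset.card_erase_of_mem hi₀
        have := Finset.card_pos.2 ⟨i₀, hi₀⟩
        omega
      have hrec1 : ∀ T ⊆ s.erase i₀, T.Nonempty →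
          finrank F ↥(Y₁ ⊓ T.inf W) + T.card ≤ finrank F ↥Y₁ := by
        intro T hTs hTne
        have hTss : T ⊆ s := hTs.trans (Finset.erase_subset i₀ s)
        have hTpr : T ≠ s := by
          rintro rfl
          exact (Finset.mem_erase.1 (hTs hi₀)).1 rfl
        have h1 := hstrict T hTss hTne hTpr
        have h2 : finrank F ↥(Y₁ ⊓ T.inf W) ≤ finrank F ↥(Y ⊓ T.inf W) :=
          Submodule.finrank_mono (inf_le_inf_right _ hY₁Y)
        omega
      obtain ⟨x, hxY₁, hxav⟩ := ihn (s.erase i₀) hcard' Y₁ c₁ a W hrec1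
      have hxc : x - c ∈ Y := by
        have hx : x - c = (x - c₁) + (c₁ - c) := by abel
        rw [hx]
        exact Y.add_mem (memle hY₁Y hxY₁) hc₁c
      refine ⟨x, hxc, ?_⟩
      intro i his hximem
      by_cases hii₀ : i = i₀
      · subst hii₀
        have hP : P := ⟨x, hxc, hximem⟩
        have hp := hP.choose_spec
        have hc₁eq : c₁ = hP.choose + v := by rw [hc₁, dif_pos hP]
        have hxp : x - hP.choose ∈ Y ⊓ W i := by
          constructor
          · have hx : x - hP.choose = (x - c) - (hP.choose - c) := by abel
            rw [hx]; exact Y.sub_mem hxc hp.1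
          · have hx : x - hP.choose = (x - a i) - (hP.choose - a i) := by abel
            rw [hx]; exact (W i).sub_mem hximem hp.2
        have hvmem : v ∈ Y₁ := by
          have hx : v = (x - hP.choose) - (x - c₁) := by rw [hc₁eq]; abel
          rw [hx]
          exact Y₁.sub_mem (memle hXY₁ hxp) hxY₁
        exact hvY₁ hvmem
      · exact hxav i (Finset.mem_erase.2 ⟨hii₀, his⟩) hximem

/-- The relative core statement: a family of cosets of `W i`, all containing
direction `Z`, partitioning the coset `c + Y` properly and tightly modulo `Z`,
has more than `finrank Y - finrank Z` members. -/
def CoreP (F : Type*) [Field F] (V : Type*) [AddCommGroup V] [Module F V]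
    [FiniteDimensional F V] (I : Type*) (n : ℕ) : Prop :=
  ∀ (s : Finset I) (a : I → V) (W : I → Submodule F V) (Y Z : Submodule F V) (c : V),
    Z ≤ Y → finrank F Z + n = finrank F Y →
    (∀ i ∈ s, Z ≤ W i) →
    (∀ i ∈ s, ¬ Y ≤ W i) →
    (∀ i ∈ s, a i - c ∈ Y) →
    (∀ x : V, x - c ∈ Y → ∃! i, i ∈ s ∧ x - a i ∈ W i) →
    (∀ u ∈ Y, u ∉ Z → ∃ i ∈ s, u ∉ W i) →
    n + 1 ≤ s.card

lemma core (n : ℕ) : CoreP F V I n := by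
  classical
  induction n using Nat.strong_induction_on with
  | _ n ih =>
  intro s a W Y Z c hZY hrank hZW hprop hmem hcover htight
  by_contra hcon
  push_neg at hcon
  have hsn : s.card ≤ n := by omega
  -- inner descent
  have inner : ∀ k : ℕ, ∀ U : Submodule F V, Z ≤ U → U ≤ Y →
      finrank F U < finrank F Y → finrank F Z + k = finrank F U →
      (s.filter (fun i => ¬ U ≤ W i)).card < k → False := by
    intro k
    induction k using Nat.strong_induction_on with
    | _ k ihk =>
    intro U hZU hUY hUltY hkeq hMlt
    set M := s.filter (fun i => ¬ U ≤ W i) with hM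
    have hk1 : 1 ≤ k := by omega
    -- a part moved by some direction of U
    have hZltU : Z < U := by
      refine lt_of_le_of_ne hZU ?_
      rintro rfl; omega
    obtain ⟨u, huU, huZ⟩ := SetLike.exists_of_lt hZltU
    obtain ⟨i₀, hi₀s, hi₀W⟩ := htight u (memle hUY huU) huZ
    have hi₀M : i₀ ∈ M := Finset.mem_filter.2 ⟨hi₀s, fun hle => hi₀W (hle huU)⟩
    set b := a i₀ with hb
    have hbc : b - c ∈ Y := hmem i₀ hi₀s
    set P : I → Prop := fun i => ∃ p, p - b ∈ U ∧ p - a i ∈ W i with hPdef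
    set IC := M.filter P with hIC
    set a' : I → V := fun i => if h : P i then h.choose else 0 with ha'
    have hICM : IC ⊆ M := Finset.filter_subset _ _
    have hICs : IC ⊆ s := hICM.trans (Finset.filter_subset _ _)
    have ha'spec : ∀ i ∈ IC, a' i - b ∈ U ∧ a' i - a i ∈ W i := by
      intro i hiIC
      have hPi : P i := (Finset.mem_filter.1 hiIC).2
      rw [ha']
      simp only [dif_pos hPi]
      exact hPi.choose_spec
    -- covering of the slice b + U by the parts indexed by IC
    have covmem : ∀ x : V, x - b ∈ U → ∃! i, i ∈ IC ∧ x - a' i ∈ W i := by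
      intro x hxU
      have hxc : x - c ∈ Y := by
        have : x - c = (x - b) + (b - c) := by abel
        rw [this]; exact Y.add_mem (memle hUY hxU) hbc
      obtain ⟨j, ⟨hjs, hxj⟩, huniq⟩ := hcover x hxc
      have hjM : j ∈ M := by
        refine Finset.mem_filter.2 ⟨hjs, ?_⟩
        intro hUW
        have hbj : b - a j ∈ W j := by
          have : b - a j = (x - a j) - (x - b) := by abel
          rw [this]; exact (W j).sub_mem hxj (memle hUW hxU)
        obtain ⟨j', hj', huniq'⟩ := hcover b hbc
        have e1 : j = j' := huniq' j ⟨hjs, hbj⟩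
        have e2 : i₀ = j' := huniq' i₀ ⟨hi₀s, by simp [hb]⟩
        have : ¬ U ≤ W i₀ := (Finset.mem_filter.1 hi₀M).2
        rw [e2, ← e1] at this
        exact this hUW
      have hPj : P j := ⟨x, hxU, hxj⟩
      have hjIC : j ∈ IC := Finset.mem_filter.2 ⟨hjM, hPj⟩
      have hspec := ha'spec j hjIC
      refine ⟨j, ⟨hjIC, ?_⟩, ?_⟩
      · have : x - a' j = (x - a j) - (a' j - a j) := by abel
        rw [this]; exact (W j).sub_mem hxj hspec.2
      · rintro i ⟨hiIC, hxi⟩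
        have hspeci := ha'spec i hiIC
        have : x - a i = (x - a' i) + (a' i - a i) := by abel
        exact huniq i ⟨hICs hiIC, by rw [this]; exact (W i).add_mem hxi hspeci.2⟩
    set U' := U ⊓ IC.inf W with hU'
    have hICne : IC.Nonempty := by
      obtain ⟨j, ⟨hj, _⟩, _⟩ := covmem b (by simp)
      exact ⟨j, hj⟩
    have hU'ltU : U' < U := by
      obtain ⟨j, hjIC⟩ := hICne
      refine lt_of_le_of_ne inf_le_left ?_
      intro heq
      have : U ≤ W j := by
        conv_lhs => rw [← heq]
        exact le_trans inf_le_right (Finset.inf_le hjIC)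
      exact (Finset.mem_filter.1 (hICM hjIC)).2 this
    have hZU' : Z ≤ U' := le_inf hZU (Finset.le_inf (fun i hi => hZW i (hICs hi)))
    have hfrZU' : finrank F Z ≤ finrank F U' := Submodule.finrank_mono hZU'
    have hfrU'U : finrank F U' < finrank F U := Submodule.finrank_lt_finrank_of_lt hU'ltU
    set t := finrank F ↥U' - finrank F ↥Z with ht
    set n' := finrank F ↥U - finrank F ↥U' with hn'
    have hn'lt : n' < n := by omega
    have hICcard : n' + 1 ≤ IC.card := by
      refine ih n' hn'lt IC a' W U U' b inf_le_left (by omega)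
        (fun i hi => le_trans inf_le_right (Finset.inf_le hi))
        (fun i hi => (Finset.mem_filter.1 (hICM hi)).2)
        (fun i hi => (ha'spec i hi).1)
        covmem ?_
      intro v hvU hvU'
      have : ¬ v ∈ IC.inf W := fun hv => hvU' ⟨hvU, hv⟩
      rw [Submodule.mem_finsetInf] at this
      push_neg at this
      exact this
    have hICM' : IC.card ≤ M.card := Finset.card_le_card hICM
    -- the new exceptional set
    set M' := s.filter (fun i => ¬ U' ≤ W i) with hM'
    have hM'sub : M' ⊆ M \ IC := by
      intro i hi
      obtain ⟨his, hiW⟩ := Finset.mem_filter.1 hi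
      refine Finset.mem_sdiff.2 ⟨Finset.mem_filter.2 ⟨his, fun h => hiW (le_trans hU'ltU.le h)⟩, ?_⟩
      intro hiIC
      exact hiW (le_trans inf_le_right (Finset.inf_le hiIC))
    have hM'card : M'.card ≤ M.card - IC.card := by
      have := Finset.card_le_card hM'sub
      have := Finset.card_sdiff_of_subset hICM
      omega
    have hU'Y : U' ≤ Y := le_trans hU'ltU.le hUY
    refine ihk t (by omega) U' hZU' hU'Y (by omega) (by omega) ?_
    rw [← hM']
    omega
  -- main step: find a subfamily with large joint intersection
  by_cases hT : ∃ T ⊆ s, T.Nonempty ∧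
      finrank F ↥Y < finrank F ↥(Y ⊓ T.inf W) + T.card
  · obtain ⟨T, hTs, hTne, hTbig⟩ := hT
    set U := Y ⊓ T.inf W with hU
    obtain ⟨i₁, hi₁⟩ := hTne
    have hUle : U ≤ Y ⊓ W i₁ := le_inf inf_le_left (le_trans inf_le_right (Finset.inf_le hi₁))
    have hYW : Y ⊓ W i₁ < Y := by
      refine lt_of_le_of_ne inf_le_left ?_
      intro heq
      exact hprop i₁ (hTs hi₁) (inf_eq_left.1 heq)
    have hUltY : U < Y := lt_of_le_of_lt hUle hYW
    have hZU : Z ≤ U := le_inf hZY (Finset.le_inf (fun i hi => hZW i (hTs hi)))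
    have hfrZU : finrank F Z ≤ finrank F U := Submodule.finrank_mono hZU
    have hfrUY : finrank F U < finrank F Y := Submodule.finrank_lt_finrank_of_lt hUltY
    set k := finrank F ↥U - finrank F ↥Z with hk
    have hMT : s.filter (fun i => ¬ U ≤ W i) ⊆ s \ T := by
      intro i hi
      obtain ⟨his, hiW⟩ := Finset.mem_filter.1 hi
      refine Finset.mem_sdiff.2 ⟨his, fun hiT => hiW ?_⟩
      exact le_trans inf_le_right (Finset.inf_le hiT)
    have hMcard : (s.filter (fun i => ¬ U ≤ W i)).card ≤ s.card - T.card := by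
      have := Finset.card_le_card hMT
      have := Finset.card_sdiff_of_subset hTs
      omega
    have hTcards : T.card ≤ s.card := Finset.card_le_card hTs
    have hTpos : 1 ≤ T.card := Finset.card_pos.2 ⟨i₁, hi₁⟩
    exact inner k U hZU hUltY.le hfrUY (by omega) (by omega)
  · push_neg at hT
    obtain ⟨x, hxY, hxav⟩ := avoid s.card s le_rfl Y c a W hT
    obtain ⟨i, ⟨his, hxi⟩, -⟩ := hcover x hxY
    exact hxav i his hxi

end TarsiAux

theorem stmt5 (m : ℕ) (hm : 1 ≤ m)
    (A : Set (AffineSubspace (ZMod 2) (Fin m → ZMod 2)))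
    (hA : IsAVSP A) (ht : IsTight A) : m + 1 ≤ A.ncard := by
  classical
  haveI : Finite (AffineSubspace (ZMod 2) (Fin m → ZMod 2)) :=
    Finite.of_injective (fun s => (s : Set (Fin m → ZMod 2))) SetLike.coe_injective
  have hAfin : A.Finite := Set.toFinite A
  set sF := hAfin.toFinset with hsF
  have hcardeq : A.ncard = sF.card := Set.ncard_eq_toFinset_card A hAfin
  set a : AffineSubspace (ZMod 2) (Fin m → ZMod 2) → (Fin m → ZMod 2) :=
    fun s => if h : (s : Set (Fin m → ZMod 2)).Nonempty then h.choose else 0 with ha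
  have hamem : ∀ s ∈ A, a s ∈ s := by
    intro s hs
    have hne := hA.2.1 s hs
    rw [ha]
    simp only [dif_pos hne]
    exact hne.choose_spec
  have hmemiff : ∀ s ∈ A, ∀ x : Fin m → ZMod 2, (x - a s ∈ s.direction ↔ x ∈ s) := by
    intro s hs x
    have := AffineSubspace.vsub_right_mem_direction_iff_mem (hamem s hs) x
    rwa [vsub_eq_sub] at this
  have hrank : Module.finrank (ZMod 2) (⊥ : Submodule (ZMod 2) (Fin m → ZMod 2)) + m =
      Module.finrank (ZMod 2) (⊤ : Submodule (ZMod 2) (Fin m → ZMod 2)) := by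
    rw [finrank_bot, finrank_top, Module.finrank_fin_fun]; omega
  have hprop : ∀ i ∈ sF, ¬ (⊤ : Submodule (ZMod 2) (Fin m → ZMod 2)) ≤ i.direction := by
    intro i hi
    rw [hsF, Set.Finite.mem_toFinset] at hi
    intro hle
    have hdir : i.direction = ⊤ := top_le_iff.1 hle
    exact hA.1 i hi ((AffineSubspace.direction_eq_top_iff_of_nonempty (hA.2.1 i hi)).1 hdir)
  have hcover : ∀ x : Fin m → ZMod 2,
      x - 0 ∈ (⊤ : Submodule (ZMod 2) (Fin m → ZMod 2)) →
      ∃! i, i ∈ sF ∧ x - a i ∈ i.direction := by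
    intro x _
    obtain ⟨s₀, ⟨hs₀A, hxs₀⟩, huniq⟩ := hA.2.2 x
    refine ⟨s₀, ⟨(Set.Finite.mem_toFinset hAfin).2 hs₀A, (hmemiff s₀ hs₀A x).2 hxs₀⟩, ?_⟩
    rintro i ⟨hiF, hxi⟩
    rw [hsF, Set.Finite.mem_toFinset] at hiF
    exact huniq i ⟨hiF, (hmemiff i hiF x).1 hxi⟩
  have htight : ∀ u ∈ (⊤ : Submodule (ZMod 2) (Fin m → ZMod 2)),
      u ∉ (⊥ : Submodule (ZMod 2) (Fin m → ZMod 2)) → ∃ i ∈ sF, u ∉ i.direction := by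
    intro u _ hu0
    rw [Submodule.mem_bot] at hu0
    obtain ⟨s, hsA, hne⟩ := ht u hu0
    refine ⟨s, (Set.Finite.mem_toFinset hAfin).2 hsA, ?_⟩
    intro hudir
    apply hne
    ext y
    rw [Set.mem_vadd_set_iff_neg_vadd_mem]
    constructor
    · intro hy
      have : u +ᵥ (-u +ᵥ y) ∈ s := AffineSubspace.vadd_mem_of_mem_direction hudir hy
      simpa using this
    · intro hy
      exact AffineSubspace.vadd_mem_of_mem_direction (s.direction.neg_mem hudir) hy
  have hkey := TarsiAux.core (F := ZMod 2) (V := Fin m → ZMod 2)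
    (I := AffineSubspace (ZMod 2) (Fin m → ZMod 2)) m sF a (fun s => s.direction)
    ⊤ ⊥ 0 bot_le hrank (fun i _ => bot_le) hprop (fun i _ => Submodule.mem_top)
    hcover htight
  omega
end

section
/- If A is an irreducible affine vector space partition of F_q^m (m ≥ 2) and the number of elements of A of affine dimension m-1 equals q-1, then this is impossible; moreover if it equals q then A is not tight. Consequently, an irreducible tight affine vector space partition of F_2^m with m ≥ 2 contains no affine hyperplane. -/
open scoped Pointwise

open Module in
lemma key_s7 {q m : ℕ} {F : Type*} [Field F] [Fintype F]
    (hq : Fintype.card F = q) (hm : 2 ≤ m)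
    (A : Set (AffineSubspace F (Fin m → F))) (hA : IsAVSP A) (hirr : ¬ IsReducible A)
    (s₀ : AffineSubspace F (Fin m → F)) (hs₀A : s₀ ∈ A)
    (hs₀d : Module.finrank F s₀.direction = m - 1) :
    {s ∈ A | Module.finrank F s.direction = m - 1}.ncard ≤ q ∧
    {s ∈ A | Module.finrank F s.direction = m - 1}.ncard ≠ q - 1 ∧
    ({s ∈ A | Module.finrank F s.direction = m - 1}.ncard = q → ¬ IsTight A) := by
  classical
  have hq2 : 2 ≤ q := by rw [← hq]; exact Fintype.one_lt_card
  haveI : Finite (AffineSubspace F (Fin m → F)) :=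
    Finite.of_injective (fun s => (s : Set (Fin m → F))) SetLike.coe_injective
  have hAfin : A.Finite := Set.toFinite A
  set H := {s ∈ A | Module.finrank F s.direction = m - 1} with hHdef
  have hHfin : H.Finite := Set.toFinite H
  have hV : finrank F (Fin m → F) = m := Module.finrank_fin_fun F
  have hdisj : ∀ s ∈ A, ∀ t ∈ A, s ≠ t → ∀ x : Fin m → F, x ∈ s → x ∈ t → False := by
    intro s hs t ht hst x hxs hxt
    obtain ⟨u, _, huniq⟩ := hA.2.2 x
    exact hst ((huniq s ⟨hs, hxs⟩).trans (huniq t ⟨ht, hxt⟩).symm)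
  set W := s₀.direction with hWdef
  have hpar : ∀ t ∈ A, Module.finrank F t.direction = m - 1 → t.direction = W := by
    intro t htA htd
    by_contra hne
    rcases eq_or_ne t s₀ with rfl | hts
    · exact hne rfl
    have hlt : W < W ⊔ t.direction := by
      refine lt_of_le_of_ne le_sup_left ?_
      intro h
      have hle : t.direction ≤ W := h ▸ le_sup_right
      exact hne (Submodule.eq_of_le_of_finrank_le hle (by rw [hs₀d, htd]))
    have htop : W ⊔ t.direction = ⊤ := by
      apply Submodule.eq_top_of_finrank_eq
      have h1 : finrank F W < finrank F ↥(W ⊔ t.direction) :=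
        Submodule.finrank_lt_finrank_of_lt hlt
      have h2 : finrank F ↥(W ⊔ t.direction) ≤ m := le_trans (Submodule.finrank_le _) (le_of_eq hV)
      rw [hV]
      rw [show finrank F W = m - 1 from hs₀d] at h1
      omega
    obtain ⟨p, hp⟩ := hA.2.1 s₀ hs₀A
    obtain ⟨r, hr⟩ := hA.2.1 t htA
    have hmem : r - p ∈ W ⊔ t.direction := htop ▸ Submodule.mem_top
    obtain ⟨w, hw, w', hw', hww⟩ := Submodule.mem_sup.mp hmem
    have h1 : w +ᵥ p ∈ s₀ := AffineSubspace.vadd_mem_of_mem_direction hw hp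
    have h2 : (-w') +ᵥ r ∈ t := AffineSubspace.vadd_mem_of_mem_direction (neg_mem hw') hr
    have hrpw : r = p + (w + w') := by rw [hww]; abel
    have heq : w +ᵥ p = (-w') +ᵥ r := by
      simp only [vadd_eq_add, hrpw]; abel
    exact hdisj s₀ hs₀A t htA (fun h => hts h.symm) _ h1 (heq ▸ h2)
  let f : AffineSubspace F (Fin m → F) → (Fin m → F) ⧸ W := fun t =>
    if h : (t : Set (Fin m → F)).Nonempty then Submodule.Quotient.mk h.choose else 0
  have hmemf : ∀ t, t ∈ A → t.direction = W → ∀ x : Fin m → F, x ∈ t →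
      (Submodule.Quotient.mk x : (Fin m → F) ⧸ W) = f t := by
    intro t htA htd x hx
    have hne : (t : Set (Fin m → F)).Nonempty := ⟨x, hx⟩
    simp only [f, dif_pos hne]
    have hsub : x - hne.choose ∈ W := by
      have := AffineSubspace.vsub_mem_direction hx hne.choose_spec
      rwa [htd, vsub_eq_sub] at this
    exact (Submodule.Quotient.eq W).mpr hsub
  have hinj : Set.InjOn f H := by
    intro t ht u hu hfe
    obtain ⟨pt, hpt⟩ := hA.2.1 t ht.1
    obtain ⟨pu, hpu⟩ := hA.2.1 u hu.1
    have h1 := hmemf t ht.1 (hpar t ht.1 ht.2) pt hpt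
    have h2 := hmemf u hu.1 (hpar u hu.1 hu.2) pu hpu
    have hsub : pu - pt ∈ W := (Submodule.Quotient.eq W).mp (by rw [h2, h1, hfe])
    have hsub' : pu - pt ∈ t.direction := by rw [hpar t ht.1 ht.2]; exact hsub
    have hput : pu ∈ t := by
      have := AffineSubspace.vadd_mem_of_mem_direction hsub' hpt
      simpa [vadd_eq_add, sub_add_cancel] using this
    by_contra hne
    exact hdisj t ht.1 u hu.1 hne pu hput hpu
  have hcov : ∀ x : Fin m → F,
      (Submodule.Quotient.mk x : (Fin m → F) ⧸ W) ∈ f '' H → ∃ t ∈ H, x ∈ t := by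
    rintro x ⟨t, htH, hft⟩
    obtain ⟨pt, hpt⟩ := hA.2.1 t htH.1
    have h1 := hmemf t htH.1 (hpar t htH.1 htH.2) pt hpt
    have hsub : x - pt ∈ W := (Submodule.Quotient.eq W).mp (by rw [h1, hft])
    have hsub' : x - pt ∈ t.direction := by rw [hpar t htH.1 htH.2]; exact hsub
    refine ⟨t, htH, ?_⟩
    have := AffineSubspace.vadd_mem_of_mem_direction hsub' hpt
    simpa [vadd_eq_add, sub_add_cancel] using this
  haveI : Finite ((Fin m → F) ⧸ W) := Quotient.finite _
  haveI := Fintype.ofFinite ((Fin m → F) ⧸ W)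
  have hcard : Nat.card ((Fin m → F) ⧸ W) = q := by
    have hr : finrank F ((Fin m → F) ⧸ W) = 1 := by
      have h := Submodule.finrank_quotient_add_finrank W
      rw [hV, show finrank F W = m - 1 from hs₀d] at h
      omega
    rw [Nat.card_eq_fintype_card, card_eq_pow_finrank (K := F), hr, hq, pow_one]
  have himg : (f '' H).ncard = H.ncard := Set.ncard_image_of_injOn hinj
  have hle : H.ncard ≤ q := by
    rw [← himg, ← hcard, ← Set.ncard_univ]
    exact Set.ncard_le_ncard (Set.subset_univ _) Set.finite_univ
  refine ⟨hle, ?_, ?_⟩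
  · -- ncard H ≠ q - 1
    intro hH
    have hcompl : ((f '' H)ᶜ).ncard = 1 := by
      have h := Set.ncard_add_ncard_compl (f '' H)
      rw [himg, hH, hcard] at h
      omega
    obtain ⟨c, hc⟩ := Set.ncard_eq_one.mp hcompl
    obtain ⟨p, rfl⟩ := Submodule.Quotient.mk_surjective W c
    set U := AffineSubspace.mk' p W with hUdef
    have hUmem : ∀ x : Fin m → F, x ∈ U ↔
        (Submodule.Quotient.mk x : (Fin m → F) ⧸ W) = Submodule.Quotient.mk p := by
      intro x
      rw [AffineSubspace.mem_mk', vsub_eq_sub]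
      exact (Submodule.Quotient.eq W).symm
    have hnotU : ∀ x : Fin m → F, x ∉ U → ∃ t ∈ H, x ∈ t := by
      intro x hx
      apply hcov
      by_contra hxi
      have hmem : (Submodule.Quotient.mk x : (Fin m → F) ⧸ W) ∈ (f '' H)ᶜ := hxi
      rw [hc, Set.mem_singleton_iff] at hmem
      exact hx ((hUmem x).mpr hmem)
    have hHU : ∀ t ∈ H, ∀ x ∈ t, x ∉ U := by
      intro t htH x hxt hxU
      have h1 := hmemf t htH.1 (hpar t htH.1 htH.2) x hxt
      have himgmem : (Submodule.Quotient.mk p : (Fin m → F) ⧸ W) ∈ f '' H :=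
        ⟨t, htH, h1.symm.trans ((hUmem x).mp hxU)⟩
      have h2 : (Submodule.Quotient.mk p : (Fin m → F) ⧸ W) ∈ (f '' H)ᶜ := by
        rw [hc]; exact rfl
      exact h2 himgmem
    have hUne : U ≠ ⊤ := by
      intro h
      have hd : U.direction = ⊤ := by rw [h]; exact AffineSubspace.direction_top _ _ _
      rw [hUdef, AffineSubspace.direction_mk'] at hd
      have : finrank F W = m := by rw [hd, finrank_top, hV]
      rw [show finrank F W = m - 1 from hs₀d] at this
      omega
    set S := {t ∈ A | t ≤ U} with hSdef
    have hSmem : ∀ x ∈ U, ∃! t, t ∈ S ∧ x ∈ t := by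
      intro x hxU
      obtain ⟨t, ⟨htA, hxt⟩, huniq⟩ := hA.2.2 x
      have htU : t ≤ U := by
        intro y hyt
        by_contra hyU
        obtain ⟨h, hhH, hyh⟩ := hnotU y hyU
        rcases eq_or_ne t h with rfl | hne
        · exact hHU t hhH x hxt hxU
        · exact hdisj t htA h hhH.1 hne y hyt hyh
      refine ⟨t, ⟨⟨htA, htU⟩, hxt⟩, ?_⟩
      rintro u ⟨⟨huA, _⟩, hxu⟩
      exact huniq u ⟨huA, hxu⟩
    have hp_in : p ∈ U := (hUmem p).mpr rfl
    obtain ⟨t, ⟨htS, hpt⟩, _⟩ := hSmem p hp_in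
    have hSfin : S.Finite := Set.toFinite S
    have h1lt : 1 < S.ncard := by
      rw [Set.one_lt_ncard hSfin]
      by_contra hcon
      push_neg at hcon
      have hall : ∀ u ∈ S, u = t := fun u hu => hcon u hu t htS
      have hteq : (t : Set (Fin m → F)) = (U : Set (Fin m → F)) := by
        apply Set.Subset.antisymm htS.2
        intro x hxU
        obtain ⟨u, ⟨huS, hxu⟩, _⟩ := hSmem x hxU
        rw [hall u huS] at hxu
        exact hxu
      have htU : t = U := SetLike.coe_injective hteq
      have htH : t ∈ H := by
        refine ⟨htS.1, ?_⟩
        rw [htU, hUdef, AffineSubspace.direction_mk']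
        exact hs₀d
      exact hHU t htH p hpt hp_in
    exact hirr ⟨U, hUne, S, fun u hu => hu.1, h1lt, fun s hs => hs.2, hSmem⟩
  · -- ncard H = q → ¬ IsTight A
    intro hH htight
    have huniv : f '' H = Set.univ := by
      have h0 : ((f '' H)ᶜ).ncard = 0 := by
        have h := Set.ncard_add_ncard_compl (f '' H)
        rw [himg, hH, hcard] at h
        omega
      have hempty : (f '' H)ᶜ = ∅ := (Set.ncard_eq_zero (Set.toFinite _)).mp h0
      rw [← compl_compl (f '' H), hempty, Set.compl_empty]
    have hcovall : ∀ x : Fin m → F, ∃ t ∈ H, x ∈ t := fun x =>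
      hcov x (huniv ▸ Set.mem_univ _)
    have hAH : ∀ t ∈ A, t.direction = W := by
      intro t htA
      obtain ⟨y, hy⟩ := hA.2.1 t htA
      obtain ⟨h, hhH, hyh⟩ := hcovall y
      rcases eq_or_ne t h with rfl | hne
      · exact hpar t htA hhH.2
      · exact (hdisj t htA h hhH.1 hne y hy hyh).elim
    have hWne : W ≠ ⊥ := by
      intro h
      rw [h, finrank_bot] at hs₀d
      omega
    obtain ⟨w, hwW, hw0⟩ := (Submodule.ne_bot_iff W).mp hWne
    obtain ⟨s, hsA, hne⟩ := htight w hw0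
    apply hne
    ext y
    simp only [Set.mem_vadd_set, SetLike.mem_coe]
    constructor
    · rintro ⟨z, hz, rfl⟩
      exact AffineSubspace.vadd_mem_of_mem_direction (by rw [hAH s hsA]; exact hwW) hz
    · intro hy
      refine ⟨(-w) +ᵥ y,
        AffineSubspace.vadd_mem_of_mem_direction (by rw [hAH s hsA]; exact neg_mem hwW) hy, ?_⟩
      simp [vadd_eq_add]

theorem stmt7 (q m : ℕ) (F : Type*) [Field F] [Fintype F] (hq : Fintype.card F = q)
    (hm : 2 ≤ m)
    (A : Set (AffineSubspace F (Fin m → F))) (hA : IsAVSP A) (hirr : ¬ IsReducible A) :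
    {s ∈ A | Module.finrank F s.direction = m - 1}.ncard ≠ q - 1 ∧
    ({s ∈ A | Module.finrank F s.direction = m - 1}.ncard = q → ¬ IsTight A) ∧
    (q = 2 → IsTight A → ∀ s ∈ A, Module.finrank F s.direction ≠ m - 1) := by
  have hq2 : 2 ≤ q := by rw [← hq]; exact Fintype.one_lt_card
  by_cases hex : ∃ s₀ ∈ A, Module.finrank F s₀.direction = m - 1
  · obtain ⟨s₀, hs₀A, hs₀d⟩ := hex
    obtain ⟨hle, h1, h2⟩ := key_s7 hq hm A hA hirr s₀ hs₀A hs₀d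
    refine ⟨h1, h2, ?_⟩
    intro hq2' htight s hs hd
    haveI : Finite (AffineSubspace F (Fin m → F)) :=
      Finite.of_injective (fun s => (s : Set (Fin m → F))) SetLike.coe_injective
    have hpos : 0 < {s ∈ A | Module.finrank F s.direction = m - 1}.ncard :=
      (Set.ncard_pos (Set.toFinite _)).mpr ⟨s, hs, hd⟩
    subst hq2'
    have heq : {s ∈ A | Module.finrank F s.direction = m - 1}.ncard = 2 := by omega
    exact h2 heq htight
  · push_neg at hex
    have hHempty : {s ∈ A | Module.finrank F s.direction = m - 1} = ∅ := by
      ext s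
      simp only [Set.mem_setOf_eq, Set.mem_empty_iff_false, iff_false, not_and]
      exact hex s
    rw [hHempty, Set.ncard_empty]
    exact ⟨by omega, fun h => absurd h.symm (by omega), fun _ _ s hs hd => hex s hs hd⟩
end

section
/- Let A be an irreducible tight affine vector space partition of F_2^m with m ≥ 2. Then A contains no element of affine dimension 0, i.e., no singleton points. -/
open scoped Pointwise

theorem stmt8 (m : ℕ) (hm : 2 ≤ m)
    (A : Set (AffineSubspace (ZMod 2) (Fin m → ZMod 2)))
    (hA : IsAVSP A) (ht : IsTight A) (hirr : ¬ IsReducible A) :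
    ∀ s ∈ A, Module.finrank (ZMod 2) s.direction ≠ 0 := by
  classical
  intro s0 hs0 hd0
  obtain ⟨hprop, hne, hcov⟩ := hA
  -- any element of finrank-0 direction is a singleton
  have hsing : ∀ s ∈ A, Module.finrank (ZMod 2) s.direction = 0 →
      ∃ p, (s : Set (Fin m → ZMod 2)) = {p} := by
    intro s hs hd
    have hbot : s.direction = ⊥ := Submodule.finrank_eq_zero.mp hd
    obtain ⟨p, hp⟩ := hne s hs
    refine ⟨p, Set.eq_singleton_iff_unique_mem.mpr ⟨hp, fun x hx => ?_⟩⟩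
    have hx' := AffineSubspace.vsub_mem_direction hx hp
    rw [hbot, Submodule.mem_bot] at hx'
    exact vsub_eq_zero_iff_eq.mp hx'
  -- A is finite
  have : Finite (AffineSubspace (ZMod 2) (Fin m → ZMod 2)) :=
    Finite.of_injective _ (SetLike.coe_injective (A := AffineSubspace (ZMod 2) (Fin m → ZMod 2)))
  have hAfin : A.Finite := Set.toFinite A
  set T : Finset (AffineSubspace (ZMod 2) (Fin m → ZMod 2)) := hAfin.toFinset with hT
  -- the covering function
  have hf : ∀ x : Fin m → ZMod 2, (hcov x).choose ∈ A ∧ x ∈ (hcov x).choose :=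
    fun x => (hcov x).choose_spec.1
  set f : (Fin m → ZMod 2) → AffineSubspace (ZMod 2) (Fin m → ZMod 2) :=
    fun x => (hcov x).choose with hfdef
  have hfmem : ∀ x ∈ (Finset.univ : Finset (Fin m → ZMod 2)), f x ∈ T := by
    intro x _; simp only [hT, Set.Finite.mem_toFinset]; exact (hf x).1
  have hcard := Finset.card_eq_sum_card_fiberwise hfmem
  -- each fiber is the carrier of the corresponding subspace
  have hfiber : ∀ s ∈ T, (Finset.univ.filter fun x => f x = s).card
      = 2 ^ Module.finrank (ZMod 2) s.direction := by
    intro s hsT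
    have hsA : s ∈ A := by simpa [hT, Set.Finite.mem_toFinset] using hsT
    have hset : (Finset.univ.filter fun x => f x = s) = (s : Set (Fin m → ZMod 2)).toFinset := by
      ext x
      simp only [Finset.mem_filter, Finset.mem_univ, true_and, Set.mem_toFinset, SetLike.mem_coe]
      constructor
      · intro h; exact h ▸ (hf x).2
      · intro hx
        exact ((hcov x).unique (hf x) ⟨hsA, hx⟩).symm ▸ rfl
    rw [hset, Set.toFinset_card]
    obtain ⟨p, hp⟩ := hne s hsA
    have e : s.direction ≃ (s : Set (Fin m → ZMod 2)) :=
      { toFun := fun v => ⟨v.1 +ᵥ p, AffineSubspace.vadd_mem_of_mem_direction v.2 hp⟩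
        invFun := fun x => ⟨x.1 -ᵥ p, AffineSubspace.vsub_mem_direction x.2 hp⟩
        left_inv := fun v => by ext : 1; simp
        right_inv := fun x => by ext : 1; simp }
    rw [← Fintype.card_congr e]
    have := Module.card_eq_pow_finrank (K := ZMod 2) (V := s.direction)
    simpa [ZMod.card] using this
  have hcardV : Fintype.card (Fin m → ZMod 2) = 2 ^ m := by
    simp [ZMod.card]
  have hsum : 2 ^ m = ∑ s ∈ T, 2 ^ Module.finrank (ZMod 2) s.direction := by
    rw [← hcardV, ← Finset.card_univ, hcard]
    exact Finset.sum_congr rfl hfiber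
  -- parity: the number of singletons is even
  set T0 : Finset (AffineSubspace (ZMod 2) (Fin m → ZMod 2)) :=
    T.filter (fun s => Module.finrank (ZMod 2) s.direction = 0) with hT0
  have hsplit := Finset.sum_filter_add_sum_filter_not T
    (fun s => Module.finrank (ZMod 2) s.direction = 0)
    (fun s => 2 ^ Module.finrank (ZMod 2) s.direction)
  have h1 : ∑ s ∈ T0, 2 ^ Module.finrank (ZMod 2) s.direction = T0.card := by
    rw [Finset.card_eq_sum_ones]
    refine Finset.sum_congr rfl fun s hs => ?_
    rw [(Finset.mem_filter.mp hs).2, pow_zero]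
  have h2 : 2 ∣ ∑ s ∈ T.filter (fun s => ¬ Module.finrank (ZMod 2) s.direction = 0),
      2 ^ Module.finrank (ZMod 2) s.direction := by
    refine Finset.dvd_sum fun s hs => ?_
    exact dvd_pow_self 2 (Finset.mem_filter.mp hs).2
  have hdvd : 2 ∣ T0.card := by
    have h2m : (2 : ℕ) ∣ 2 ^ m := dvd_pow_self 2 (by omega)
    rw [hsum, ← hsplit, ← hT0, h1] at h2m
    exact (Nat.dvd_add_right h2).mp (by rwa [Nat.add_comm] at h2m)
  have hs0T0 : s0 ∈ T0 := by
    simp only [hT0, Finset.mem_filter, hT, Set.Finite.mem_toFinset]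
    exact ⟨hs0, hd0⟩
  have hlt : 1 < T0.card := by
    rcases hdvd with ⟨k, hk⟩
    have : 0 < T0.card := Finset.card_pos.mpr ⟨s0, hs0T0⟩
    omega
  obtain ⟨t, htT0, hts0⟩ := Finset.exists_mem_ne hlt s0
  have htA : t ∈ A := by
    have := (Finset.mem_filter.mp htT0).1
    simpa [hT, Set.Finite.mem_toFinset] using this
  have htd : Module.finrank (ZMod 2) t.direction = 0 := (Finset.mem_filter.mp htT0).2
  obtain ⟨p, hp⟩ := hsing s0 hs0 hd0
  obtain ⟨q, hq⟩ := hsing t htA htd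
  have hps0 : p ∈ s0 := by rw [← SetLike.mem_coe, hp]; rfl
  have hqt : q ∈ t := by rw [← SetLike.mem_coe, hq]; rfl
  have hpq : p ≠ q := by
    intro h
    exact hts0 ((hcov p).unique ⟨htA, h ▸ hqt⟩ ⟨hs0, hps0⟩)
  -- build a reducible configuration
  apply hirr
  set U : AffineSubspace (ZMod 2) (Fin m → ZMod 2) := affineSpan (ZMod 2) {p, q} with hU
  have hmemU : ∀ x, x ∈ U → x = p ∨ x = q := by
    intro x hx
    have hpU : p ∈ U := left_mem_affineSpan_pair _ _ _
    have hdir : x -ᵥ p ∈ U.direction := AffineSubspace.vsub_mem_direction hx hpU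
    rw [hU, direction_affineSpan, vectorSpan_pair] at hdir
    obtain ⟨r, hr⟩ := Submodule.mem_span_singleton.mp hdir
    have hr01 : ∀ r : ZMod 2, r = 0 ∨ r = 1 := by decide
    rcases hr01 r with h | h
    · left
      rw [h, zero_smul] at hr
      exact (vsub_eq_zero_iff_eq.mp hr.symm)
    · right
      rw [h, one_smul] at hr
      have hx2 : x = (p - q) + p := eq_add_of_sub_eq hr.symm
      rw [hx2]
      funext i
      have : ∀ a b : ZMod 2, a - b + a = b := by decide
      exact this (p i) (q i)
  have hUne : U ≠ ⊤ := by
    intro hUt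
    have hsub : (Finset.univ : Finset (Fin m → ZMod 2)) ⊆ {p, q} := by
      intro x _
      have : x ∈ U := hUt ▸ AffineSubspace.mem_top _ _ _
      rcases hmemU x this with h | h <;> simp [h]
    have hle : Fintype.card (Fin m → ZMod 2) ≤ 2 := by
      calc Fintype.card (Fin m → ZMod 2) = (Finset.univ : Finset (Fin m → ZMod 2)).card :=
            (Finset.card_univ).symm
        _ ≤ ({p, q} : Finset (Fin m → ZMod 2)).card := Finset.card_le_card hsub
        _ ≤ 2 := Finset.card_insert_le _ _ |>.trans (by simp)
    rw [hcardV] at hle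
    have : 2 ^ 2 ≤ 2 ^ m := Nat.pow_le_pow_right (by omega) hm
    omega
  refine ⟨U, hUne, {s0, t}, ?_, ?_, ?_, ?_⟩
  · intro s hs
    rcases hs with h | h
    · exact h ▸ hs0
    · exact (Set.mem_singleton_iff.mp h) ▸ htA
  · rw [Set.ncard_pair (Ne.symm hts0)]; omega
  · intro s hs
    rcases hs with h | h
    · subst h
      intro x hx
      rw [← SetLike.mem_coe, hp] at hx
      rw [Set.mem_singleton_iff.mp hx]
      exact SetLike.mem_coe.mpr (left_mem_affineSpan_pair _ _ _)
    · rw [Set.mem_singleton_iff.mp h]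
      intro x hx
      rw [← SetLike.mem_coe, hq] at hx
      rw [Set.mem_singleton_iff.mp hx]
      exact SetLike.mem_coe.mpr (right_mem_affineSpan_pair _ _ _)
  · intro x hx
    rcases hmemU x hx with h | h
    · subst h
      refine ⟨s0, ⟨Or.inl rfl, hps0⟩, ?_⟩
      rintro s ⟨hsS, hxs⟩
      rcases hsS with h | h
      · exact h
      · exfalso
        rw [Set.mem_singleton_iff.mp h, ← SetLike.mem_coe, hq] at hxs
        exact hpq (Set.mem_singleton_iff.mp hxs)
    · subst h
      refine ⟨t, ⟨Or.inr rfl, hqt⟩, ?_⟩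
      rintro s ⟨hsS, hxs⟩
      rcases hsS with h | h
      · exfalso
        rw [h, ← SetLike.mem_coe, hp] at hxs
        exact hpq (Set.mem_singleton_iff.mp hxs).symm
      · exact Set.mem_singleton_iff.mp h
end

section
/- Let S be a set of four k-spaces in PG(n-1, 2) such that every hyperplane contains an even number of elements of S (2-divisibility). Then there exist a (k-1)-space B, a plane E, and a line L ≤ E with ⟨E, B⟩ of algebraic dimension k+2, such that S = { ⟨P, B⟩ : P a point of E not on L }. In particular all four k-spaces share a common (k-1)-dimensional subspace. -/
set_option linter.unusedSectionVars false
set_option linter.unusedVariables false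

open Module Submodule

section Helpers

variable {W : Type*} [AddCommGroup W] [Module (ZMod 2) W]


lemma pf_even4 (s : Set (Fin 4)) (h : Even s.ncard) :
    ((0 ∈ s ↔ 1 ∈ s) ↔ ((2:Fin 4) ∈ s ↔ 3 ∈ s)) := by
  classical
  have hfin : s.Finite := s.toFinite
  have key : ∀ t : Finset (Fin 4), Even t.card →
      ((0 ∈ t ↔ 1 ∈ t) ↔ ((2:Fin 4) ∈ t ↔ 3 ∈ t)) := by decide
  have := key hfin.toFinset (by rwa [Set.ncard_eq_toFinset_card] at h)
  simpa using this

lemma pf_zmod2cases (a : ZMod 2) : a = 0 ∨ a = 1 := by revert a; decide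

lemma pf_zmod2sum (a b c d : ZMod 2) (h : ((a = 0 ↔ b = 0) ↔ (c = 0 ↔ d = 0))) :
    a + b + c + d = 0 := by revert a b c d; decide

-- two cover

lemma pf_twoCover (A X Y : Submodule (ZMod 2) W) (h : (A : Set W) ⊆ ↑X ∪ ↑Y) :
    A ≤ X ∨ A ≤ Y := by
  by_contra hc
  push_neg at hc
  obtain ⟨hnx, hny⟩ := hc
  rw [SetLike.not_le_iff_exists] at hnx hny
  obtain ⟨a, haA, haX⟩ := hnx
  obtain ⟨b, hbA, hbY⟩ := hny
  have haY : a ∈ Y := by rcases h haA with h' | h' <;> tauto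
  have hbX : b ∈ X := by rcases h hbA with h' | h' <;> tauto
  have hab : a + b ∈ A := add_mem haA hbA
  rcases h hab with h' | h'
  · exact haX (by simpa using sub_mem h' hbX)
  · exact hbY (by simpa using sub_mem h' haY)

lemma pf_char2 (x : W) : x + x = 0 := by
  have h : (2 : ZMod 2) • x = x + x := two_smul _ x
  rw [show (2 : ZMod 2) = 0 by decide, zero_smul] at h
  exact h.symm

lemma pf_spanShift (B : Submodule (ZMod 2) W) (x c : W) (hc : c ∈ B) :
    B ⊔ span (ZMod 2) {x + c} = B ⊔ span (ZMod 2) {x} := by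
  apply le_antisymm
  · refine sup_le le_sup_left ((span_singleton_le_iff_mem _ _).mpr ?_)
    exact add_mem (mem_sup_right (mem_span_singleton_self x)) (mem_sup_left hc)
  · refine sup_le le_sup_left ((span_singleton_le_iff_mem _ _).mpr ?_)
    have hmem : (x + c) + c ∈ B ⊔ span (ZMod 2) {x + c} :=
      add_mem (mem_sup_right (mem_span_singleton_self _)) (mem_sup_left hc)
    rwa [add_assoc, pf_char2, add_zero] at hmem

variable [FiniteDimensional (ZMod 2) W]


variable [FiniteDimensional (ZMod 2) W]


lemma pf_finrank_sup_le (X Y : Submodule (ZMod 2) W) :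
    finrank (ZMod 2) (X ⊔ Y : Submodule (ZMod 2) W)
      ≤ finrank (ZMod 2) X + finrank (ZMod 2) Y := by
  have := Submodule.finrank_sup_add_finrank_inf_eq X Y
  omega

lemma pf_rankSupSpan (X : Submodule (ZMod 2) W) (x : W) (hx : x ∉ X) :
    finrank (ZMod 2) (X ⊔ span (ZMod 2) {x} : Submodule (ZMod 2) W)
      = finrank (ZMod 2) X + 1 := by
  have hx0 : x ≠ 0 := fun h => hx (h ▸ X.zero_mem)
  have h1 : finrank (ZMod 2) (span (ZMod 2) {x} : Submodule (ZMod 2) W) = 1 :=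
    finrank_span_singleton hx0
  have h2 := pf_finrank_sup_le X (span (ZMod 2) {x})
  have hlt : X < X ⊔ span (ZMod 2) {x} := by
    refine lt_of_le_of_ne le_sup_left (fun hh => hx ?_)
    rw [hh]
    exact mem_sup_right (mem_span_singleton_self x)
  have h3 := Submodule.finrank_lt_finrank_of_lt hlt
  omega

lemma pf_ncard_submodule (X : Submodule (ZMod 2) W) :
    (X : Set W).ncard = 2 ^ finrank (ZMod 2) X := by
  haveI : Finite W := Module.finite_iff_finite (R := ZMod 2) |>.mp ‹_›
  haveI : Fintype X := Fintype.ofFinite X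
  have h : Fintype.card X = (Fintype.card (ZMod 2)) ^ finrank (ZMod 2) X :=
    card_eq_pow_finrank (K := ZMod 2)
  rw [← Nat.card_coe_set_eq, Nat.card_eq_fintype_card]
  simpa [ZMod.card] using h

lemma pf_small2 (A X Y Z : Submodule (ZMod 2) W) (hZA : Z ≤ A) (hZ : Z ≠ A)
    (hcov : (A : Set W) ⊆ ↑X ∪ ↑Y ∪ ↑Z)
    (hXs : finrank (ZMod 2) X + 2 ≤ finrank (ZMod 2) A)
    (hYs : finrank (ZMod 2) Y + 2 ≤ finrank (ZMod 2) A) : False := by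
  haveI : Finite W := Module.finite_iff_finite (R := ZMod 2) |>.mp ‹_›
  have hZr : finrank (ZMod 2) Z < finrank (ZMod 2) A :=
    Submodule.finrank_lt_finrank_of_lt (lt_of_le_of_ne hZA hZ)
  -- cardinalities
  have hA := pf_ncard_submodule A
  have hX := pf_ncard_submodule X
  have hY := pf_ncard_submodule Y
  have hZc := pf_ncard_submodule Z
  -- union bounds
  have h1 : ((X : Set W) ∪ ↑Y ∪ ↑Z).ncard + (((X : Set W) ∪ ↑Y) ∩ ↑Z).ncard
      = ((X : Set W) ∪ ↑Y).ncard + (Z : Set W).ncard :=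
    Set.ncard_union_add_ncard_inter _ _ (Set.toFinite _) (Set.toFinite _)
  have h2 : ((X : Set W) ∪ ↑Y).ncard + ((X : Set W) ∩ ↑Y).ncard
      = (X : Set W).ncard + (Y : Set W).ncard :=
    Set.ncard_union_add_ncard_inter _ _ (Set.toFinite _) (Set.toFinite _)
  have h3 : 1 ≤ (((X : Set W) ∪ ↑Y) ∩ ↑Z).ncard := by
    rw [Nat.one_le_iff_ne_zero, ← Nat.pos_iff_ne_zero]
    refine (Set.ncard_pos (Set.toFinite _)).mpr ⟨0, ?_⟩
    exact ⟨Or.inl (Submodule.zero_mem X), Submodule.zero_mem Z⟩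
  have h4 : 1 ≤ ((X : Set W) ∩ ↑Y).ncard := by
    rw [Nat.one_le_iff_ne_zero, ← Nat.pos_iff_ne_zero]
    exact (Set.ncard_pos (Set.toFinite _)).mpr ⟨0, Submodule.zero_mem X, Submodule.zero_mem Y⟩
  have h5 : (A : Set W).ncard ≤ ((X : Set W) ∪ ↑Y ∪ ↑Z).ncard :=
    Set.ncard_le_ncard hcov (Set.toFinite _)
  -- power inequalities
  set r := finrank (ZMod 2) A with hr
  have p1 : 2 ^ (finrank (ZMod 2) X) * 4 ≤ 2 ^ r := by
    calc 2 ^ (finrank (ZMod 2) X) * 4 = 2 ^ (finrank (ZMod 2) X + 2) := by ring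
    _ ≤ 2 ^ r := Nat.pow_le_pow_right (by norm_num) hXs
  have p2 : 2 ^ (finrank (ZMod 2) Y) * 4 ≤ 2 ^ r := by
    calc 2 ^ (finrank (ZMod 2) Y) * 4 = 2 ^ (finrank (ZMod 2) Y + 2) := by ring
    _ ≤ 2 ^ r := Nat.pow_le_pow_right (by norm_num) hYs
  have p3 : 2 ^ (finrank (ZMod 2) Z) * 2 ≤ 2 ^ r := by
    calc 2 ^ (finrank (ZMod 2) Z) * 2 = 2 ^ (finrank (ZMod 2) Z + 1) := by ring
    _ ≤ 2 ^ r := Nat.pow_le_pow_right (by norm_num) hZr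
  have hApos : 1 ≤ 2 ^ r := Nat.one_le_two_pow
  omega

lemma pf_threeCover (A X Y Z : Submodule (ZMod 2) W)
    (hXA : X ≤ A) (hYA : Y ≤ A) (hZA : Z ≤ A)
    (hX : X ≠ A) (hY : Y ≠ A) (hZ : Z ≠ A) (hYZ : Y ≠ Z)
    (hcov : (A : Set W) ⊆ ↑X ∪ ↑Y ∪ ↑Z) :
    finrank (ZMod 2) X + 1 = finrank (ZMod 2) A := by
  haveI : Finite W := Module.finite_iff_finite (R := ZMod 2) |>.mp ‹_›
  have hXr : finrank (ZMod 2) X < finrank (ZMod 2) A :=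
    Submodule.finrank_lt_finrank_of_lt (lt_of_le_of_ne hXA hX)
  have hYr : finrank (ZMod 2) Y < finrank (ZMod 2) A :=
    Submodule.finrank_lt_finrank_of_lt (lt_of_le_of_ne hYA hY)
  have hZr : finrank (ZMod 2) Z < finrank (ZMod 2) A :=
    Submodule.finrank_lt_finrank_of_lt (lt_of_le_of_ne hZA hZ)
  by_contra hcon
  have hXs : finrank (ZMod 2) X + 2 ≤ finrank (ZMod 2) A := by omega
  -- Y and Z must both be hyperplanes
  have hYh : finrank (ZMod 2) Y + 1 = finrank (ZMod 2) A := by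
    by_contra hcy
    exact pf_small2 A X Y Z hZA hZ hcov hXs (by omega)
  have hZh : finrank (ZMod 2) Z + 1 = finrank (ZMod 2) A := by
    by_contra hcz
    refine pf_small2 A X Z Y hYA hY ?_ hXs (by omega)
    intro w hw
    have := hcov hw
    simp only [Set.mem_union] at this ⊢
    tauto
  -- Y ⊔ Z = A
  have hYZA : Y ⊔ Z = A := by
    have hle : Y ⊔ Z ≤ A := sup_le hYA hZA
    have hlt : Y < Y ⊔ Z := by
      refine lt_of_le_of_ne le_sup_left (fun hh => hYZ ?_)
      have hZY : Z ≤ Y := by rw [hh]; exact le_sup_right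
      exact (Submodule.eq_of_le_of_finrank_eq hZY (by omega)).symm
    have h1 : finrank (ZMod 2) Y < finrank (ZMod 2) (Y ⊔ Z : Submodule (ZMod 2) W) :=
      Submodule.finrank_lt_finrank_of_lt hlt
    have h2 : finrank (ZMod 2) (Y ⊔ Z : Submodule (ZMod 2) W) ≤ finrank (ZMod 2) A :=
      Submodule.finrank_mono hle
    exact Submodule.eq_of_le_of_finrank_eq hle (by omega)
  have hinf : finrank (ZMod 2) (Y ⊔ Z : Submodule (ZMod 2) W) + finrank (ZMod 2) (Y ⊓ Z : Submodule (ZMod 2) W)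
      = finrank (ZMod 2) Y + finrank (ZMod 2) Z :=
    Submodule.finrank_sup_add_finrank_inf_eq Y Z
  rw [hYZA] at hinf
  -- cardinalities
  have hA := pf_ncard_submodule A
  have hXc := pf_ncard_submodule X
  have hYc := pf_ncard_submodule Y
  have hZc := pf_ncard_submodule Z
  have hIc := pf_ncard_submodule (Y ⊓ Z)
  have hUc : ((Y : Set W) ∪ ↑Z).ncard + ((Y : Set W) ∩ ↑Z).ncard
      = (Y : Set W).ncard + (Z : Set W).ncard :=
    Set.ncard_union_add_ncard_inter _ _ (Set.toFinite _) (Set.toFinite _)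
  have hIeq : ((Y : Set W) ∩ ↑Z) = ((Y ⊓ Z : Submodule (ZMod 2) W) : Set W) := by
    simp [Submodule.coe_inf]
  rw [hIeq] at hUc
  -- the difference set
  set S : Set W := (A : Set W) \ ((Y : Set W) ∪ ↑Z) with hS
  have hsub : ((Y : Set W) ∪ ↑Z) ⊆ (A : Set W) := by
    intro w hw; rcases hw with h | h; exacts [hYA h, hZA h]
  have hSd : S.ncard = (A : Set W).ncard - ((Y : Set W) ∪ ↑Z).ncard :=
    Set.ncard_diff hsub (Set.toFinite _)
  have hSX : insert (0 : W) S ⊆ (X : Set W) := by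
    intro w hw
    rcases hw with rfl | ⟨hwA, hwYZ⟩
    · exact Submodule.zero_mem X
    · rcases hcov hwA with (h | h) | h
      · exact h
      · exact absurd (Or.inl h) hwYZ
      · exact absurd (Or.inr h) hwYZ
  have h0S : (0 : W) ∉ S := fun h => h.2 (Or.inl (Submodule.zero_mem Y))
  have hins : (insert (0 : W) S).ncard = S.ncard + 1 :=
    Set.ncard_insert_of_notMem h0S (Set.toFinite _)
  have hle : (insert (0 : W) S).ncard ≤ (X : Set W).ncard :=
    Set.ncard_le_ncard hSX (Set.toFinite _)
  have hUle : ((Y : Set W) ∪ ↑Z).ncard ≤ (A : Set W).ncard :=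
    Set.ncard_le_ncard hsub (Set.toFinite _)
  -- arithmetic
  set r := finrank (ZMod 2) A with hr
  obtain ⟨r2, hr2⟩ : ∃ r2, r = r2 + 2 := ⟨r - 2, by omega⟩
  have e1 : 2 ^ r = 4 * 2 ^ r2 := by rw [hr2]; ring
  have e2 : 2 ^ (finrank (ZMod 2) Y) = 2 * 2 ^ r2 := by
    have : finrank (ZMod 2) Y = r2 + 1 := by omega
    rw [this]; ring
  have e3 : 2 ^ (finrank (ZMod 2) Z) = 2 * 2 ^ r2 := by
    have : finrank (ZMod 2) Z = r2 + 1 := by omega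
    rw [this]; ring
  have e4 : 2 ^ (finrank (ZMod 2) (Y ⊓ Z : Submodule (ZMod 2) W)) = 2 ^ r2 := by
    have : finrank (ZMod 2) (Y ⊓ Z : Submodule (ZMod 2) W) = r2 := by omega
    rw [this]
  have e5 : 2 ^ (finrank (ZMod 2) X) ≤ 2 ^ r2 :=
    Nat.pow_le_pow_right (by norm_num) (by omega)
  omega

lemma pf_noCont (A1 A2 A3 A4 : Submodule (ZMod 2) W)
    (h12 : A1 ≠ A2) (h32 : A3 ≠ A2) (h42 : A4 ≠ A2)
    (r3 : finrank (ZMod 2) A3 = finrank (ZMod 2) A2)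
    (r4 : finrank (ZMod 2) A4 = finrank (ZMod 2) A2)
    (hE : ∀ φ : W, ((φ ∈ A1 ↔ φ ∈ A2) ↔ (φ ∈ A3 ↔ φ ∈ A4))) :
    ¬ A1 ≤ A2 := by
  intro hle
  have key : ∀ X Y : Submodule (ZMod 2) W, X ≠ A2 →
      finrank (ZMod 2) X = finrank (ZMod 2) A2 →
      (∀ φ : W, ((φ ∈ A1 ↔ φ ∈ A2) ↔ (φ ∈ X ↔ φ ∈ Y))) →
      ∀ θ : W, θ ∈ A2 → θ ∉ A1 → θ ∈ X → θ ∉ Y → False := by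
    intro X Y hXne hXr hE' θ hθ2 hθ1 hθX hθY
    have hXA2 : X ≤ A2 := by
      intro x hxX
      by_cases hxY : x ∈ Y
      · -- x ∈ X ⊓ Y ⟹ x ∈ A1 ≤ A2
        have h1 : θ + x ∈ X := add_mem hθX hxX
        have h2 : θ + x ∉ Y := fun h => hθY (by simpa using sub_mem h hxY)
        have h3 : θ + x ∈ A2 ∧ θ + x ∉ A1 := by
          have h := hE' (θ + x)
          by_cases hA1 : θ + x ∈ A1
          · exact absurd (hle hA1) (by tauto)
          · constructor
            · tauto
            · exact hA1
        have hx2 : x ∈ A2 := by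
          have := sub_mem h3.1 hθ2
          simpa using this
        have := hE' x
        exact hle (by tauto)
      · have h := hE' x
        by_cases hA1 : x ∈ A1
        · exact absurd (hle hA1) (by tauto)
        · tauto
    exact hXne (Submodule.eq_of_le_of_finrank_eq hXA2 hXr)
  obtain ⟨θ, hθ2, hθ1⟩ := SetLike.exists_of_lt (lt_of_le_of_ne hle h12)
  have hx : ¬ (θ ∈ A3 ↔ θ ∈ A4) := by have := hE θ; tauto
  by_cases h3 : θ ∈ A3
  · exact key A3 A4 h32 r3 hE θ hθ2 hθ1 h3 (by tauto)
  · exact key A4 A3 h42 r4 (fun φ => by have := hE φ; tauto) θ hθ2 hθ1 (by tauto) h3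

set_option maxHeartbeats 1000000 in
lemma pf_coverLem (A1 A2 A3 A4 : Submodule (ZMod 2) W) (m : ℕ)
    (n12 : A1 ≠ A2) (n13 : A1 ≠ A3) (n14 : A1 ≠ A4)
    (n23 : A2 ≠ A3) (n24 : A2 ≠ A4) (n34 : A3 ≠ A4)
    (hr1 : finrank (ZMod 2) A1 = m) (hr2 : finrank (ZMod 2) A2 = m)
    (hr3 : finrank (ZMod 2) A3 = m) (hr4 : finrank (ZMod 2) A4 = m)
    (hE : ∀ φ : W, ((φ ∈ A1 ↔ φ ∈ A2) ↔ (φ ∈ A3 ↔ φ ∈ A4))) :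
    A1 ≤ A2 ⊔ A3 ∧ finrank (ZMod 2) (A1 ⊓ A2 : Submodule (ZMod 2) W) + 1 = m := by
  -- no containments out of A1
  have nc2 : ¬ A1 ≤ A2 := pf_noCont A1 A2 A3 A4 n12 n23.symm n24.symm (by omega) (by omega) hE
  have nc3 : ¬ A1 ≤ A3 := pf_noCont A1 A3 A2 A4 n13 n23 n34.symm (by omega) (by omega)
    (fun φ => by have := hE φ; tauto)
  have nc4 : ¬ A1 ≤ A4 := pf_noCont A1 A4 A2 A3 n14 n24 n34 (by omega) (by omega)
    (fun φ => by have := hE φ; tauto)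
  -- the cover of A1
  have hcov : (A1 : Set W) ⊆ ↑(A1 ⊓ A2) ∪ ↑(A1 ⊓ A3) ∪ ↑(A1 ⊓ A4) := by
    intro φ hφ
    have h := hE φ
    simp only [Set.mem_union, SetLike.mem_coe, Submodule.mem_inf]
    by_cases h2 : φ ∈ A2
    · tauto
    · by_cases h3 : φ ∈ A3 <;> tauto
  have hle12 : A1 ⊓ A2 ≤ A1 := inf_le_left
  have hle13 : A1 ⊓ A3 ≤ A1 := inf_le_left
  have hle14 : A1 ⊓ A4 ≤ A1 := inf_le_left
  have hne12 : A1 ⊓ A2 ≠ A1 := fun h => nc2 (by rw [← h]; exact inf_le_right)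
  have hne13 : A1 ⊓ A3 ≠ A1 := fun h => nc3 (by rw [← h]; exact inf_le_right)
  have hne14 : A1 ⊓ A4 ≠ A1 := fun h => nc4 (by rw [← h]; exact inf_le_right)
  -- two of the pieces can't cover
  have two : ∀ X Y : Submodule (ZMod 2) W, X ≤ A1 → X ≠ A1 → Y ≤ A1 → Y ≠ A1 →
      ¬ ((A1 : Set W) ⊆ ↑X ∪ ↑Y) := by
    intro X Y hXle hXne hYle hYne hc
    rcases pf_twoCover A1 X Y hc with h | h
    · exact hXne (le_antisymm hXle h)
    · exact hYne (le_antisymm hYle h)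
  have d23 : A1 ⊓ A2 ≠ A1 ⊓ A3 := by
    intro h
    refine two (A1 ⊓ A2) (A1 ⊓ A4) hle12 hne12 hle14 hne14 ?_
    intro φ hφ
    rcases hcov hφ with (h' | h') | h'
    · exact Or.inl h'
    · exact Or.inl (by rw [h]; exact h')
    · exact Or.inr h'
  have d24 : A1 ⊓ A2 ≠ A1 ⊓ A4 := by
    intro h
    refine two (A1 ⊓ A2) (A1 ⊓ A3) hle12 hne12 hle13 hne13 ?_
    intro φ hφ
    rcases hcov hφ with (h' | h') | h'
    · exact Or.inl h'
    · exact Or.inr h'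
    · exact Or.inl (by rw [h]; exact h')
  have d34 : A1 ⊓ A3 ≠ A1 ⊓ A4 := by
    intro h
    refine two (A1 ⊓ A2) (A1 ⊓ A3) hle12 hne12 hle13 hne13 ?_
    intro φ hφ
    rcases hcov hφ with (h' | h') | h'
    · exact Or.inl h'
    · exact Or.inr h'
    · exact Or.inr (by rw [h]; exact h')
  -- ranks of the pieces
  have rk12 : finrank (ZMod 2) (A1 ⊓ A2 : Submodule (ZMod 2) W) + 1 = m := by
    have := pf_threeCover A1 (A1 ⊓ A2) (A1 ⊓ A3) (A1 ⊓ A4) hle12 hle13 hle14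
      hne12 hne13 hne14 d34 hcov
    omega
  have rk13 : finrank (ZMod 2) (A1 ⊓ A3 : Submodule (ZMod 2) W) + 1 = m := by
    have := pf_threeCover A1 (A1 ⊓ A3) (A1 ⊓ A2) (A1 ⊓ A4) hle13 hle12 hle14
      hne13 hne12 hne14 d24 ?_
    · omega
    · intro φ hφ
      rcases hcov hφ with (h'' | h'') | h''
      · exact Or.inl (Or.inr h'')
      · exact Or.inl (Or.inl h'')
      · exact Or.inr h''
  -- A1 = (A1⊓A2) ⊔ (A1⊓A3)
  have hsup : (A1 ⊓ A2) ⊔ (A1 ⊓ A3) = A1 := by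
    have hle : (A1 ⊓ A2) ⊔ (A1 ⊓ A3) ≤ A1 := sup_le hle12 hle13
    have hlt : A1 ⊓ A2 < (A1 ⊓ A2) ⊔ (A1 ⊓ A3) := by
      refine lt_of_le_of_ne le_sup_left (fun hh => ?_)
      have h13le : A1 ⊓ A3 ≤ A1 ⊓ A2 := by rw [hh]; exact le_sup_right
      have := Submodule.eq_of_le_of_finrank_eq h13le (by omega)
      exact d23 this.symm
    have h1 : finrank (ZMod 2) (A1 ⊓ A2 : Submodule (ZMod 2) W)
        < finrank (ZMod 2) ((A1 ⊓ A2) ⊔ (A1 ⊓ A3) : Submodule (ZMod 2) W) :=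
      Submodule.finrank_lt_finrank_of_lt hlt
    have h2 : finrank (ZMod 2) ((A1 ⊓ A2) ⊔ (A1 ⊓ A3) : Submodule (ZMod 2) W)
        ≤ finrank (ZMod 2) A1 := Submodule.finrank_mono hle
    exact Submodule.eq_of_le_of_finrank_eq hle (by omega)
  constructor
  · rw [← hsup]
    exact sup_le (le_trans inf_le_right le_sup_left) (le_trans inf_le_right le_sup_right)
  · exact rk12

set_option maxHeartbeats 1000000 in
lemma pf_AL (A1 A2 A3 A4 : Submodule (ZMod 2) W) (m : ℕ)
    (n12 : A1 ≠ A2) (n13 : A1 ≠ A3) (n14 : A1 ≠ A4)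
    (n23 : A2 ≠ A3) (n24 : A2 ≠ A4) (n34 : A3 ≠ A4)
    (hr1 : finrank (ZMod 2) A1 = m) (hr2 : finrank (ZMod 2) A2 = m)
    (hr3 : finrank (ZMod 2) A3 = m) (hr4 : finrank (ZMod 2) A4 = m)
    (hE : ∀ φ : W, ((φ ∈ A1 ↔ φ ∈ A2) ↔ (φ ∈ A3 ↔ φ ∈ A4))) :
    finrank (ZMod 2) (A1 ⊔ A2 ⊔ A3 ⊔ A4 : Submodule (ZMod 2) W) = m + 1 := by
  obtain ⟨le1, -⟩ := pf_coverLem A1 A2 A3 A4 m n12 n13 n14 n23 n24 n34 hr1 hr2 hr3 hr4 hE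
  obtain ⟨le4, -⟩ := pf_coverLem A4 A2 A3 A1 m n24.symm n34.symm n14.symm n23 n12.symm n13.symm
    hr4 hr2 hr3 hr1 (fun φ => by have := hE φ; tauto)
  obtain ⟨-, rk23⟩ := pf_coverLem A2 A3 A4 A1 m n23 n24 n12.symm n34 n13.symm n14.symm
    hr2 hr3 hr4 hr1 (fun φ => by have := hE φ; tauto)
  have hsup : A1 ⊔ A2 ⊔ A3 ⊔ A4 = A2 ⊔ A3 := by
    apply le_antisymm
    · exact sup_le (sup_le (sup_le le1 le_sup_left) le_sup_right) le4
    · exact sup_le (le_sup_of_le_left (le_sup_of_le_left le_sup_right)) (le_sup_of_le_left le_sup_right)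
  rw [hsup]
  have := Submodule.finrank_sup_add_finrank_inf_eq A2 A3
  omega


end Helpers

section Helpers2
variable {W : Type*} [AddCommGroup W] [Module (ZMod 2) W]

lemma pf_addTwice' (x y : W) : x + (x + y) = y := by rw [← add_assoc, pf_char2, zero_add]

lemma pf_addTwice (x y : W) : x + (y + x) = y := by
  rw [add_comm y x, ← add_assoc, pf_char2, zero_add]

lemma pf_addAcross (a b c : W) : (a + b) + (a + c) = b + c := by
  rw [add_add_add_comm, pf_char2, zero_add]



end Helpers2


theorem pf_part1 (n k : ℕ) (hk : 1 ≤ k)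
    (f : Fin 4 → Submodule (ZMod 2) (Fin n → ZMod 2))
    (hinj : Function.Injective f)
    (hdim : ∀ i, Module.finrank (ZMod 2) (f i) = k)
    (hdiv : ∀ H : Submodule (ZMod 2) (Fin n → ZMod 2),
      Module.finrank (ZMod 2) H = n - 1 → Even {i : Fin 4 | f i ≤ H}.ncard) :
    (finrank (ZMod 2) ((f 0 ⊓ f 1 ⊓ f 2 ⊓ f 3 : Submodule (ZMod 2) (Fin n → ZMod 2))) = k - 1)
    ∧ (∀ φ : Module.Dual (ZMod 2) (Fin n → ZMod 2),
        (((f 0 ≤ LinearMap.ker φ) ↔ (f 1 ≤ LinearMap.ker φ)) ↔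
         ((f 2 ≤ LinearMap.ker φ) ↔ (f 3 ≤ LinearMap.ker φ)))) := by
  classical
  set V := (Fin n → ZMod 2)
  have hfrV : finrank (ZMod 2) V = n := by
    rw [Module.finrank_pi]; simp
  have hkn : k < n := by
    have h1 : k ≤ n := by
      have := Submodule.finrank_le (f 0)
      rw [hfrV, hdim 0] at this; exact this
    rcases lt_or_eq_of_le h1 with h | h
    · exact h
    · exfalso
      have htop : ∀ i, f i = ⊤ := by
        intro i
        apply Submodule.eq_of_le_of_finrank_eq le_top
        rw [hdim i, finrank_top, hfrV, h]
      have := hinj ((htop 0).trans (htop 1).symm)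
      exact absurd this (by decide)
  -- pointwise parity
  have hEker : ∀ φ : Module.Dual (ZMod 2) V,
      (((f 0 ≤ LinearMap.ker φ) ↔ (f 1 ≤ LinearMap.ker φ)) ↔
       ((f 2 ≤ LinearMap.ker φ) ↔ (f 3 ≤ LinearMap.ker φ))) := by
    intro φ
    by_cases hφ : φ = 0
    · subst hφ
      simp only [LinearMap.ker_zero]
      tauto
    · have hker : finrank (ZMod 2) (LinearMap.ker φ) = n - 1 := by
        have hrn := LinearMap.finrank_range_add_finrank_ker φ
        rw [hfrV] at hrn
        have hr1 : finrank (ZMod 2) (LinearMap.range φ) = 1 := by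
          have hle : finrank (ZMod 2) (LinearMap.range φ) ≤ 1 := by
            have := Submodule.finrank_le (LinearMap.range φ)
            simpa using this
          have hne : LinearMap.range φ ≠ ⊥ := fun hbot => hφ (LinearMap.range_eq_bot.mp hbot)
          have : finrank (ZMod 2) (LinearMap.range φ) ≠ 0 :=
            fun h0 => hne (Submodule.finrank_eq_zero.mp h0)
          omega
        omega
      have := pf_even4 _ (hdiv (LinearMap.ker φ) hker)
      simpa using this
  refine ⟨?_, hEker⟩
  -- annihilators
  have hmemA : ∀ (i : Fin 4) (φ : Module.Dual (ZMod 2) V),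
      φ ∈ (f i).dualAnnihilator ↔ f i ≤ LinearMap.ker φ := by
    intro i φ
    simp only [Submodule.mem_dualAnnihilator]
    constructor
    · intro h w hw; exact h w hw
    · intro h w hw; exact h hw
  have hAne : ∀ i j : Fin 4, i ≠ j → (f i).dualAnnihilator ≠ (f j).dualAnnihilator := by
    intro i j hij h
    exact hij (hinj (Subspace.dualAnnihilator_inj.mp h))
  have hArank : ∀ i : Fin 4, finrank (ZMod 2) ((f i).dualAnnihilator) = n - k := by
    intro i
    have h1 := Subspace.finrank_add_finrank_dualCoannihilator_eq ((f i).dualAnnihilator)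
    rw [Subspace.dualAnnihilator_dualCoannihilator_eq, hfrV, hdim i] at h1
    omega
  have hEA : ∀ φ : Module.Dual (ZMod 2) V,
      ((φ ∈ (f 0).dualAnnihilator ↔ φ ∈ (f 1).dualAnnihilator) ↔
       (φ ∈ (f 2).dualAnnihilator ↔ φ ∈ (f 3).dualAnnihilator)) := by
    intro φ
    rw [hmemA, hmemA, hmemA, hmemA]
    exact hEker φ
  have hAL := pf_AL ((f 0).dualAnnihilator) ((f 1).dualAnnihilator)
    ((f 2).dualAnnihilator) ((f 3).dualAnnihilator) (n - k)
    (hAne 0 1 (by decide)) (hAne 0 2 (by decide)) (hAne 0 3 (by decide))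
    (hAne 1 2 (by decide)) (hAne 1 3 (by decide)) (hAne 2 3 (by decide))
    (hArank 0) (hArank 1) (hArank 2) (hArank 3) hEA
  -- transfer back
  have hann : (f 0 ⊓ f 1 ⊓ f 2 ⊓ f 3).dualAnnihilator
      = (f 0).dualAnnihilator ⊔ (f 1).dualAnnihilator
        ⊔ (f 2).dualAnnihilator ⊔ (f 3).dualAnnihilator := by
    rw [Subspace.dualAnnihilator_inf_eq, Subspace.dualAnnihilator_inf_eq,
      Subspace.dualAnnihilator_inf_eq]
  have h2 := Subspace.finrank_add_finrank_dualCoannihilator_eq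
    ((f 0 ⊓ f 1 ⊓ f 2 ⊓ f 3).dualAnnihilator)
  rw [Subspace.dualAnnihilator_dualCoannihilator_eq, hann, hAL, hfrV] at h2
  omega



theorem pf_part2 (n k : ℕ) (hk : 1 ≤ k)
    (f : Fin 4 → Submodule (ZMod 2) (Fin n → ZMod 2))
    (hinj : Function.Injective f)
    (hdim : ∀ i, Module.finrank (ZMod 2) (f i) = k)
    (frB : finrank (ZMod 2)
      ((f 0 ⊓ f 1 ⊓ f 2 ⊓ f 3 : Submodule (ZMod 2) (Fin n → ZMod 2))) = k - 1)
    (hEker : ∀ φ : Module.Dual (ZMod 2) (Fin n → ZMod 2),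
        (((f 0 ≤ LinearMap.ker φ) ↔ (f 1 ≤ LinearMap.ker φ)) ↔
         ((f 2 ≤ LinearMap.ker φ) ↔ (f 3 ≤ LinearMap.ker φ)))) :
    ∃ B E L : Submodule (ZMod 2) (Fin n → ZMod 2),
      Module.finrank (ZMod 2) B = k - 1 ∧ Module.finrank (ZMod 2) E = 3 ∧
      Module.finrank (ZMod 2) L = 2 ∧ L ≤ E ∧
      Module.finrank (ZMod 2) ↥(E ⊔ B) = k + 2 ∧
      (∀ i, ∃ v ∈ E, v ∉ L ∧ f i = Submodule.span (ZMod 2) {v} ⊔ B) ∧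
      (∀ v ∈ E, v ∉ L → v ≠ 0 → ∃ i, f i = Submodule.span (ZMod 2) {v} ⊔ B) := by
  classical
  set V := (Fin n → ZMod 2) with hV
  set B : Submodule (ZMod 2) V := f 0 ⊓ f 1 ⊓ f 2 ⊓ f 3 with hB
  have hBle : ∀ i, B ≤ f i := by
    intro i
    fin_cases i
    · exact le_trans inf_le_left (le_trans inf_le_left inf_le_left)
    · exact le_trans inf_le_left (le_trans inf_le_left inf_le_right)
    · exact le_trans inf_le_left inf_le_right
    · exact inf_le_right
  have hBlt : ∀ i, B < f i := by
    intro i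
    refine lt_of_le_of_ne (hBle i) (fun h => ?_)
    have h1 := hdim i
    rw [← h] at h1
    omega
  choose v hv1 hv2 using fun i => SetLike.exists_of_lt (hBlt i)
  have hvnz : ∀ i, v i ≠ 0 := fun i h => hv2 i (h ▸ B.zero_mem)
  have hspan : ∀ i, B ⊔ span (ZMod 2) {v i} = f i := by
    intro i
    apply Submodule.eq_of_le_of_finrank_eq
      (sup_le (hBle i) ((span_singleton_le_iff_mem _ _).mpr (hv1 i)))
    rw [pf_rankSupSpan B (v i) (hv2 i), frB, hdim i]
    omega
  have hvne : ∀ i j, i ≠ j → v i + v j ∉ B := by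
    intro i j hij hmem
    have hvj : v j ∈ f i := by
      have heq : v j = v i + (v i + v j) := (pf_addTwice' (v i) (v j)).symm
      rw [heq]
      exact add_mem (hv1 i) (hBle i hmem)
    have hle : f j ≤ f i := by
      rw [← hspan j]
      exact sup_le (hBle i) ((span_singleton_le_iff_mem _ _).mpr hvj)
    have := Submodule.eq_of_le_of_finrank_eq hle (by rw [hdim i, hdim j])
    exact hij (hinj this).symm
  -- the sum of the four representatives is in B
  set s : V := v 0 + v 1 + v 2 + v 3 with hs
  have hsB : s ∈ B := by
    refine (Subspace.forall_mem_dualAnnihilator_apply_eq_zero_iff B s).mp ?_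
    intro φ hφ
    have hφB : ∀ b ∈ B, φ b = 0 := (Submodule.mem_dualAnnihilator φ).mp hφ
    have hker : ∀ i, (f i ≤ LinearMap.ker φ ↔ φ (v i) = 0) := by
      intro i
      constructor
      · intro h
        exact LinearMap.mem_ker.mp (h (hv1 i))
      · intro h0 x hx
        rw [← hspan i] at hx
        rcases Submodule.mem_sup.mp hx with ⟨b, hb, z, hz, rfl⟩
        rcases Submodule.mem_span_singleton.mp hz with ⟨c, rfl⟩
        rw [LinearMap.mem_ker, map_add, map_smul, hφB b hb, h0, smul_zero, add_zero]
    have h := hEker φ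
    rw [hker 0, hker 1, hker 2, hker 3] at h
    rw [hs, map_add, map_add, map_add]
    exact pf_zmod2sum _ _ _ _ h
  set w : V := v 0 + v 1 + v 2 with hw
  have hv3w : v 3 = w + s := by
    rw [hs]
    exact (pf_addTwice' w (v 3)).symm
  have hw3 : B ⊔ span (ZMod 2) {w} = f 3 := by
    rw [← hspan 3, hv3w]
    exact (pf_spanShift B w s hsB).symm
  have hwnB : w ∉ B := by
    intro h
    exact hv2 3 (hv3w ▸ add_mem h hsB)
  have hwnz : w ≠ 0 := fun h => hwnB (h ▸ B.zero_mem)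
  -- E and its rank
  set E : Submodule (ZMod 2) V := span (ZMod 2) {v 0, v 1, v 2} with hE
  have hE0 : v 0 ∈ E := subset_span (by simp)
  have hE1 : v 1 ∈ E := subset_span (by simp)
  have hE2 : v 2 ∈ E := subset_span (by simp)
  have hwE : w ∈ E := add_mem (add_mem hE0 hE1) hE2
  have h1nf0 : v 1 ∉ f 0 := by
    intro h
    have hle : f 1 ≤ f 0 := by
      rw [← hspan 1]
      exact sup_le (hBle 0) ((span_singleton_le_iff_mem _ _).mpr h)
    have := Submodule.eq_of_le_of_finrank_eq hle (by rw [hdim 0, hdim 1])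
    exact absurd (hinj this) (by decide)
  set G1 : Submodule (ZMod 2) V := f 0 ⊔ span (ZMod 2) {v 1} with hG1
  have frG1 : finrank (ZMod 2) G1 = k + 1 := by
    rw [hG1, pf_rankSupSpan (f 0) (v 1) h1nf0, hdim 0]
  have h2nG1 : v 2 ∉ G1 := by
    intro h
    rw [hG1] at h
    rcases Submodule.mem_sup.mp h with ⟨b, hb, z, hz, hbz⟩
    rw [← hspan 0] at hb
    rcases Submodule.mem_sup.mp hb with ⟨b', hb', z', hz', rfl⟩
    rcases Submodule.mem_span_singleton.mp hz' with ⟨a, rfl⟩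
    rcases Submodule.mem_span_singleton.mp hz with ⟨c, rfl⟩
    rcases pf_zmod2cases a with ha | ha <;> rcases pf_zmod2cases c with hc | hc <;>
        subst ha hc
    · rw [zero_smul, zero_smul, add_zero, add_zero] at hbz
      exact hv2 2 (hbz ▸ hb')
    · rw [zero_smul, one_smul, add_zero] at hbz
      refine hvne 1 2 (by decide) ?_
      have he : v 1 + v 2 = b' := by
        rw [← hbz]
        exact pf_addTwice (v 1) b'
      exact he ▸ hb'
    · rw [one_smul, zero_smul, add_zero] at hbz
      refine hvne 0 2 (by decide) ?_
      have he : v 0 + v 2 = b' := by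
        rw [← hbz]
        exact pf_addTwice (v 0) b'
      exact he ▸ hb'
    · rw [one_smul, one_smul] at hbz
      refine hwnB ?_
      have he : w = b' := by
        rw [hw, ← hbz, add_assoc b' (v 0) (v 1)]
        exact pf_addTwice (v 0 + v 1) b'
      exact he ▸ hb'
  set G2 : Submodule (ZMod 2) V := G1 ⊔ span (ZMod 2) {v 2} with hG2
  have frG2 : finrank (ZMod 2) G2 = k + 2 := by
    rw [hG2, pf_rankSupSpan G1 (v 2) h2nG1, frG1]
  have hG2E : E ⊔ B = G2 := by
    apply le_antisymm
    · refine sup_le ?_ ?_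
      · rw [hE]
        apply span_le.mpr
        intro x hx
        rcases hx with rfl | rfl | rfl
        · exact (le_sup_left.trans le_sup_left : f 0 ≤ G2) (hv1 0)
        · exact (le_sup_left : G1 ≤ G2)
            (mem_sup_right (mem_span_singleton_self _))
        · exact mem_sup_right (mem_span_singleton_self _)
      · exact ((hBle 0).trans (le_sup_left.trans le_sup_left) : B ≤ G2)
    · have c1 : f 0 ≤ E ⊔ B := by
        rw [← hspan 0]
        exact sup_le le_sup_right ((span_singleton_le_iff_mem _ _).mpr (mem_sup_left hE0))
      have c2 : span (ZMod 2) {v 1} ≤ E ⊔ B :=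
        (span_singleton_le_iff_mem _ _).mpr (mem_sup_left hE1)
      have c3 : span (ZMod 2) {v 2} ≤ E ⊔ B :=
        (span_singleton_le_iff_mem _ _).mpr (mem_sup_left hE2)
      exact sup_le (sup_le c1 c2) c3
  have frEB : finrank (ZMod 2) (E ⊔ B : Submodule (ZMod 2) V) = k + 2 := by
    rw [hG2E]; exact frG2
  have frEle : finrank (ZMod 2) E ≤ 3 := by
    have h1 : E = span (ZMod 2) {v 0} ⊔ span (ZMod 2) {v 1, v 2} := by
      rw [hE, ← Submodule.span_insert]
    have h2 : (span (ZMod 2) {v 1, v 2} : Submodule (ZMod 2) V)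
        = span (ZMod 2) {v 1} ⊔ span (ZMod 2) {v 2} := by
      rw [← Submodule.span_insert]
    rw [h1, h2]
    have e0 : finrank (ZMod 2) (span (ZMod 2) {v 0} : Submodule (ZMod 2) V) = 1 :=
      finrank_span_singleton (hvnz 0)
    have e1 : finrank (ZMod 2) (span (ZMod 2) {v 1} : Submodule (ZMod 2) V) = 1 :=
      finrank_span_singleton (hvnz 1)
    have e2 : finrank (ZMod 2) (span (ZMod 2) {v 2} : Submodule (ZMod 2) V) = 1 :=
      finrank_span_singleton (hvnz 2)
    have i1 := pf_finrank_sup_le (span (ZMod 2) {v 1} : Submodule (ZMod 2) V)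
      (span (ZMod 2) {v 2})
    have i2 := pf_finrank_sup_le (span (ZMod 2) {v 0} : Submodule (ZMod 2) V)
      (span (ZMod 2) {v 1} ⊔ span (ZMod 2) {v 2})
    omega
  have frE : finrank (ZMod 2) E = 3 := by
    have h1 := Submodule.finrank_sup_add_finrank_inf_eq E B
    rw [frEB, frB] at h1
    omega
  -- L
  set L : Submodule (ZMod 2) V := span (ZMod 2) {v 0 + v 1, v 0 + v 2} with hL
  have hx01 : v 0 + v 1 ≠ 0 := fun h => hvne 0 1 (by decide) (h ▸ B.zero_mem)
  have hx02 : v 0 + v 2 ≠ 0 := fun h => hvne 0 2 (by decide) (h ▸ B.zero_mem)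
  have hLle : L ≤ E := by
    rw [hL]
    apply span_le.mpr
    intro x hx
    rcases hx with rfl | rfl
    · exact add_mem hE0 hE1
    · exact add_mem hE0 hE2
  have hLsup : L = span (ZMod 2) {v 0 + v 1} ⊔ span (ZMod 2) {v 0 + v 2} := by
    rw [hL, ← Submodule.span_insert]
  have frL : finrank (ZMod 2) L = 2 := by
    have hup : finrank (ZMod 2) L ≤ 2 := by
      rw [hLsup]
      have e0 := finrank_span_singleton (K := ZMod 2) hx01
      have e1 := finrank_span_singleton (K := ZMod 2) hx02
      have := pf_finrank_sup_le (span (ZMod 2) {v 0 + v 1} : Submodule (ZMod 2) V)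
        (span (ZMod 2) {v 0 + v 2})
      omega
    have hlt : span (ZMod 2) {v 0 + v 1} < L := by
      refine lt_of_le_of_ne ((span_singleton_le_iff_mem _ _).mpr
        (subset_span (by simp))) (fun hh => ?_)
      have h2 : v 0 + v 2 ∈ span (ZMod 2) {v 0 + v 1} := by
        rw [hh, hL]
        exact subset_span (by simp)
      rcases Submodule.mem_span_singleton.mp h2 with ⟨c, hc⟩
      rcases pf_zmod2cases c with rfl | rfl
      · rw [zero_smul] at hc
        exact hx02 hc.symm
      · rw [one_smul] at hc
        have : v 1 = v 2 := add_left_cancel (hc : v 0 + v 1 = v 0 + v 2)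
        refine hvne 1 2 (by decide) ?_
        rw [this, pf_char2]
        exact B.zero_mem
    have := Submodule.finrank_lt_finrank_of_lt hlt
    have e0 := finrank_span_singleton (K := ZMod 2) hx01
    omega
  -- L membership characterization
  have hLmem : ∀ z, z ∈ L →
      z = 0 ∨ z = v 0 + v 1 ∨ z = v 0 + v 2 ∨ z = v 1 + v 2 := by
    intro z hz
    rw [hL] at hz
    rcases Submodule.mem_span_pair.mp hz with ⟨a, b, hab⟩
    rcases pf_zmod2cases a with rfl | rfl <;> rcases pf_zmod2cases b with rfl | rfl
    · left; rw [← hab, zero_smul, zero_smul, add_zero]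
    · right; right; left; rw [← hab, zero_smul, one_smul, zero_add]
    · right; left; rw [← hab, one_smul, zero_smul, add_zero]
    · right; right; right
      rw [← hab, one_smul, one_smul]
      exact pf_addAcross (v 0) (v 1) (v 2)
  -- non-membership of the four points in L
  have cancel0 : ∀ y : V, ∀ x : V, x = x + y → y = 0 := by
    intro y x hxy
    have h2 : x + 0 = x + y := by rw [add_zero, ← hxy]
    exact (add_left_cancel h2).symm
  have hv0L : v 0 ∉ L := by
    intro h
    rcases hLmem _ h with h' | h' | h' | h'
    · exact hvnz 0 h'
    · exact hvnz 1 (cancel0 _ _ h')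
    · exact hvnz 2 (cancel0 _ _ h')
    · refine hwnz ?_
      rw [hw, add_assoc, ← h', pf_char2]
  have hv1L : v 1 ∉ L := by
    intro h
    rcases hLmem _ h with h' | h' | h' | h'
    · exact hvnz 1 h'
    · rw [add_comm] at h'
      exact hvnz 0 (cancel0 _ _ h')
    · refine hwnz ?_
      rw [hw, h', ← add_assoc, pf_char2, zero_add, pf_char2]
    · exact hvnz 2 (cancel0 _ _ h')
  have hv2L : v 2 ∉ L := by
    intro h
    rcases hLmem _ h with h' | h' | h' | h'
    · exact hvnz 2 h'
    · refine hwnz ?_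
      rw [hw, ← h', pf_char2]
    · rw [add_comm] at h'
      exact hvnz 0 (cancel0 _ _ h')
    · rw [add_comm] at h'
      exact hvnz 1 (cancel0 _ _ h')
  have hwL : w ∉ L := by
    intro h
    rcases hLmem _ h with h' | h' | h' | h'
    · exact hwnz h'
    · rw [hw] at h'
      have h2 : v 0 + v 1 + v 2 = v 0 + v 1 + 0 := by rw [add_zero, h']
      exact hvnz 2 (add_left_cancel h2)
    · rw [hw] at h'
      have h2 : v 0 + v 1 + v 2 = v 0 + 0 + v 2 := by rw [add_zero, h']
      exact hvnz 1 (add_left_cancel (add_right_cancel h2))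
    · rw [hw] at h'
      have h2 : v 0 + (v 1 + v 2) = 0 + (v 1 + v 2) := by
        rw [zero_add, ← add_assoc, h']
      exact hvnz 0 (add_right_cancel h2)
  refine ⟨B, E, L, frB, frE, frL, hLle, frEB, ?_, ?_⟩
  · intro i
    fin_cases i
    · exact ⟨v 0, hE0, hv0L, ((hspan 0).symm).trans (sup_comm _ _)⟩
    · exact ⟨v 1, hE1, hv1L, ((hspan 1).symm).trans (sup_comm _ _)⟩
    · exact ⟨v 2, hE2, hv2L, ((hspan 2).symm).trans (sup_comm _ _)⟩
    · exact ⟨w, hwE, hwL, (hw3.symm).trans (sup_comm _ _)⟩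
  · intro u huE huL hunz
    rw [hE] at huE
    rcases Submodule.mem_span_insert.mp huE with ⟨a, z, hz, hu⟩
    rcases Submodule.mem_span_pair.mp hz with ⟨b, c, rfl⟩
    rcases pf_zmod2cases a with rfl | rfl <;> rcases pf_zmod2cases b with rfl | rfl <;>
      rcases pf_zmod2cases c with rfl | rfl <;>
      simp only [zero_smul, one_smul, zero_add, add_zero] at hu
    · exact absurd hu hunz
    · exact ⟨2, by rw [hu]; exact ((hspan 2).symm).trans (sup_comm _ _)⟩
    · exact ⟨1, by rw [hu]; exact ((hspan 1).symm).trans (sup_comm _ _)⟩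
    · exact absurd (show u ∈ L by
        rw [hu, ← pf_addAcross (v 0) (v 1) (v 2)]
        exact add_mem (subset_span (by simp)) (subset_span (by simp))) huL
    · exact ⟨0, by rw [hu]; exact ((hspan 0).symm).trans (sup_comm _ _)⟩
    · exact absurd (show u ∈ L by rw [hu]; exact subset_span (by simp)) huL
    · exact absurd (show u ∈ L by rw [hu]; exact subset_span (by simp)) huL
    · refine ⟨3, ?_⟩
      rw [hu, ← add_assoc]
      exact (hw3.symm).trans (sup_comm _ _)



theorem stmt9 (n k : ℕ) (hk : 1 ≤ k)
    (f : Fin 4 → Submodule (ZMod 2) (Fin n → ZMod 2))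
    (hinj : Function.Injective f)
    (hdim : ∀ i, Module.finrank (ZMod 2) (f i) = k)
    (hdiv : ∀ H : Submodule (ZMod 2) (Fin n → ZMod 2),
      Module.finrank (ZMod 2) H = n - 1 → Even {i : Fin 4 | f i ≤ H}.ncard) :
    ∃ B E L : Submodule (ZMod 2) (Fin n → ZMod 2),
      Module.finrank (ZMod 2) B = k - 1 ∧ Module.finrank (ZMod 2) E = 3 ∧
      Module.finrank (ZMod 2) L = 2 ∧ L ≤ E ∧
      Module.finrank (ZMod 2) ↥(E ⊔ B) = k + 2 ∧
      (∀ i, ∃ v ∈ E, v ∉ L ∧ f i = Submodule.span (ZMod 2) {v} ⊔ B) ∧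
      (∀ v ∈ E, v ∉ L → v ≠ 0 → ∃ i, f i = Submodule.span (ZMod 2) {v} ⊔ B) := by
  obtain ⟨frB, hEker⟩ := pf_part1 n k hk f hinj hdim hdiv
  exact pf_part2 n k hk f hinj hdim frB hEker
end

section
/- Any 2-divisible set of six points in PG(3, 2) is the disjoint union of two (disjoint) lines. -/
private lemma zmod2_cases : ∀ x : ZMod 2, x = 0 ∨ x = 1 := by decide

private lemma add_self_eq_zero' (a : Fin 4 → ZMod 2) : a + a = 0 := by
  funext i
  have : ∀ x : ZMod 2, x + x = 0 := by decide
  exact this (a i)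

private lemma add2_eq_zero_iff (a b : Fin 4 → ZMod 2) : a + b = 0 ↔ a = b := by
  constructor
  · intro h
    funext i
    have : ∀ x y : ZMod 2, x + y = 0 → x = y := by decide
    exact this _ _ (congrFun h i)
  · rintro rfl; exact add_self_eq_zero' a

private lemma mem_span_pair_iff' (a b v : Fin 4 → ZMod 2) :
    v ∈ Submodule.span (ZMod 2) {a, b} ↔ v = 0 ∨ v = a ∨ v = b ∨ v = a + b := by
  rw [Submodule.mem_span_pair]
  constructor
  · rintro ⟨x, y, rfl⟩
    rcases zmod2_cases x with rfl | rfl <;> rcases zmod2_cases y with rfl | rfl <;> simp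
  · rintro (rfl | rfl | rfl | rfl)
    exacts [⟨0, 0, by simp⟩, ⟨1, 0, by simp⟩, ⟨0, 1, by simp⟩, ⟨1, 1, by simp⟩]

private lemma finrank_span_pair' (a b : Fin 4 → ZMod 2) (ha : a ≠ 0) (hb : b ≠ 0)
    (hab : a ≠ b) : Module.finrank (ZMod 2) (Submodule.span (ZMod 2) {a, b}) = 2 := by
  have hli : LinearIndependent (ZMod 2) ![a, b] := by
    rw [LinearIndependent.pair_iff]
    intro s t hst
    rcases zmod2_cases s with rfl | rfl <;> rcases zmod2_cases t with rfl | rfl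
    · exact ⟨rfl, rfl⟩
    · rw [zero_smul, one_smul, zero_add] at hst; exact absurd hst hb
    · rw [zero_smul, one_smul, add_zero] at hst; exact absurd hst ha
    · rw [one_smul, one_smul] at hst; exact absurd ((add2_eq_zero_iff a b).1 hst) hab
  have h := finrank_span_eq_card hli
  have hr : Set.range ![a, b] = {a, b} := by
    ext v
    simp [Matrix.range_cons, Matrix.range_empty]
    tauto
  rw [hr] at h
  simpa using h

/-- Six distinct nonzero vectors summing to zero contain a "line" {a,b,a+b}. -/
private lemma exists_line (S : Finset (Fin 4 → ZMod 2)) (h0 : (0 : Fin 4 → ZMod 2) ∉ S)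
    (h6 : S.card = 6) (hsum : S.sum id = 0) :
    ∃ a ∈ S, ∃ b ∈ S, a ≠ b ∧ a + b ∈ S := by
  by_contra hno
  push_neg at hno
  set f : (Fin 4 → ZMod 2) × (Fin 4 → ZMod 2) → (Fin 4 → ZMod 2) := fun p => p.1 + p.2 with hf
  -- image avoids 0 and S
  have himg : S.offDiag.image f ⊆ Finset.univ \ insert 0 S := by
    intro v hv
    simp only [Finset.mem_image] at hv
    obtain ⟨p, hp, rfl⟩ := hv
    rw [Finset.mem_offDiag] at hp
    obtain ⟨h1, h2, h3⟩ := hp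
    simp only [Finset.mem_sdiff, Finset.mem_univ, Finset.mem_insert, true_and]
    push_neg
    constructor
    · intro h; exact h3 ((add2_eq_zero_iff _ _).1 h)
    · exact hno _ h1 _ h2 h3
  -- fibers have size at most 2
  have hfib : ∀ v ∈ S.offDiag.image f,
      (S.offDiag.filter (fun q => f q = v)).card ≤ 2 := by
    intro v hv
    simp only [Finset.mem_image] at hv
    obtain ⟨⟨a, b⟩, hp, rfl⟩ := hv
    rw [Finset.mem_offDiag] at hp
    obtain ⟨haS, hbS, hab⟩ := hp
    have hsub : S.offDiag.filter (fun q => f q = f (a, b)) ⊆ {(a, b), (b, a)} := by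
      intro q hq
      obtain ⟨c, d⟩ := q
      simp only [Finset.mem_filter, Finset.mem_offDiag] at hq
      obtain ⟨⟨hcS, hdS, hcd⟩, heq⟩ := hq
      simp only [hf] at heq
      -- heq : c + d = a + b
      by_cases hca : c = a
      · have hd : d = b := by
          rw [hca] at heq
          exact add_left_cancel heq
        simp [hca, hd]
      by_cases hcb : c = b
      · have hd : d = a := by
          rw [hcb, add_comm a b] at heq
          exact add_left_cancel heq
        simp [hcb, hd]
      -- c ∉ {a, b}; then d ∉ {a, b} and we derive a contradiction
      exfalso
      have hda : d ≠ a := by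
        intro h
        apply hcb
        rw [h, add_comm a b] at heq
        exact add_right_cancel heq
      have hdb : d ≠ b := by
        intro h
        apply hca
        rw [h] at heq
        exact add_right_cancel heq
      set U : Finset (Fin 4 → ZMod 2) := {a, b, c, d} with hU
      have hUsub : U ⊆ S := by
        intro x hx
        simp only [hU, Finset.mem_insert, Finset.mem_singleton] at hx
        rcases hx with rfl | rfl | rfl | rfl <;> assumption
      have hndb : b ∉ ({c, d} : Finset _) := by
        simp [Ne.symm hcb, Ne.symm hdb]
      have hnda : a ∉ ({b, c, d} : Finset _) := by
        simp [hab, Ne.symm hca, Ne.symm hda]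
      have hndc : c ∉ ({d} : Finset _) := by simp [hcd]
      have hUcard : U.card = 4 := by
        simp only [hU]
        rw [Finset.card_insert_of_notMem hnda, Finset.card_insert_of_notMem hndb,
          Finset.card_insert_of_notMem hndc, Finset.card_singleton]
      have hUsum : U.sum id = 0 := by
        have h4 : U.sum id = a + (b + (c + d)) := by
          simp only [hU]
          rw [Finset.sum_insert hnda, Finset.sum_insert hndb, Finset.sum_insert hndc,
            Finset.sum_singleton]
          simp only [id_def]
        rw [h4, heq]
        rw [show a + (b + (a + b)) = (a + b) + (a + b) by ring]
        exact add_self_eq_zero' _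
      have hT : (S \ U).sum id + U.sum id = S.sum id := Finset.sum_sdiff hUsub
      rw [hUsum, hsum, add_zero] at hT
      have hTcard : (S \ U).card = 2 := by
        rw [Finset.card_sdiff_of_subset hUsub, h6, hUcard]
      obtain ⟨x, y, hxy, hTeq⟩ := Finset.card_eq_two.1 hTcard
      rw [hTeq, Finset.sum_insert (by simp [hxy]), Finset.sum_singleton] at hT
      exact hxy ((add2_eq_zero_iff x y).1 hT)
    calc (S.offDiag.filter (fun q => f q = f (a, b))).card
        ≤ ({(a, b), (b, a)} : Finset _).card := Finset.card_le_card hsub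
      _ ≤ 2 := (Finset.card_insert_le _ _).trans (by simp)
  have hmain := Finset.card_le_mul_card_image S.offDiag 2 hfib
  have h30 : S.offDiag.card = 30 := by rw [Finset.offDiag_card, h6]
  have h9 : (S.offDiag.image f).card ≤ 9 := by
    calc (S.offDiag.image f).card ≤ (Finset.univ \ insert 0 S).card :=
          Finset.card_le_card himg
      _ = 9 := by
          rw [Finset.card_sdiff_of_subset (Finset.subset_univ _), Finset.card_insert_of_notMem h0, h6]
          simp
  omega

set_option maxHeartbeats 1000000 in
theorem stmt11 (P : Set (Fin 4 → ZMod 2)) (h0 : (0 : Fin 4 → ZMod 2) ∉ P)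
    (hcard : P.ncard = 6)
    (hdiv : ∀ H : Submodule (ZMod 2) (Fin 4 → ZMod 2),
      Module.finrank (ZMod 2) H = 3 → Even {v ∈ P | v ∈ H}.ncard) :
    ∃ L₁ L₂ : Submodule (ZMod 2) (Fin 4 → ZMod 2),
      Module.finrank (ZMod 2) L₁ = 2 ∧ Module.finrank (ZMod 2) L₂ = 2 ∧
      L₁ ⊓ L₂ = ⊥ ∧ P = {v | v ≠ 0 ∧ (v ∈ L₁ ∨ v ∈ L₂)} := by
  have hPfin : P.Finite := Set.toFinite P
  set S : Finset (Fin 4 → ZMod 2) := hPfin.toFinset with hSdef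
  have hmemS : ∀ v, v ∈ S ↔ v ∈ P := fun v => hPfin.mem_toFinset
  have hS6 : S.card = 6 := by
    rw [← hcard, ← Set.ncard_coe_finset, hSdef, hPfin.coe_toFinset]
  have h0S : (0 : Fin 4 → ZMod 2) ∉ S := fun h => h0 ((hmemS 0).1 h)
  -- Step 1: the sum of the points is zero
  have hsum : S.sum id = 0 := by
    funext i
    simp only [Finset.sum_apply, id_def, Pi.zero_apply]
    set g : (Fin 4 → ZMod 2) →ₗ[ZMod 2] ZMod 2 := LinearMap.proj i with hg
    have hsurj : Function.Surjective g := fun c => ⟨Pi.single i c, by simp [hg]⟩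
    have hker : Module.finrank (ZMod 2) (LinearMap.ker g) = 3 := by
      have h1 := LinearMap.finrank_range_add_finrank_ker g
      rw [LinearMap.range_eq_top.2 hsurj] at h1
      simp only [finrank_top, Module.finrank_self] at h1
      have h4 : Module.finrank (ZMod 2) (Fin 4 → ZMod 2) = 4 := by simp
      omega
    have heven := hdiv (LinearMap.ker g) hker
    have hsetP : {v ∈ P | v ∈ LinearMap.ker g} = ↑(S.filter (fun v => g v = 0)) := by
      ext v
      simp [hmemS, LinearMap.mem_ker, and_comm]
    rw [hsetP, Set.ncard_coe_finset] at heven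
    have hsplit := Finset.card_filter_add_card_filter_not
      (s := S) (p := fun v => g v = 0)
    rw [hS6] at hsplit
    have heven' : Even (S.filter (fun v => ¬ g v = 0)).card := by
      obtain ⟨k, hk⟩ := heven
      exact ⟨3 - k, by omega⟩
    have hval : ∀ v ∈ S, v i = g v := fun v _ => rfl
    rw [Finset.sum_congr rfl hval]
    have h1 : ∀ v ∈ S.filter (fun v => ¬ g v = 0), g v = 1 := by
      intro v hv
      rcases zmod2_cases (g v) with h | h
      · exact absurd h (Finset.mem_filter.1 hv).2
      · exact h
    have hsum1 : ∑ v ∈ S, g v = ((S.filter (fun v => ¬ g v = 0)).card : ZMod 2) := by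
      calc ∑ v ∈ S, g v
          = ∑ v ∈ S.filter (fun v => g v = 0), g v
            + ∑ v ∈ S.filter (fun v => ¬ g v = 0), g v :=
            (Finset.sum_filter_add_sum_filter_not S _ _).symm
        _ = 0 + ∑ v ∈ S.filter (fun v => ¬ g v = 0), (1 : ZMod 2) := by
            rw [Finset.sum_congr rfl (fun v hv => (Finset.mem_filter.1 hv).2),
              Finset.sum_const_zero, Finset.sum_congr rfl h1]
        _ = _ := by rw [zero_add, Finset.sum_const, nsmul_eq_mul, mul_one]
    rw [hsum1]
    obtain ⟨k, hk⟩ := heven'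
    rw [hk, Nat.cast_add, ← two_mul, show (2 : ZMod 2) = 0 by decide, zero_mul]
  -- Step 2: extract the first line
  obtain ⟨a, haS, b, hbS, hab, habS⟩ := exists_line S h0S hS6 hsum
  have ha0 : a ≠ 0 := fun h => h0S (h ▸ haS)
  have hb0 : b ≠ 0 := fun h => h0S (h ▸ hbS)
  have haab : a ≠ a + b := by
    intro h
    apply hb0
    have h2 : a + a = a + (a + b) := congrArg (a + ·) h
    rw [← add_assoc] at h2
    rw [add_self_eq_zero', zero_add] at h2
    exact h2.symm
  have hab0 : a + b ≠ 0 := fun h => hab ((add2_eq_zero_iff a b).1 h)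
  have hbab : b ≠ a + b := by
    intro h
    apply ha0
    have h2 : b + b = b + (a + b) := congrArg (b + ·) h
    rw [add_comm a b, ← add_assoc] at h2
    rw [add_self_eq_zero', zero_add] at h2
    exact h2.symm
  -- the remaining three points
  set L : Finset (Fin 4 → ZMod 2) := {a, b, a + b} with hL
  have hLsub : L ⊆ S := by
    intro x hx
    simp only [hL, Finset.mem_insert, Finset.mem_singleton] at hx
    rcases hx with rfl | rfl | rfl <;> assumption
  have hLcard : L.card = 3 := by
    simp only [hL]
    rw [Finset.card_insert_of_notMem (by simp [hab, haab]),
      Finset.card_insert_of_notMem (by simp [hbab]), Finset.card_singleton]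
  have hTcard : (S \ L).card = 3 := by rw [Finset.card_sdiff_of_subset hLsub, hS6, hLcard]
  obtain ⟨c, d, e, hcd, hce, hde, hTeq⟩ := Finset.card_eq_three.1 hTcard
  have hLsum : L.sum id = 0 := by
    simp only [hL]
    rw [Finset.sum_insert (by simp [hab, haab]),
      Finset.sum_insert (by simp [hbab]), Finset.sum_singleton]
    simp only [id_def]
    rw [← add_assoc]
    exact add_self_eq_zero' _
  have hTsum : (S \ L).sum id = 0 := by
    have h1 : (S \ L).sum id + L.sum id = S.sum id := Finset.sum_sdiff hLsub
    rw [hLsum, hsum, add_zero] at h1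
    exact h1
  have hecd : e = c + d := by
    rw [hTeq, Finset.sum_insert (by simp [hcd, hce]), Finset.sum_insert (by simp [hde]),
      Finset.sum_singleton] at hTsum
    simp only [id_def] at hTsum
    rw [← add_assoc] at hTsum
    exact ((add2_eq_zero_iff (c + d) e).1 hTsum).symm
  have hcT : c ∈ S \ L := by rw [hTeq]; simp
  have hdT : d ∈ S \ L := by rw [hTeq]; simp
  have heT : e ∈ S \ L := by rw [hTeq]; simp
  have hcS : c ∈ S := (Finset.mem_sdiff.1 hcT).1
  have hdS : d ∈ S := (Finset.mem_sdiff.1 hdT).1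
  have heS : e ∈ S := (Finset.mem_sdiff.1 heT).1
  have hcL : c ∉ L := (Finset.mem_sdiff.1 hcT).2
  have hdL : d ∉ L := (Finset.mem_sdiff.1 hdT).2
  have heL : e ∉ L := (Finset.mem_sdiff.1 heT).2
  have hc0 : c ≠ 0 := fun h => h0S (h ▸ hcS)
  have hd0 : d ≠ 0 := fun h => h0S (h ▸ hdS)
  have he0 : e ≠ 0 := fun h => h0S (h ▸ heS)
  simp only [hL, Finset.mem_insert, Finset.mem_singleton, not_or] at hcL hdL heL
  obtain ⟨hca, hcb, hcab⟩ := hcL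
  obtain ⟨hda, hdb, hdab⟩ := hdL
  obtain ⟨hea, heb, heab⟩ := heL
  refine ⟨Submodule.span (ZMod 2) {a, b}, Submodule.span (ZMod 2) {c, d},
    finrank_span_pair' a b ha0 hb0 hab, finrank_span_pair' c d hc0 hd0 hcd, ?_, ?_⟩
  · -- trivial intersection
    rw [eq_bot_iff]
    intro v hv
    rw [Submodule.mem_inf] at hv
    obtain ⟨h1, h2⟩ := hv
    rw [mem_span_pair_iff'] at h1 h2
    rw [Submodule.mem_bot]
    rw [← hecd] at h2
    rcases h1 with rfl | rfl | rfl | rfl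
    · rfl
    · rcases h2 with h | h | h | h
      · exact absurd h ha0
      · exact absurd h.symm hca
      · exact absurd h.symm hda
      · exact absurd h.symm hea
    · rcases h2 with h | h | h | h
      · exact absurd h hb0
      · exact absurd h.symm hcb
      · exact absurd h.symm hdb
      · exact absurd h.symm heb
    · rcases h2 with h | h | h | h
      · exact absurd h hab0
      · exact absurd h.symm hcab
      · exact absurd h.symm hdab
      · exact absurd h.symm heab
  · -- the set equality
    have hSeq : (S \ L) ∪ L = S := Finset.sdiff_union_of_subset hLsub
    ext v
    simp only [Set.mem_setOf_eq, mem_span_pair_iff', ← hecd]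
    constructor
    · intro hvP
      have hvS : v ∈ S := (hmemS v).2 hvP
      have hv0 : v ≠ 0 := fun h => h0S (h ▸ hvS)
      refine ⟨hv0, ?_⟩
      rw [← hSeq, Finset.mem_union] at hvS
      rcases hvS with hv | hv
      · rw [hTeq] at hv
        simp only [Finset.mem_insert, Finset.mem_singleton] at hv
        right
        tauto
      · simp only [hL, Finset.mem_insert, Finset.mem_singleton] at hv
        left
        tauto
    · rintro ⟨hv0, hv⟩
      apply (hmemS v).1
      rcases hv with (h | h | h | h) | (h | h | h | h) <;>
        first
          | (exact absurd h hv0)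
          | (subst h; assumption)
end

section
/- Any 2-divisible set of eight points in PG(3,2) is either an affine solid (the complement of a hyperplane) or consists of the points of a plane together with the points of a line intersecting that plane, minus the intersection point. -/
set_option maxHeartbeats 4000000
set_option maxRecDepth 20000
open Finset

private abbrev VV : Type := Fin 4 → ZMod 2

private def dt (w v : VV) : ZMod 2 := w 0 * v 0 + w 1 * v 1 + w 2 * v 2 + w 3 * v 3

private def fw (w : VV) : VV →ₗ[ZMod 2] ZMod 2 where
  toFun := dt w
  map_add' x y := by simp [dt]; ring
  map_smul' c x := by simp [dt]; ring

private lemma mem_ker_fw {w x : VV} : x ∈ LinearMap.ker (fw w) ↔ dt w x = 0 := by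
  rw [LinearMap.mem_ker]; exact Iff.rfl

private lemma card_coe (S : Submodule (ZMod 2) VV) (t : Finset VV)
    (h : (S : Set VV) = ↑t) : Nat.card ↥S = t.card := by
  have : Nat.card ↥S = Nat.card (S : Set VV) := rfl
  rw [this, h, Nat.card_coe_set_eq, Set.ncard_coe_finset]

private lemma finrank_of_card (S : Submodule (ZMod 2) VV) {n : ℕ}
    (h : Nat.card ↥S = 2 ^ n) : Module.finrank (ZMod 2) ↥S = n := by
  have : Fintype ↥S := Fintype.ofFinite _
  have hc : Fintype.card ↥S = Fintype.card (ZMod 2) ^ Module.finrank (ZMod 2) ↥S :=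
    Module.card_eq_pow_finrank
  rw [Nat.card_eq_fintype_card] at h
  rw [h, ZMod.card] at hc
  exact (Nat.pow_right_injective (le_refl 2) hc).symm

private lemma D0 : ((univ.filter (fun w : VV => w ≠ 0)).card = 15) := by decide
private lemma D1 : ∀ v : VV, v ≠ 0 →
    ((univ.filter (fun w : VV => w ≠ 0)).filter fun w => dt w v = 0).card = 7 := by decide
private lemma D2 : ∀ u v : VV, u ≠ 0 → v ≠ 0 → u ≠ v →
    ((univ.filter (fun w : VV => w ≠ 0)).filter fun w => dt w u = 0 ∧ dt w v = 0).card = 3 := by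
  decide
private lemma D3 : ∀ w : VV, w ≠ 0 →
    (univ.filter fun v : VV => v ≠ 0 ∧ dt w v = 0).card = 7 := by decide
private lemma D4 : ∀ w : VV, w ≠ 0 →
    (univ.filter fun v : VV => v ≠ 0 ∧ dt w v = 0).sum id = 0 := by decide
private lemma D5 : ∀ w : VV, w ≠ 0 → (univ.filter fun v : VV => dt w v = 1).card = 8 := by decide
private lemma D5' : ∀ w : VV, w ≠ 0 → (univ.filter fun v : VV => dt w v = 0).card = 8 := by decide
private lemma D6 : ∀ u v : VV, u ≠ 0 → v ≠ 0 → u ≠ v →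
    ({0, u, v, u + v} : Finset VV).card = 4 := by decide
private lemma Dzero : ∀ y : VV, (∀ w' : VV, w' ≠ 0 → dt w' y = 0) → y = 0 := by decide
private lemma hc2 : ∀ c : ZMod 2, c ≠ 0 → c = 1 := by decide
private lemma haddself : ∀ x : VV, x + x = 0 := by decide

private lemma ker_rank3 {w : VV} (hw : w ≠ 0) :
    Module.finrank (ZMod 2) ↥(LinearMap.ker (fw w)) = 3 := by
  apply finrank_of_card
  rw [card_coe _ (univ.filter fun v : VV => dt w v = 0) (by ext x; simp only [SetLike.mem_coe, mem_ker_fw, Finset.coe_filter, Finset.mem_univ, true_and, Set.mem_setOf_eq]), D5' w hw]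
  norm_num

theorem stmt12 (P : Set (Fin 4 → ZMod 2)) (h0 : (0 : Fin 4 → ZMod 2) ∉ P)
    (hcard : P.ncard = 8)
    (hdiv : ∀ H : Submodule (ZMod 2) (Fin 4 → ZMod 2),
      Module.finrank (ZMod 2) H = 3 → Even {v ∈ P | v ∈ H}.ncard) :
    (∃ H : Submodule (ZMod 2) (Fin 4 → ZMod 2), Module.finrank (ZMod 2) H = 3 ∧
        P = {v | v ∉ H}) ∨
    (∃ E L : Submodule (ZMod 2) (Fin 4 → ZMod 2),
        Module.finrank (ZMod 2) E = 3 ∧ Module.finrank (ZMod 2) L = 2 ∧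
        ¬ L ≤ E ∧ Module.finrank (ZMod 2) ↥(E ⊓ L) = 1 ∧
        P = {v | v ≠ 0 ∧ (v ∈ E ∨ v ∈ L) ∧ ¬ (v ∈ E ∧ v ∈ L)}) := by
  classical
  have hfin : P.Finite := Set.toFinite P
  set F : Finset VV := hfin.toFinset with hFdef
  have hPF : P = ↑F := (hfin.coe_toFinset).symm
  have h0F : (0 : VV) ∉ F := by rw [hfin.mem_toFinset]; exact h0
  have hcardF : F.card = 8 := by
    rw [hPF, Set.ncard_coe_finset] at hcard; exact hcard
  have hFnz : ∀ x ∈ F, x ≠ 0 := fun x hx hx0 => h0F (hx0 ▸ hx)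
  set W : Finset VV := univ.filter (fun w : VV => w ≠ 0) with hWdef
  have hWmem : ∀ w ∈ W, w ≠ 0 := fun w hw => (mem_filter.1 hw).2
  set k : VV → ℕ := fun w => (F.filter fun v => dt w v = 0).card with hkdef
  -- evenness
  have heven : ∀ w ∈ W, Even (k w) := by
    intro w hw
    have h3 := ker_rank3 (hWmem w hw)
    have := hdiv _ h3
    have hset : {v ∈ P | v ∈ LinearMap.ker (fw w)} = ↑(F.filter fun v => dt w v = 0) := by
      ext x
      simp only [Set.mem_setOf_eq, Finset.coe_filter, hPF, mem_coe, mem_ker_fw]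
    rwa [hset, Set.ncard_coe_finset] at this
  -- first count
  have S1 : ∑ w ∈ W, k w = 56 := by
    have : ∑ w ∈ W, k w = ∑ w ∈ W, ∑ v ∈ F, if dt w v = 0 then 1 else 0 :=
      Finset.sum_congr rfl fun w _ => Finset.card_filter _ _
    rw [this, Finset.sum_comm]
    have : ∀ v ∈ F, (∑ w ∈ W, if dt w v = 0 then 1 else 0) = 7 := by
      intro v hv
      rw [← Finset.card_filter]
      exact D1 v (hFnz v hv)
    rw [Finset.sum_congr rfl this, Finset.sum_const, hcardF]
    norm_num
  -- second count
  have S2 : ∑ w ∈ W, k w * (k w - 1) = 168 := by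
    have hterm : ∀ w ∈ W, k w * (k w - 1) =
        (F.offDiag.filter fun z => dt w z.1 = 0 ∧ dt w z.2 = 0).card := by
      intro w _
      have h1 : (F.filter fun v => dt w v = 0).offDiag =
          F.offDiag.filter fun z => dt w z.1 = 0 ∧ dt w z.2 = 0 := by
        ext ⟨a, b⟩
        simp only [Finset.mem_offDiag, Finset.mem_filter]
        tauto
      have h2 := Finset.offDiag_card (F.filter fun v => dt w v = 0)
      rw [h1] at h2
      have : k w * k w - k w = k w * (k w - 1) := by
        cases k w with
        | zero => simp
        | succ n => simp [Nat.succ_sub_one, Nat.mul_succ, Nat.mul_sub]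
      rw [← this, ← h2]
    rw [Finset.sum_congr rfl hterm]
    have : ∀ w ∈ W, (F.offDiag.filter fun z => dt w z.1 = 0 ∧ dt w z.2 = 0).card =
        ∑ z ∈ F.offDiag, if dt w z.1 = 0 ∧ dt w z.2 = 0 then 1 else 0 :=
      fun w _ => Finset.card_filter _ _
    rw [Finset.sum_congr rfl this, Finset.sum_comm]
    have : ∀ z ∈ F.offDiag, (∑ w ∈ W, if dt w z.1 = 0 ∧ dt w z.2 = 0 then 1 else 0) = 3 := by
      intro z hz
      rw [Finset.mem_offDiag] at hz
      rw [← Finset.card_filter]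
      exact D2 z.1 z.2 (hFnz _ hz.1) (hFnz _ hz.2.1) hz.2.2
    rw [Finset.sum_congr rfl this, Finset.sum_const, Finset.offDiag_card, hcardF]
    norm_num
  -- case analysis
  by_cases hA : ∃ w ∈ W, k w = 0
  · -- affine solid case
    obtain ⟨w, hwW, hk0⟩ := hA
    have hw : w ≠ 0 := hWmem w hwW
    left
    refine ⟨LinearMap.ker (fw w), ker_rank3 hw, ?_⟩
    have hFeq : F = univ.filter (fun v : VV => dt w v = 1) := by
      apply Finset.eq_of_subset_of_card_le
      · intro x hx
        have hne : dt w x ≠ 0 := by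
          intro h
          have : x ∈ F.filter fun v => dt w v = 0 := Finset.mem_filter.2 ⟨hx, h⟩
          rw [Finset.card_eq_zero.1 hk0] at this
          exact absurd this (Finset.notMem_empty x)
        exact Finset.mem_filter.2 ⟨Finset.mem_univ x, hc2 _ hne⟩
      · rw [D5 w hw, hcardF]
    ext x
    rw [hPF, hFeq]
    simp only [Finset.coe_filter, Finset.mem_univ, true_and, Set.mem_setOf_eq, mem_ker_fw]
    constructor
    · intro h h0'
      rw [h] at h0'
      exact one_ne_zero h0'
    · intro h
      exact hc2 _ h
  · -- plane + line case
    push_neg at hA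
    have h6 : ∃ w ∈ W, k w = 6 := by
      by_contra h6
      push_neg at h6
      have hall : ∀ w ∈ W, k w = 2 ∨ k w = 4 := by
        intro w hw
        have he := heven w hw
        have hle : k w ≤ 7 := by
          have hsub : (F.filter fun v => dt w v = 0) ⊆
              univ.filter fun v : VV => v ≠ 0 ∧ dt w v = 0 := by
            intro x hx
            rw [Finset.mem_filter] at hx ⊢
            exact ⟨Finset.mem_univ x, hFnz x hx.1, hx.2⟩
          have := Finset.card_le_card hsub
          rwa [D3 w (hWmem w hw)] at this
        have hne0 := hA w hw
        have hne6 := h6 w hw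
        obtain ⟨c, hc⟩ := he
        omega
      have hsum : ∑ w ∈ W, (k w * (k w - 1) + 8) = ∑ w ∈ W, 5 * k w := by
        apply Finset.sum_congr rfl
        intro w hw
        rcases hall w hw with h | h <;> rw [h]
      rw [Finset.sum_add_distrib, S2, Finset.sum_const, D0, ← Finset.mul_sum, S1] at hsum
      norm_num at hsum
    obtain ⟨w, hwW, hk6⟩ := h6
    have hw : w ≠ 0 := hWmem w hwW
    set F0 : Finset VV := F.filter (fun v => dt w v = 0) with hF0def
    set F1 : Finset VV := F.filter (fun v => ¬ dt w v = 0) with hF1def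
    have hk6' : F0.card = 6 := hk6
    have hsplit : F0.card + F1.card = 8 := by
      rw [Finset.card_filter_add_card_filter_not, hcardF]
    have hF1card : F1.card = 2 := by omega
    obtain ⟨u, v, huv, hF1eq⟩ := Finset.card_eq_two.1 hF1card
    have huF : u ∈ F := (Finset.mem_filter.1 (hF1eq ▸ Finset.mem_insert_self u {v})).1
    have hvF : v ∈ F := by
      have : v ∈ F1 := hF1eq ▸ Finset.mem_insert_of_mem (Finset.mem_singleton_self v)
      exact (Finset.mem_filter.1 this).1
    have hdu : dt w u = 1 := by
      have : u ∈ F1 := hF1eq ▸ Finset.mem_insert_self u {v}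
      exact hc2 _ (Finset.mem_filter.1 this).2
    have hdv : dt w v = 1 := by
      have : v ∈ F1 := hF1eq ▸ Finset.mem_insert_of_mem (Finset.mem_singleton_self v)
      exact hc2 _ (Finset.mem_filter.1 this).2
    have hu0 : u ≠ 0 := hFnz u huF
    have hv0 : v ≠ 0 := hFnz v hvF
    set Enz : Finset VV := univ.filter (fun x : VV => x ≠ 0 ∧ dt w x = 0) with hEnzdef
    have hEnzcard : Enz.card = 7 := D3 w hw
    have hF0sub : F0 ⊆ Enz := by
      intro x hx
      rw [Finset.mem_filter] at hx ⊢
      exact ⟨Finset.mem_univ x, hFnz x hx.1, hx.2⟩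
    have hDcard : (Enz \ F0).card = 1 := by
      rw [Finset.card_sdiff_of_subset hF0sub, hEnzcard, hk6']
    obtain ⟨m, hm⟩ := Finset.card_eq_one.1 hDcard
    have hmEnz : m ∈ Enz := (Finset.mem_sdiff.1 (hm ▸ Finset.mem_singleton_self m)).1
    have hmF0 : m ∉ F0 := (Finset.mem_sdiff.1 (hm ▸ Finset.mem_singleton_self m)).2
    have hm0 : m ≠ 0 := (Finset.mem_filter.1 hmEnz).2.1
    have hdm : dt w m = 0 := (Finset.mem_filter.1 hmEnz).2.2
    -- sum of all elements of F is 0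
    have sumF : F.sum id = 0 := by
      apply Dzero
      intro w' hw'
      have hlin : dt w' (F.sum id) = ∑ x ∈ F, dt w' x := by
        have := map_sum (fw w') id F
        exact this
      have hsum2 : ∑ x ∈ F, dt w' x = ((F.filter fun x => ¬ dt w' x = 0).card : ZMod 2) := by
        rw [← Finset.sum_filter_add_sum_filter_not F (fun x => dt w' x = 0)]
        have hz : ∑ x ∈ F.filter (fun x => dt w' x = 0), dt w' x = 0 :=
          Finset.sum_eq_zero fun x hx => (Finset.mem_filter.1 hx).2
        have ho : ∑ x ∈ F.filter (fun x => ¬ dt w' x = 0), dt w' x =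
            ((F.filter fun x => ¬ dt w' x = 0).card : ZMod 2) := by
          rw [Finset.sum_congr rfl fun x hx => hc2 _ (Finset.mem_filter.1 hx).2]
          rw [Finset.sum_const, nsmul_eq_mul, mul_one]
        rw [hz, ho, zero_add]
      have hevenw : Even ((F.filter fun x => ¬ dt w' x = 0).card) := by
        have h1 : (F.filter fun x => dt w' x = 0).card +
            (F.filter fun x => ¬ dt w' x = 0).card = 8 := by
          rw [Finset.card_filter_add_card_filter_not, hcardF]
        have h2 := heven w' (Finset.mem_filter.2 ⟨Finset.mem_univ w', hw'⟩)
        obtain ⟨c, hc⟩ := h2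
        refine ⟨4 - c, ?_⟩
        simp only [hkdef] at hc
        omega
      rw [hlin, hsum2]
      obtain ⟨c, hc⟩ := hevenw
      rw [hc]
      push_cast
      ring_nf
      rw [show ((2 : ZMod 2)) = 0 from rfl]
      ring
    have sumEnz : Enz.sum id = 0 := D4 w hw
    have hsumF0 : F0.sum id = m := by
      have h1 : (Enz \ F0).sum id + F0.sum id = Enz.sum id := Finset.sum_sdiff hF0sub
      rw [hm, Finset.sum_singleton, sumEnz] at h1
      simp only [id_eq] at h1
      have h2 : F0.sum id = ∑ x ∈ F0, x := rfl
      rw [h2]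
      calc (∑ x ∈ F0, x) = m + (m + ∑ x ∈ F0, x) := by
            rw [← add_assoc, haddself m, zero_add]
      _ = m := by rw [h1, add_zero]
    have hsumF1 : F1.sum id = u + v := by rw [hF1eq, Finset.sum_pair huv]; rfl
    have hmuv : m = u + v := by
      have h1 : F0.sum id + F1.sum id = F.sum id :=
        Finset.sum_filter_add_sum_filter_not F (fun v => dt w v = 0) id
      rw [hsumF0, hsumF1, sumF] at h1
      calc m = m + (u + v) + (u + v) := by
            rw [add_assoc, haddself (u+v), add_zero]
      _ = u + v := by rw [h1, zero_add]
    -- build the submodules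
    set E : Submodule (ZMod 2) VV := LinearMap.ker (fw w) with hEdef
    set L : Submodule (ZMod 2) VV := Submodule.span (ZMod 2) {u, v} with hLdef
    have memL : ∀ x : VV, x ∈ L ↔ (x = 0 ∨ x = u ∨ x = v ∨ x = u + v) := by
      intro x
      rw [hLdef, Submodule.mem_span_pair]
      constructor
      · rintro ⟨a, b, rfl⟩
        have hcases : ∀ c : ZMod 2, c = 0 ∨ c = 1 := by decide
        rcases hcases a with ha | ha <;> rcases hcases b with hb | hb <;>
          subst ha <;> subst hb <;>
          simp [zero_smul, one_smul]
      · rintro (rfl | rfl | rfl | rfl)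
        · exact ⟨0, 0, by simp⟩
        · exact ⟨1, 0, by simp⟩
        · exact ⟨0, 1, by simp⟩
        · exact ⟨1, 1, by simp⟩
    have memE : ∀ x : VV, x ∈ E ↔ dt w x = 0 := fun x => mem_ker_fw
    have hrankE : Module.finrank (ZMod 2) ↥E = 3 := ker_rank3 hw
    have hrankL : Module.finrank (ZMod 2) ↥L = 2 := by
      apply finrank_of_card
      rw [card_coe _ ({0, u, v, u + v} : Finset VV) ?_, D6 u v hu0 hv0 huv]
      · norm_num
      · ext x
        simp only [SetLike.mem_coe, memL, Finset.coe_insert, Set.mem_insert_iff,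
          Finset.coe_singleton, Set.mem_singleton_iff]
    have hnLE : ¬ L ≤ E := by
      intro hle
      have : u ∈ L := (memL u).2 (Or.inr (Or.inl rfl))
      have := (memE u).1 (hle this)
      rw [hdu] at this
      exact one_ne_zero this
    have hrankEL : Module.finrank (ZMod 2) ↥(E ⊓ L) = 1 := by
      apply finrank_of_card
      rw [card_coe _ ({0, u + v} : Finset VV) ?_]
      · have hne : (0 : VV) ∉ ({u + v} : Finset VV) := by
          rw [Finset.mem_singleton]
          intro h
          exact hm0 (by rw [hmuv, ← h])
        rw [Finset.card_insert_of_notMem hne, Finset.card_singleton]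
        norm_num
      · ext x
        simp only [SetLike.mem_coe, Submodule.mem_inf, memE, memL, Finset.coe_insert,
          Set.mem_insert_iff, Finset.coe_singleton, Set.mem_singleton_iff]
        constructor
        · rintro ⟨hx0, rfl | rfl | rfl | rfl⟩
          · exact Or.inl rfl
          · rw [hdu] at hx0; exact absurd hx0 one_ne_zero
          · rw [hdv] at hx0; exact absurd hx0 one_ne_zero
          · exact Or.inr rfl
        · rintro (rfl | rfl)
          · exact ⟨by simp [dt], Or.inl rfl⟩
          · exact ⟨by rw [← hmuv]; exact hdm, Or.inr (Or.inr (Or.inr rfl))⟩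
    right
    refine ⟨E, L, hrankE, hrankL, hnLE, hrankEL, ?_⟩
    have hEnzsplit : ∀ x : VV, x ∈ Enz → x ∈ F0 ∨ x = m := by
      intro x hx
      by_cases hxF0 : x ∈ F0
      · exact Or.inl hxF0
      · right
        have : x ∈ Enz \ F0 := Finset.mem_sdiff.2 ⟨hx, hxF0⟩
        rw [hm, Finset.mem_singleton] at this
        exact this
    ext x
    rw [hPF]
    simp only [Finset.mem_coe, Set.mem_setOf_eq, memE, memL]
    constructor
    · intro hxF
      have hx0 : x ≠ 0 := hFnz x hxF
      by_cases hdx : dt w x = 0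
      · have hxF0 : x ∈ F0 := Finset.mem_filter.2 ⟨hxF, hdx⟩
        refine ⟨hx0, Or.inl hdx, ?_⟩
        rintro ⟨-, (rfl | rfl | rfl | rfl)⟩
        · exact hx0 rfl
        · rw [hdu] at hdx; exact one_ne_zero hdx
        · rw [hdv] at hdx; exact one_ne_zero hdx
        · rw [← hmuv] at hxF0; exact hmF0 hxF0
      · have hxF1 : x ∈ F1 := Finset.mem_filter.2 ⟨hxF, hdx⟩
        rw [hF1eq, Finset.mem_insert, Finset.mem_singleton] at hxF1
        refine ⟨hx0, Or.inr ?_, ?_⟩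
        · rcases hxF1 with rfl | rfl
          · exact Or.inr (Or.inl rfl)
          · exact Or.inr (Or.inr (Or.inl rfl))
        · rintro ⟨hdx0, -⟩
          exact hdx hdx0
    · rintro ⟨hx0, hor, hnand⟩
      rcases hor with hdx | hxL
      · -- x ∈ E, so x ∉ L
        have hxEnz : x ∈ Enz := Finset.mem_filter.2 ⟨Finset.mem_univ x, hx0, hdx⟩
        rcases hEnzsplit x hxEnz with hxF0 | rfl
        · exact (Finset.mem_filter.1 hxF0).1
        · exact absurd ⟨hdx, Or.inr (Or.inr (Or.inr hmuv))⟩ hnand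
      · rcases hxL with rfl | rfl | rfl | rfl
        · exact absurd rfl hx0
        · exact huF
        · exact hvF
        · have hdx : dt w (u + v) = 0 := by rw [← hmuv]; exact hdm
          exact absurd ⟨hdx, Or.inr (Or.inr (Or.inr rfl))⟩ hnand
end

section
/- Let A be an affine vector space partition of F_2^{n-1} whose elements have affine dimensions taking values k_1-1 > ... > k_l-1 > 0, and let T be the set of elements of minimal dimension (the tail). If l ≥ 2, then the number of elements of T is divisible by 2^{k_{l-1} - k_l}; if l = 1 (all elements have equal dimension k_l - 1), then |T| = 2^{n - k_l}. -/
open scoped Pointwise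

-- card of a nonempty affine subspace
lemma card_affine' {m : ℕ} (s : AffineSubspace (ZMod 2) (Fin m → ZMod 2))
    (hs : (s : Set (Fin m → ZMod 2)).Nonempty) :
    Nat.card s = 2 ^ Module.finrank (ZMod 2) s.direction := by
  classical
  obtain ⟨p, hp⟩ := hs
  have e : s.direction ≃ s :=
    { toFun := fun v => ⟨v.1 +ᵥ p, AffineSubspace.vadd_mem_of_mem_direction v.2 hp⟩
      invFun := fun x => ⟨x.1 -ᵥ p, AffineSubspace.vsub_mem_direction x.2 hp⟩
      left_inv := fun v => by ext; simp
      right_inv := fun x => by ext; simp }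
  rw [← Nat.card_congr e, Nat.card_eq_fintype_card,
    Module.card_eq_pow_finrank (K := ZMod 2), ZMod.card]

lemma avsp_sum' {m : ℕ} (A : Set (AffineSubspace (ZMod 2) (Fin m → ZMod 2)))
    (hA : IsAVSP A) (hfin : A.Finite) :
    ∑ s ∈ hfin.toFinset, 2 ^ Module.finrank (ZMod 2)
      (AffineSubspace.direction s) = 2 ^ m := by
  classical
  choose f hf using fun x => (hA.2.2 x).exists
  have huniq : ∀ x : Fin m → ZMod 2, ∀ s ∈ A, x ∈ s → f x = s := fun x s hs hx =>
    ((hA.2.2 x).unique ⟨(hf x).1, (hf x).2⟩ ⟨hs, hx⟩)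
  have hcard := Finset.card_eq_sum_card_fiberwise
    (s := (Finset.univ : Finset (Fin m → ZMod 2))) (t := hfin.toFinset) (f := f)
    (fun x _ => hfin.mem_toFinset.2 (hf x).1)
  have hfib : ∀ s ∈ hfin.toFinset,
      (Finset.univ.filter fun x => f x = s).card
        = 2 ^ Module.finrank (ZMod 2) (AffineSubspace.direction s) := by
    intro s hs
    rw [Set.Finite.mem_toFinset] at hs
    have : (Finset.univ.filter fun x => f x = s) = Finset.univ.filter fun x => x ∈ s := by
      ext x
      simp only [Finset.mem_filter, Finset.mem_univ, true_and]
      constructor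
      · rintro rfl; exact (hf x).2
      · intro hx; exact huniq x s hs hx
    rw [this, ← card_affine' s (hA.2.1 s hs), Nat.card_eq_fintype_card,
      Fintype.card_subtype]
  rw [Finset.sum_congr rfl hfib] at hcard
  rw [← hcard]
  simp [ZMod.card]

theorem stmt13 (m : ℕ)
    (A : Set (AffineSubspace (ZMod 2) (Fin m → ZMod 2))) (hA : IsAVSP A) :
    (∀ a b : ℕ, 0 < a → a < b →
      (∃ s ∈ A, Module.finrank (ZMod 2) s.direction = a) →
      (∃ s ∈ A, Module.finrank (ZMod 2) s.direction = b) →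
      (∀ s ∈ A, Module.finrank (ZMod 2) s.direction = a ∨
        b ≤ Module.finrank (ZMod 2) s.direction) →
      2 ^ (b - a) ∣ {s ∈ A | Module.finrank (ZMod 2) s.direction = a}.ncard) ∧
    (∀ a : ℕ, 0 < a → (∀ s ∈ A, Module.finrank (ZMod 2) s.direction = a) →
      A.ncard = 2 ^ (m - a)) := by
  classical
  have hFin : Finite (AffineSubspace (ZMod 2) (Fin m → ZMod 2)) :=
    Finite.of_injective _ SetLike.coe_injective
  have hfin : A.Finite := Set.toFinite A
  have hsum := avsp_sum' A hA hfin
  have hrank : Module.finrank (ZMod 2) (Fin m → ZMod 2) = m := by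
    simp [Module.finrank_pi]
  have hle : ∀ s ∈ A, Module.finrank (ZMod 2) s.direction ≤ m := by
    intro s _
    simpa [hrank] using Submodule.finrank_le s.direction
  constructor
  · intro a b ha hab ⟨sa, hsa, hra⟩ ⟨sb, hsb, hrb⟩ htri
    have hbm : b ≤ m := hrb ▸ hle sb hsb
    set P : AffineSubspace (ZMod 2) (Fin m → ZMod 2) → Prop :=
      fun s => Module.finrank (ZMod 2) s.direction = a with hP
    have hset : {s ∈ A | Module.finrank (ZMod 2) s.direction = a}
        = ↑(hfin.toFinset.filter P) := by
      ext s; simp [Set.Finite.mem_toFinset, hP, Set.mem_setOf_eq]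
    rw [hset, Set.ncard_coe_finset]
    have hsplit := Finset.sum_filter_add_sum_filter_not hfin.toFinset P
      (fun s => 2 ^ Module.finrank (ZMod 2) (AffineSubspace.direction s))
    rw [hsum] at hsplit
    have h1 : ∑ s ∈ hfin.toFinset.filter P,
        2 ^ Module.finrank (ZMod 2) (AffineSubspace.direction s)
        = (hfin.toFinset.filter P).card * 2 ^ a := by
      rw [Finset.sum_congr rfl (fun s hs => by
        rw [(Finset.mem_filter.1 hs).2]), Finset.sum_const, smul_eq_mul]
    have h2 : (2 : ℕ) ^ b ∣ ∑ s ∈ hfin.toFinset.filter (fun s => ¬ P s),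
        2 ^ Module.finrank (ZMod 2) (AffineSubspace.direction s) := by
      refine Finset.dvd_sum fun s hs => ?_
      obtain ⟨hsA, hnP⟩ := Finset.mem_filter.1 hs
      rw [Set.Finite.mem_toFinset] at hsA
      rcases htri s hsA with h | h
      · exact absurd h hnP
      · exact pow_dvd_pow 2 h
    have h3 : (2 : ℕ) ^ b ∣ (hfin.toFinset.filter P).card * 2 ^ a := by
      have : (2:ℕ) ^ b ∣ 2 ^ m := pow_dvd_pow 2 hbm
      rw [← hsplit, h1] at this
      exact (Nat.dvd_add_right h2).mp (by rwa [add_comm] at this)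
    have hba : 2 ^ b = 2 ^ (b - a) * 2 ^ a := by
      rw [← pow_add, Nat.sub_add_cancel hab.le]
    rw [hba] at h3
    exact (Nat.mul_dvd_mul_iff_right (pow_pos (by norm_num) a)).mp h3
  · intro a ha hall
    have h1 : ∑ s ∈ hfin.toFinset,
        2 ^ Module.finrank (ZMod 2) (AffineSubspace.direction s)
        = A.ncard * 2 ^ a := by
      rw [Finset.sum_congr rfl (fun s hs =>
        by rw [hall s (hfin.mem_toFinset.1 hs)]), Finset.sum_const, smul_eq_mul,
        Set.ncard_eq_toFinset_card A hfin]
    obtain ⟨s0, hs0⟩ := (hA.2.2 0).exists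
    have ham : a ≤ m := (hall s0 hs0.1) ▸ hle s0 hs0.1
    have h2 : A.ncard * 2 ^ a = 2 ^ (m - a) * 2 ^ a := by
      rw [← h1, hsum, ← pow_add, Nat.sub_add_cancel ham]
    exact Nat.eq_of_mul_eq_mul_right (pow_pos (by norm_num) a) h2
end

section
/- For q even, the map y ↦ y^{q^2+1} + y^{q+1} + y is a permutation of F_{q^3}, and consequently the set S consisting of S_0 = {(x, 0) : x ∈ F_{q^3}} together with the sets S_m = {(α^{-m} y, α^m (y^{q^2} + y^q + 1)) : y ∈ F_{q^3}} for 1 ≤ m ≤ q^3 - 1 (α a primitive element of F_{q^3}) partitions F_{q^3} × F_{q^3} into q^3 affine F_q-subspaces of F_q-dimension 3. -/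
open scoped Pointwise

private lemma perm_aux {K : Type*} [Field K] {q : ℕ}
    (h2 : (2 : K) = 0)
    (hfrob : ∀ x y : K, (x + y) ^ q = x ^ q + y ^ q)
    (hcube : ∀ x : K, x ^ q ^ 3 = x) :
    Function.Injective (fun y : K => y ^ (q ^ 2 + 1) + y ^ (q + 1) + y) := by
  have e1 : ∀ x : K, x ^ (q ^ 2 + 1) + x ^ (q + 1) + x = (x ^ q) ^ q * x + x ^ q * x + x := by
    intro x
    rw [pow_add, pow_add, pow_one, show q ^ 2 = q * q from sq q, pow_mul]
  have e3 : ∀ x : K, ((x ^ q) ^ q) ^ q = x := by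
    intro x
    rw [← pow_mul, ← pow_mul]
    convert hcube x using 2
    ring
  intro y z h
  simp only [e1] at h
  set ya := y ^ q with hya
  set yb := ya ^ q with hyb
  set za := z ^ q with hza
  set zb := za ^ q with hzb
  have hy3 : yb ^ q = y := e3 y
  have hz3 : zb ^ q = z := e3 z
  have h1 : y * ya + yb * ya + ya = z * za + zb * za + za := by
    have := congrArg (· ^ q) h
    simpa only [hfrob, mul_pow, one_pow, hy3, hz3, ← hya, ← hyb, ← hza, ← hzb] using this
  have h2' : ya * yb + y * yb + yb = za * zb + z * zb + zb := by
    have := congrArg (· ^ q) h1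
    simpa only [hfrob, mul_pow, one_pow, hy3, hz3, ← hya, ← hyb, ← hza, ← hzb] using this
  have ht : y + ya + yb = z + za + zb := by
    linear_combination h + h1 + h2' +
      (z * zb + z * za + za * zb - y * yb - y * ya - ya * yb) * h2
  have key : (y - z) * ((y + ya + yb) - y - z + 1) = 0 := by
    linear_combination h - z * ht
  rcases mul_eq_zero.mp key with hk | hk
  · exact sub_eq_zero.mp hk
  · have hzz : z = ya + yb + 1 := by linear_combination -hk
    have ea : za = yb + y + 1 := by
      rw [hza, hzz, hfrob, hfrob, ← hyb, hy3, one_pow]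
    have eb : zb = y + ya + 1 := by
      rw [hzb, ea, hfrob, hfrob, hy3, ← hya, one_pow]
    have final : y = ya + yb + 1 := by
      linear_combination ht + hzz + ea + eb + (y + 1) * h2
    exact final.trans hzz.symm

/-- The pieces of the affine vector space partition of `K × K` built from the
hyperbolic quadric: `Spiece q α 0 = {(x, 0)}` and
`Spiece q α m = {(α^{-m} y, α^m (y^{q²} + y^q + 1)) : y ∈ K}` for `m ≥ 1`. -/
def Spiece {K : Type*} [Field K] (q : ℕ) (α : K) : ℕ → Set (K × K)
  | 0 => {p | p.2 = 0}
  | (m + 1) => {p | ∃ y : K, p = (α⁻¹ ^ (m + 1) * y, α ^ (m + 1) * (y ^ q ^ 2 + y ^ q + 1))}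

theorem stmt15 (q : ℕ) (hq : Even q) (F K : Type*) [Field F] [Fintype F]
    [Field K] [Fintype K] [Algebra F K]
    (hcF : Fintype.card F = q) (hcK : Fintype.card K = q ^ 3)
    (α : K) (hα : ∀ z : K, z ≠ 0 → ∃ m : ℕ, z = α ^ m) :
    Function.Bijective (fun y : K => y ^ (q ^ 2 + 1) + y ^ (q + 1) + y) ∧
    (∀ p : K × K, ∃! m, m ∈ Finset.range (q ^ 3) ∧ p ∈ Spiece q α m) ∧
    (∀ m ∈ Finset.range (q ^ 3), ∃ (W : Submodule F (K × K)) (v : K × K),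
      Module.finrank F W = 3 ∧ Spiece q α m = v +ᵥ (W : Set (K × K))) := by
  classical
  have hq2 : 2 ≤ q := hcF ▸ Fintype.one_lt_card
  -- characteristic 2
  haveI : CharP F (ringChar F) := ringChar.charP F
  obtain ⟨n, hpn, hcard⟩ := FiniteField.card F (ringChar F)
  have hp2 : ringChar F = 2 := by
    have h2d : 2 ∣ ringChar F ^ (n : ℕ) := by
      rw [← hcard, hcF]; exact hq.two_dvd
    exact ((Nat.prime_dvd_prime_iff_eq Nat.prime_two hpn).mp
      (Nat.Prime.dvd_of_dvd_pow Nat.prime_two h2d)).symm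
  haveI hF2 : CharP F 2 := hp2 ▸ ringChar.charP F
  haveI hK2 : CharP K 2 := charP_of_injective_algebraMap (algebraMap F K).injective 2
  haveI : Fact (Nat.Prime 2) := ⟨Nat.prime_two⟩
  have h2c : (2 : K) = 0 := by
    have := CharP.cast_eq_zero K 2
    simpa using this
  have hqpow : q = 2 ^ (n : ℕ) := by rw [← hcF, hcard, hp2]
  have hfrob : ∀ x y : K, (x + y) ^ q = x ^ q + y ^ q := by
    intro x y
    rw [hqpow]
    exact add_pow_char_pow x y 2 ↑n
  have hcube : ∀ x : K, x ^ q ^ 3 = x := by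
    intro x
    rw [← hcK]
    exact FiniteField.pow_card x
  have hinj := perm_aux h2c hfrob hcube
  have hbij : Function.Bijective (fun y : K => y ^ (q ^ 2 + 1) + y ^ (q + 1) + y) :=
    Finite.injective_iff_bijective.mp hinj
  have hq3 : 8 ≤ q ^ 3 := by
    calc 8 = 2 ^ 3 := rfl
      _ ≤ q ^ 3 := Nat.pow_le_pow_left hq2 3
  have hα0 : α ≠ 0 := by
    intro h0
    have hall : ∀ z : K, z = 0 ∨ z = 1 := by
      intro z
      by_cases hz : z = 0
      · exact Or.inl hz
      · obtain ⟨m, hm⟩ := hα z hz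
        rcases Nat.eq_zero_or_pos m with hm0 | hm0
        · right; rw [hm, hm0, pow_zero]
        · exfalso; apply hz; rw [hm, h0, zero_pow (by omega)]
    have hle : Fintype.card K ≤ 2 := by
      calc Fintype.card K = (Finset.univ : Finset K).card := (Finset.card_univ).symm
        _ ≤ ({0, 1} : Finset K).card := Finset.card_le_card (fun z _ => by
            rcases hall z with h | h <;> simp [h])
        _ ≤ 2 := Finset.card_insert_le _ _ |>.trans (by simp)
    rw [hcK] at hle
    omega
  -- order of alpha
  set u : Kˣ := Units.mk0 α hα0 with hu
  have hval : (u : K) = α := rfl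
  have hzp : ∀ v : Kˣ, v ∈ Subgroup.zpowers u := by
    intro v
    obtain ⟨m, hm⟩ := hα (v : K) v.ne_zero
    refine Subgroup.mem_zpowers_iff.mpr ⟨(m : ℤ), ?_⟩
    rw [zpow_natCast]
    exact Units.ext (by rw [Units.val_pow_eq_pow_val, hval, ← hm])
  have horder_u : orderOf u = q ^ 3 - 1 := by
    rw [orderOf_eq_card_of_forall_mem_zpowers hzp, Nat.card_eq_fintype_card,
      Fintype.card_units, hcK]
  have horderα : orderOf α = q ^ 3 - 1 := by
    rw [← hval, orderOf_units, horder_u]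
  have hα1 : α ^ (q ^ 3 - 1) = 1 := by
    rw [← horderα]; exact pow_orderOf_eq_one α
  have hrep : ∀ z : K, z ≠ 0 → ∃ k, 1 ≤ k ∧ k ≤ q ^ 3 - 1 ∧ z = α ^ k := by
    intro z hz
    obtain ⟨m, hm⟩ := hα z hz
    have hmod : α ^ (m % (q ^ 3 - 1)) = α ^ m := by
      rw [← horderα]; exact pow_mod_orderOf α m
    rcases Nat.eq_zero_or_pos (m % (q ^ 3 - 1)) with h0 | hpos
    · exact ⟨q ^ 3 - 1, by omega, le_refl _,
        by rw [hα1, hm, ← hmod, h0, pow_zero]⟩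
    · refine ⟨m % (q ^ 3 - 1), hpos, ?_, by rw [hm, ← hmod]⟩
      have := Nat.mod_lt m (show 0 < q ^ 3 - 1 by omega)
      omega
  have hpowinj : ∀ i j : ℕ, 1 ≤ i → i ≤ q ^ 3 - 1 → 1 ≤ j → j ≤ q ^ 3 - 1 →
      α ^ i = α ^ j → i = j := by
    intro i j hi1 hi2 hj1 hj2 hij
    have hup : u ^ i = u ^ j := Units.ext (by
      rw [Units.val_pow_eq_pow_val, Units.val_pow_eq_pow_val, hval]; exact hij)
    have hmod : i ≡ j [MOD q ^ 3 - 1] := by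
      rw [← horder_u]; exact pow_eq_pow_iff_modEq.mp hup
    rcases le_total i j with h | h
    · have hd := (Nat.modEq_iff_dvd' h).mp hmod
      have := Nat.eq_zero_of_dvd_of_lt hd (show j - i < q ^ 3 - 1 by omega)
      omega
    · have hd := (Nat.modEq_iff_dvd' h).mp hmod.symm
      have := Nat.eq_zero_of_dvd_of_lt hd (show i - j < q ^ 3 - 1 by omega)
      omega
  have hfy : ∀ y : K, y ^ (q ^ 2 + 1) + y ^ (q + 1) + y
      = y * (y ^ q ^ 2 + y ^ q + 1) := by
    intro y; rw [pow_add, pow_add, pow_one]; ring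
  have hf0 : (0 : K) ^ (q ^ 2 + 1) + (0 : K) ^ (q + 1) + 0 = 0 := by
    rw [zero_pow (by omega), zero_pow (by omega)]; ring
  have hcan : ∀ k : ℕ, α⁻¹ ^ k * α ^ k = 1 := by
    intro k
    rw [inv_pow]
    exact inv_mul_cancel₀ (pow_ne_zero _ hα0)
  refine ⟨hbij, ?_, ?_⟩
  · -- unique piece containing each point
    rintro ⟨a, b⟩
    by_cases hb : b = 0
    · refine ⟨0, ⟨Finset.mem_range.mpr (by omega), hb⟩, ?_⟩
      rintro (_ | j) ⟨hn, hmem⟩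
      · rfl
      · exfalso
        obtain ⟨w, hw⟩ := hmem
        rw [Prod.mk.injEq] at hw
        obtain ⟨hw1, hw2⟩ := hw
        have hb2 : α ^ (j + 1) * (w ^ q ^ 2 + w ^ q + 1) = 0 := by
          rw [← hw2, hb]
        have hw0 : w ^ q ^ 2 + w ^ q + 1 = 0 := by
          rcases mul_eq_zero.mp hb2 with h | h
          · exact absurd h (pow_ne_zero _ hα0)
          · exact h
        have hwz : w = 0 := hinj (show w ^ (q ^ 2 + 1) + w ^ (q + 1) + w
            = (0 : K) ^ (q ^ 2 + 1) + (0 : K) ^ (q + 1) + 0 by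
          rw [hfy w, hw0, mul_zero, hf0])
        rw [hwz, zero_pow (by positivity), zero_pow (by omega), add_zero, zero_add] at hw0
        exact one_ne_zero hw0
    · obtain ⟨y, hy⟩ := hbij.surjective (a * b)
      simp only at hy
      have hyu : y * (y ^ q ^ 2 + y ^ q + 1) = a * b := by rw [← hfy]; exact hy
      have hune : y ^ q ^ 2 + y ^ q + 1 ≠ 0 := by
        intro h0
        have hy0 : y = 0 := hinj (show y ^ (q ^ 2 + 1) + y ^ (q + 1) + y
            = (0 : K) ^ (q ^ 2 + 1) + (0 : K) ^ (q + 1) + 0 by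
          rw [hfy y, h0, mul_zero, hf0])
        rw [hy0, zero_pow (by positivity), zero_pow (by omega), add_zero, zero_add] at h0
        exact one_ne_zero h0
      obtain ⟨k, hk1, hk2, hk⟩ := hrep (b * (y ^ q ^ 2 + y ^ q + 1)⁻¹)
        (mul_ne_zero hb (inv_ne_zero hune))
      have hbu : b = α ^ k * (y ^ q ^ 2 + y ^ q + 1) := by
        field_simp at hk
        linear_combination hk
      have ha : a = α⁻¹ ^ k * y := by
        apply mul_right_cancel₀ hb
        calc a * b = y * (y ^ q ^ 2 + y ^ q + 1) := hyu.symm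
          _ = α⁻¹ ^ k * y * b := by
              rw [hbu]
              linear_combination y * (y ^ q ^ 2 + y ^ q + 1) * (hcan k).symm
      obtain ⟨k', rfl⟩ : ∃ k', k = k' + 1 := ⟨k - 1, by omega⟩
      refine ⟨k' + 1, ⟨Finset.mem_range.mpr (by omega), ⟨y, ?_⟩⟩, ?_⟩
      · rw [Prod.mk.injEq]
        exact ⟨ha, hbu⟩
      · rintro (_ | j) ⟨hn, hmem⟩
        · exact absurd hmem hb
        · obtain ⟨w, hw⟩ := hmem
          rw [Prod.mk.injEq] at hw
          obtain ⟨hw1, hw2⟩ := hw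
          have hwy : w = y := by
            apply hinj
            show w ^ (q ^ 2 + 1) + w ^ (q + 1) + w = y ^ (q ^ 2 + 1) + y ^ (q + 1) + y
            rw [hfy w, hfy y, hyu, hw1, hw2]
            linear_combination (-(w * (w ^ q ^ 2 + w ^ q + 1))) * (hcan (j + 1))
          rw [hwy] at hw2
          have hpow : α ^ (j + 1) = α ^ (k' + 1) := by
            apply mul_right_cancel₀ hune
            rw [← hw2, hbu]
          exact hpowinj (j + 1) (k' + 1) (by omega)
            (by rw [Finset.mem_range] at hn; omega) (by omega) (by omega) hpow
  · -- each piece is a coset of a 3-dimensional subspace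
    intro m hm
    have hfinrank : Module.finrank F K = 3 := by
      have hcc := Module.card_eq_pow_finrank (K := F) (V := K)
      rw [hcK, hcF] at hcc
      exact (Nat.pow_right_injective hq2 hcc.symm)
    obtain _ | m := m
    · refine ⟨LinearMap.range (LinearMap.inl F K K), 0, ?_, ?_⟩
      · rw [LinearMap.finrank_range_of_inj LinearMap.inl_injective, hfinrank]
      · rw [zero_vadd]
        ext p
        simp only [Spiece, Set.mem_setOf_eq, SetLike.mem_coe, LinearMap.mem_range,
          LinearMap.inl_apply]
        constructor
        · intro h
          exact ⟨p.1, Prod.ext rfl h.symm⟩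
        · rintro ⟨x, rfl⟩
          rfl
    · have hsmul : ∀ (l : F) (x : K), (l • x) ^ q = l • x ^ q := by
        intro l x
        rw [Algebra.smul_def, Algebra.smul_def, mul_pow, ← map_pow]
        congr 2
        rw [show q = Fintype.card F from hcF.symm, FiniteField.pow_card]
      have hsmul2 : ∀ (l : F) (x : K), (l • x) ^ q ^ 2 = l • x ^ q ^ 2 := by
        intro l x
        rw [show q ^ 2 = q * q from sq q, pow_mul, pow_mul, hsmul, hsmul]
      have hfrob2 : ∀ x y : K, (x + y) ^ q ^ 2 = x ^ q ^ 2 + y ^ q ^ 2 := by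
        intro x y
        rw [show q ^ 2 = q * q from sq q, pow_mul, pow_mul, pow_mul, hfrob, hfrob]
      set c := α⁻¹ ^ (m + 1) with hc_def
      set d := α ^ (m + 1) with hd_def
      let L : K →ₗ[F] K × K :=
        { toFun := fun y => (c * y, d * (y ^ q ^ 2 + y ^ q))
          map_add' := by
            intro x y
            simp only [Prod.mk_add_mk, Prod.mk.injEq]
            refine ⟨mul_add c x y, ?_⟩
            rw [hfrob, hfrob2]
            ring
          map_smul' := by
            intro l x
            simp only [RingHom.id_apply, Prod.smul_mk, Prod.mk.injEq]
            refine ⟨mul_smul_comm l c x, ?_⟩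
            rw [hsmul, hsmul2, ← smul_add, mul_smul_comm] }
      have hLapp : ∀ y : K, L y = (c * y, d * (y ^ q ^ 2 + y ^ q)) := fun y => rfl
      have hLinj : Function.Injective L := by
        intro x y hxy
        have h1 : c * x = c * y := congrArg Prod.fst hxy
        have hc : c ≠ 0 := pow_ne_zero _ (inv_ne_zero hα0)
        exact mul_left_cancel₀ hc h1
      refine ⟨LinearMap.range L, (0, d), ?_, ?_⟩
      · rw [LinearMap.finrank_range_of_inj hLinj, hfinrank]
      · ext p
        simp only [Spiece, Set.mem_setOf_eq, Set.mem_vadd_set, SetLike.mem_coe,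
          LinearMap.mem_range]
        constructor
        · rintro ⟨y, rfl⟩
          refine ⟨L y, ⟨y, rfl⟩, ?_⟩
          rw [hLapp]
          show (0, d) + (c * y, d * (y ^ q ^ 2 + y ^ q)) = _
          rw [Prod.mk_add_mk, Prod.mk.injEq]
          exact ⟨zero_add _, by ring⟩
        · rintro ⟨-, ⟨y, rfl⟩, rfl⟩
          refine ⟨y, ?_⟩
          rw [hLapp]
          show (0, d) + (c * y, d * (y ^ q ^ 2 + y ^ q)) = _
          rw [Prod.mk_add_mk, Prod.mk.injEq]
          exact ⟨zero_add _, by ring⟩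
end

section
/- There exists a set of four pairwise disjoint affine lines (cosets of 1-dimensional subspaces) partitioning F_2^3 such that no two of them are contained in a common affine plane of F_2^3; this partition is tight and irreducible. -/
open scoped Pointwise

namespace Stmt18Aux

def P : Fin 4 → (Fin 3 → ZMod 2) := ![![0,0,0], ![0,1,0], ![0,0,1], ![1,1,0]]
def Q : Fin 4 → (Fin 3 → ZMod 2) := ![![1,0,0], ![0,1,1], ![1,1,1], ![1,0,1]]

lemma closed : ∀ (i : Fin 4) (c : ZMod 2) (x y z : Fin 3 → ZMod 2),
    (x = P i ∨ x = Q i) → (y = P i ∨ y = Q i) → (z = P i ∨ z = Q i) →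
    (c • (x - y) + z = P i ∨ c • (x - y) + z = Q i) := by decide

def L : Fin 4 → AffineSubspace (ZMod 2) (Fin 3 → ZMod 2) := fun i =>
  { carrier := {P i, Q i}
    smul_vsub_vadd_mem' := fun c {x y z} hx hy hz => closed i c x y z hx hy hz }

lemma mem_L {x : Fin 3 → ZMod 2} {i : Fin 4} : x ∈ L i ↔ (x = P i ∨ x = Q i) := Iff.rfl

lemma P_mem (i : Fin 4) : P i ∈ L i := Or.inl rfl
lemma Q_mem (i : Fin 4) : Q i ∈ L i := Or.inr rfl

lemma spans : ∀ (i j : Fin 4), i ≠ j → ∀ x : Fin 3 → ZMod 2,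
    ∃ c1 c2 c3 : ZMod 2, x = c1 • (Q i - P i) + c2 • (Q j - P j) + c3 • (P j - P i) := by
  decide

lemma key {i j : Fin 4} (hij : i ≠ j) {U : AffineSubspace (ZMod 2) (Fin 3 → ZMod 2)}
    (hi : L i ≤ U) (hj : L j ≤ U) : U.direction = ⊤ := by
  have h1 : Q i - P i ∈ U.direction := by
    simpa [vsub_eq_sub] using AffineSubspace.vsub_mem_direction (hi (Q_mem i)) (hi (P_mem i))
  have h2 : Q j - P j ∈ U.direction := by
    simpa [vsub_eq_sub] using AffineSubspace.vsub_mem_direction (hj (Q_mem j)) (hj (P_mem j))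
  have h3 : P j - P i ∈ U.direction := by
    simpa [vsub_eq_sub] using AffineSubspace.vsub_mem_direction (hj (P_mem j)) (hi (P_mem i))
  rw [eq_top_iff]
  intro x _
  obtain ⟨c1, c2, c3, hx⟩ := spans i j hij x
  rw [hx]
  exact add_mem (add_mem (Submodule.smul_mem _ _ h1) (Submodule.smul_mem _ _ h2))
    (Submodule.smul_mem _ _ h3)

lemma huniq : ∀ x : Fin 3 → ZMod 2, ∃ i : Fin 4, (x = P i ∨ x = Q i) ∧
    ∀ j : Fin 4, (x = P j ∨ x = Q j) → j = i := by decide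

lemma htight : ∀ x : Fin 3 → ZMod 2, x ≠ 0 →
    ∃ i : Fin 4, ¬(x + P i = P i ∨ x + P i = Q i) := by decide

lemma hne : ∀ i : Fin 4, ∃ y : Fin 3 → ZMod 2, ¬(y = P i ∨ y = Q i) := by decide

lemma hnz : ∀ i : Fin 4, P i - Q i ≠ 0 := by decide

end Stmt18Aux


open Stmt18Aux in
theorem stmt18 :
    ∃ f : Fin 4 → AffineSubspace (ZMod 2) (Fin 3 → ZMod 2),
      Function.Injective f ∧
      (∀ i, Module.finrank (ZMod 2) (f i).direction = 1) ∧
      IsAVSP (Set.range f) ∧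
      (∀ i j, i ≠ j → ¬ ∃ P : AffineSubspace (ZMod 2) (Fin 3 → ZMod 2),
        Module.finrank (ZMod 2) P.direction = 2 ∧ f i ≤ P ∧ f j ≤ P) ∧
      IsTight (Set.range f) ∧ ¬ IsReducible (Set.range f) := by
  refine ⟨L, ?_, ?_, ⟨?_, ?_, ?_⟩, ?_, ?_, ?_⟩
  · -- injective
    intro i j h
    have hm : P i ∈ L j := h ▸ P_mem i
    obtain ⟨k, _, hk⟩ := huniq (P i)
    have h1 := hk i (Or.inl rfl)
    have h2 := hk j hm
    rw [h1, ← h2]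
  · -- finrank 1
    intro i
    have hdir : (L i).direction = Submodule.span (ZMod 2) {P i - Q i} := by
      have : (L i : Set (Fin 3 → ZMod 2)) = {P i, Q i} := rfl
      rw [AffineSubspace.direction_eq_vectorSpan, this, vectorSpan_pair]
      simp [vsub_eq_sub, Submodule.span_singleton_eq_range]
    rw [hdir]
    exact finrank_span_singleton (hnz i)
  · -- ≠ ⊤
    rintro s ⟨i, rfl⟩ htop
    obtain ⟨y, hy⟩ := hne i
    exact hy (htop ▸ AffineSubspace.mem_top (ZMod 2) _ y : y ∈ L i)
  · -- nonempty
    rintro s ⟨i, rfl⟩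
    exact ⟨P i, P_mem i⟩
  · -- partition
    intro x
    obtain ⟨i, hx, hu⟩ := huniq x
    refine ⟨L i, ⟨⟨i, rfl⟩, hx⟩, ?_⟩
    rintro s ⟨⟨j, rfl⟩, hxs⟩
    exact congrArg L (hu j hxs)
  · -- no common plane
    rintro i j hij ⟨U, hU2, hi, hj⟩
    rw [key hij hi hj, finrank_top] at hU2
    have : Module.finrank (ZMod 2) (Fin 3 → ZMod 2) = 3 := by
      simp [Module.finrank_pi]
    omega
  · -- tight
    intro x hx
    obtain ⟨i, hi⟩ := htight x hx
    refine ⟨L i, ⟨i, rfl⟩, fun heq => ?_⟩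
    have hmem : x + P i ∈ x +ᵥ (L i : Set (Fin 3 → ZMod 2)) := ⟨P i, P_mem i, rfl⟩
    rw [heq] at hmem
    exact hi hmem
  · -- irreducible
    rintro ⟨U, hUtop, S, hSA, hcard, hle, -⟩
    have hfin : S.Finite := (Set.finite_range L).subset hSA
    obtain ⟨s1, s2, hs1, hs2, hne⟩ := (Set.one_lt_ncard_iff hfin).mp hcard
    obtain ⟨i, rfl⟩ := hSA hs1
    obtain ⟨j, rfl⟩ := hSA hs2
    have hij : i ≠ j := fun h => hne (congrArg L h)
    have hdir := key hij (hle _ hs1) (hle _ hs2)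
    have : U = ⊤ := by
      rw [← AffineSubspace.direction_eq_top_iff_of_nonempty ⟨P i, hle _ hs1 (P_mem i)⟩]
      exact hdir
    exact hUtop this
end
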